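/- arXiv:1210.5228 — 8 statements merged into one kernel-verified Lean document; each statement's English description precedes it below -/
import Mathlib

section
/- Fix d ∈ ℕ and α ∈ (0,1). The half-open unit cube [0,1)^d is the disjoint union of the d+1 translated basic tiles τ_i + w_i for i = 1, …, d+1, where w_i ∈ ℝ^d is the vector whose first i−1 coordinates equal 1−α and whose remaining coordinates are 0 (so w_1 = 0 and w_{d+1} = (1−α, …, 1−α)). -/
open Set

/-- The upper bound of the `j`-th coordinate range of the basic tile `τ_{k+1}`
(0-based index `k : Fin (d+1)`): coordinates `j < k` range in `[0, α)`, coordinate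
`j = k` ranges in `[0, 1-α)`, and coordinates `j > k` range in `[0, 1)`. -/
noncomputable def upEdge (d : ℕ) (α : ℝ) (k : Fin (d + 1)) (j : Fin d) : ℝ :=
  if (j : ℕ) < (k : ℕ) then α else if (j : ℕ) = (k : ℕ) then 1 - α else 1

/-- The basic tile `τ_{k+1}` of the collection `𝒯_α` (0-based index `k`):
`τ_i = [0,α)^{i-1} × [0,1-α) × [0,1)^{d-i}` for `1 ≤ i ≤ d`, and `τ_{d+1} = [0,α)^d`. -/
def basicTile (d : ℕ) (α : ℝ) (k : Fin (d + 1)) : Set (Fin d → ℝ) :=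
  {x | ∀ j : Fin d, 0 ≤ x j ∧ x j < upEdge d α k j}

/-- The translation vector `w_{k+1}` (0-based index `k`): first `k` coordinates equal
`1 - α`, the remaining coordinates are `0`. -/
noncomputable def wShift (d : ℕ) (α : ℝ) (k : Fin (d + 1)) : Fin d → ℝ :=
  fun j => if (j : ℕ) < (k : ℕ) then 1 - α else 0

lemma mem_shiftTile_iff (d : ℕ) (α : ℝ) (k : Fin (d + 1)) (x : Fin d → ℝ) :
    x ∈ (fun y => wShift d α k + y) '' basicTile d α k ↔
      ∀ j : Fin d, if (j : ℕ) < (k : ℕ) then (1 - α ≤ x j ∧ x j < 1)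
        else if (j : ℕ) = (k : ℕ) then (0 ≤ x j ∧ x j < 1 - α)
        else (0 ≤ x j ∧ x j < 1) := by
  constructor
  · rintro ⟨y, hy, rfl⟩ j
    have h := hy j
    simp only [Pi.add_apply, wShift, upEdge] at *
    split_ifs at * <;> constructor <;> linarith [h.1, h.2]
  · intro h
    refine ⟨fun j => x j - wShift d α k j, fun j => ?_, by funext j; simp⟩
    have hj := h j
    simp only [wShift, upEdge] at *
    split_ifs at * <;> constructor <;> linarith [hj.1, hj.2]

/-- the half-open unit cube `[0,1)^d` is the disjoint union of the `d+1`
translated basic tiles `τ_i + w_i`. -/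
theorem unitCube_disjUnion_basicTiles (d : ℕ) (α : ℝ) (h0 : 0 < α) (h1 : α < 1) :
    (⋃ k : Fin (d + 1), (fun x => wShift d α k + x) '' basicTile d α k) =
        {x : Fin d → ℝ | ∀ j : Fin d, 0 ≤ x j ∧ x j < 1} ∧
      Pairwise (Function.onFun Disjoint
        fun k : Fin (d + 1) => (fun x => wShift d α k + x) '' basicTile d α k) := by
  constructor
  · ext x
    simp only [mem_iUnion, mem_setOf_eq, mem_shiftTile_iff]
    constructor
    · rintro ⟨k, hk⟩ j
      have h := hk j
      split_ifs at h <;> constructor <;> linarith [h.1, h.2]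
    · intro hx
      by_cases he : ∃ j : Fin d, x j < 1 - α
      · have he' : ∃ m, ∃ h : m < d, x ⟨m, h⟩ < 1 - α := by
          obtain ⟨j, hj⟩ := he
          exact ⟨j, j.2, by simpa using hj⟩
        obtain ⟨hn, hxn⟩ := Nat.find_spec he'
        set n := Nat.find he' with hndef
        refine ⟨⟨n, by omega⟩, fun j => ?_⟩
        split_ifs with hlt heq
        · have hlt' : (j : ℕ) < n := hlt
          have hmin := Nat.find_min he' hlt'
          push_neg at hmin
          have := hmin j.2
          refine ⟨by linarith [this, (show x ⟨(j:ℕ), j.2⟩ = x j by simp)] , (hx j).2⟩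
        · have heq' : (j : ℕ) = n := heq
          have : (⟨n, hn⟩ : Fin d) = j := by apply Fin.ext; simp [heq']
          rw [this] at hxn
          exact ⟨(hx j).1, hxn⟩
        · exact hx j
      · push_neg at he
        refine ⟨⟨d, by omega⟩, fun j => ?_⟩
        rw [if_pos (show (j : ℕ) < d from j.2)]
        exact ⟨he j, (hx j).2⟩
  · intro k k' hkk'
    wlog h : (k : ℕ) < (k' : ℕ) generalizing k k'
    · exact (this hkk'.symm (by have := Fin.val_ne_of_ne hkk'; omega)).symm
    rw [Function.onFun, Set.disjoint_left]
    rintro x hx hx'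
    rw [mem_shiftTile_iff] at hx hx'
    have hkd : (k : ℕ) < d := by have := k'.2; omega
    have h1 := hx ⟨k, hkd⟩
    have h2 := hx' ⟨k, hkd⟩
    simp only [lt_irrefl, if_false, if_pos rfl] at h1
    rw [if_pos (by simpa using h)] at h2
    simp at h1
    linarith [h1.2, h2.1]
end

section
/- Fix d ∈ ℕ and α ∈ (0,1), and let A be the d×d real matrix with entries A_{i,i} = 1 for i < d, A_{i+1,i} = −α for i < d, A_{i,d} = 1−α for i < d, A_{d,d} = 2−α, and all other entries 0. Then det A = 2 − α^d. -/
/-- The matrix `A` of the paper: `A_{i,i} = 1` for `i < d`, `A_{i+1,i} = -α` for `i < d`,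
`A_{i,d} = 1 - α` for `i < d`, `A_{d,d} = 2 - α` (1-based indexing), all other entries `0`.
Here we use 0-based indexing: the last column (index `d-1`) is `(1-α, …, 1-α, 2-α)ᵀ`,
the remaining diagonal entries are `1`, the subdiagonal entries are `-α`. -/
noncomputable def Amat (d : ℕ) (α : ℝ) : Matrix (Fin d) (Fin d) ℝ :=
  Matrix.of fun i j =>
    if (j : ℕ) = d - 1 then (if (i : ℕ) = d - 1 then 2 - α else 1 - α)
    else if i = j then 1
    else if (i : ℕ) = (j : ℕ) + 1 then -α
    else 0

lemma Amat_sub_zero (n : ℕ) (α : ℝ) :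
    (Amat (n + 2) α).submatrix Fin.succ ((0 : Fin (n+2)).succAbove) = Amat (n + 1) α := by
  ext i j
  have hj : (j : ℕ) < n + 1 := j.isLt
  have hi : (i : ℕ) < n + 1 := i.isLt
  simp only [Matrix.submatrix_apply, Fin.succAbove_zero, Amat, Matrix.of_apply,
    Fin.val_succ, Fin.ext_iff]
  split_ifs <;> first | rfl | omega

lemma det_Amat_aux (n : ℕ) (α : ℝ) : (Amat (n + 1) α).det = 2 - α ^ (n + 1) := by
  induction n with
  | zero =>
    rw [Matrix.det_fin_one]
    simp [Amat]
  | succ n ih =>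
    rw [Matrix.det_succ_row_zero]
    have hzero : ∀ j : Fin (n + 2), j ≠ 0 → j ≠ Fin.last (n + 1) →
        (-1 : ℝ) ^ (j : ℕ) * Amat (n + 2) α 0 j *
          ((Amat (n + 2) α).submatrix Fin.succ j.succAbove).det = 0 := by
      intro j hj0 hjl
      have h1 : (j : ℕ) ≠ n + 1 := fun h => hjl (Fin.ext h)
      have h2 : (0 : Fin (n+2)) ≠ j := fun h => hj0 h.symm
      have h3 : (0 : ℕ) ≠ (j : ℕ) + 1 := by omega
      simp [Amat, h1, h2, h3]
    have hsplit : ∑ j : Fin (n + 2), (-1 : ℝ) ^ (j : ℕ) * Amat (n + 2) α 0 j *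
          ((Amat (n + 2) α).submatrix Fin.succ j.succAbove).det
        = ∑ j ∈ ({0, Fin.last (n+1)} : Finset (Fin (n+2))), (-1 : ℝ) ^ (j : ℕ) * Amat (n + 2) α 0 j *
          ((Amat (n + 2) α).submatrix Fin.succ j.succAbove).det := by
      refine (Finset.sum_subset (Finset.subset_univ _) ?_).symm
      intro x _ hx
      simp only [Finset.mem_insert, Finset.mem_singleton, not_or] at hx
      exact hzero x hx.1 hx.2
    rw [hsplit, Finset.sum_pair (by simp [Fin.ext_iff] : (0 : Fin (n+2)) ≠ Fin.last (n+1))]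
    -- term at 0
    have hA00 : Amat (n + 2) α 0 0 = 1 := by
      simp [Amat]
    have hAlast : Amat (n + 2) α 0 (Fin.last (n+1)) = 1 - α := by
      simp [Amat, Fin.last]
    rw [hA00, hAlast, Amat_sub_zero, ih]
    -- the last-column minor is upper triangular
    have hUT : ((Amat (n + 2) α).submatrix Fin.succ (Fin.last (n+1)).succAbove).det
        = (-α) ^ (n + 1) := by
      have h : ((Amat (n + 2) α).submatrix Fin.succ (Fin.last (n+1)).succAbove).BlockTriangular id := by
        intro i j hij
        simp only [id] at hij
        have h1 : (j : ℕ) < n + 1 := j.isLt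
        have h2 : (j : ℕ) < (i : ℕ) := hij
        simp only [Matrix.submatrix_apply, Fin.succAbove_last, Amat, Matrix.of_apply,
          Fin.coe_castSucc, Fin.val_succ]
        rw [if_neg (by omega), if_neg (by simp [Fin.ext_iff]; omega), if_neg (by omega)]
      have hdiag : ∀ i : Fin (n+1),
          Amat (n + 2) α i.succ i.castSucc = -α := by
        intro i
        have hi : (i : ℕ) < n + 1 := i.isLt
        simp only [Amat, Matrix.of_apply, Fin.coe_castSucc, Fin.val_succ, Fin.ext_iff]
        split_ifs <;> first | rfl | omega
      rw [Matrix.det_of_upperTriangular h]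
      simp only [Matrix.submatrix_apply, Fin.succAbove_last]
      rw [Finset.prod_congr rfl fun i _ => hdiag i, Finset.prod_const,
        Finset.card_univ, Fintype.card_fin]
    rw [hUT]
    simp only [Fin.val_zero, pow_zero, Fin.val_last]
    have key : (-1 : ℝ) ^ (n + 1) * (-α) ^ (n + 1) = α ^ (n + 1) := by
      rw [← mul_pow, neg_mul_neg, one_mul]
    linear_combination (1 - α) * key

/-- `det A = 2 - α^d`. -/
theorem det_Amat (d : ℕ) (hd : 1 ≤ d) (α : ℝ) (h0 : 0 < α) (h1 : α < 1) :
    (Amat d α).det = 2 - α ^ d := by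
  obtain ⟨n, rfl⟩ : ∃ n, d = n + 1 := ⟨d - 1, by omega⟩
  exact det_Amat_aux n α
end

section
/- Fix d ∈ ℕ and α ∈ (0,1). Let τ* = ([0,1)^{d−1} × [0,2)) \ ([1−α,1)^{d−1} × [2−α,2)) be the notched-cube supertile and let A be the d×d real matrix with entries A_{i,i} = 1 for i < d, A_{i+1,i} = −α for i < d, A_{i,d} = 1−α for i < d, A_{d,d} = 2−α, and all other entries 0. Then τ* is a fundamental domain for the translation action of Aℤ^d on ℝ^d: the translates {τ* + Av : v ∈ ℤ^d} are pairwise disjoint and their union is ℝ^d. In particular there is a periodic tiling of ℝ^d by translates of τ*. -/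
open Set

/-- The notched-cube supertile
`τ* = ([0,1)^{d-1} × [0,2)) \ ([1-α,1)^{d-1} × [2-α,2))` in `ℝ^d`
(here the last coordinate has index `d-1`). -/
def superTile (d : ℕ) (α : ℝ) : Set (Fin d → ℝ) :=
  {x | (∀ j : Fin d, (j : ℕ) < d - 1 → 0 ≤ x j ∧ x j < 1) ∧
        ∀ j : Fin d, (j : ℕ) = d - 1 → 0 ≤ x j ∧ x j < 2} \
    {x | (∀ j : Fin d, (j : ℕ) < d - 1 → 1 - α ≤ x j ∧ x j < 1) ∧
        ∀ j : Fin d, (j : ℕ) = d - 1 → 2 - α ≤ x j ∧ x j < 2}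

/-!
Write `v = (v₀, …, v_{d-2}, m)`. Row `i < d - 1` of `x - Av` is
`xᵢ + α vᵢ₋₁ - (1 - α) m - vᵢ`, so for fixed `m` the conditions `0 ≤ (x - Av)ᵢ < 1` force
`vᵢ = ⌊xᵢ + α vᵢ₋₁ - (1 - α) m⌋` one coordinate after the other (the carries `carry α X m`),
and these coordinates of `x - Av` are then the fractional parts. What is left is the last
coordinate `lastCoord m`. Passing from `m` to `m + 1` lowers every carry by `0` or `1`, and by
`0` exactly as long as all earlier fractional parts are `≥ 1 - α`; hence `lastCoord` drops by
`2 - α` when the point lies over the notch and by `2` otherwise. In both cases membership in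
`τ*` becomes `0 ≤ lastCoord m` and `lastCoord (m + 1) < 0`, and a function decreasing in steps
of at least `2 - α > 0` changes sign exactly once.
-/

theorem Int.floor_sub_eq_ite {R : Type*} [CommRing R] [LinearOrder R] [IsStrictOrderedRing R]
    [FloorRing R] {u β : R} (hβ0 : 0 ≤ β) (hβ1 : β ≤ 1) :
    ⌊u - β⌋ = if β ≤ Int.fract u then ⌊u⌋ else ⌊u⌋ - 1 := by
  rw [← Int.self_sub_floor]
  split_ifs with h <;> rw [Int.floor_eq_iff] <;> push_cast <;>
    constructor <;> linarith [Int.floor_le u, Int.lt_floor_add_one u]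

theorem existsUnique_nonneg_and_succ_neg {R : Type*} [Field R] [LinearOrder R]
    [IsStrictOrderedRing R] [Archimedean R] {f : ℤ → R} {ε : R} (hε : 0 < ε)
    (hf : ∀ m, f (m + 1) ≤ f m - ε) : ∃! m, 0 ≤ f m ∧ f (m + 1) < 0 := by
  have hanti : Antitone f := antitone_int_of_succ_le fun m => by linarith [hf m]
  have hdrop (m : ℤ) (k : ℕ) : f (m + k) ≤ f m - ε * k := by
    induction k with
    | zero => simp
    | succ k ih =>
      have := hf (m + k)
      push_cast at this ⊢
      rw [← add_assoc]
      linarith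
  have hbdd : ∃ b, ∀ m, 0 ≤ f m → m ≤ b := by
    obtain ⟨k, hk⟩ := exists_nat_gt (f 0 / ε)
    refine ⟨k, fun m hm => ?_⟩
    by_contra! hlt
    have := hdrop 0 k
    rw [div_lt_iff₀ hε] at hk
    rw [zero_add] at this
    linarith [hanti hlt.le]
  have hne : ∃ m, 0 ≤ f m := by
    obtain ⟨k, hk⟩ := exists_nat_gt (-f 0 / ε)
    refine ⟨-k, ?_⟩
    have := hdrop (-k) k
    rw [div_lt_iff₀ hε] at hk
    rw [neg_add_cancel] at this
    linarith
  obtain ⟨m, hm, hmax⟩ := Int.exists_greatest_of_bdd hbdd hne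
  refine ⟨m, ⟨hm, not_le.1 fun h => by linarith [hmax _ h]⟩, fun m' ⟨hm'0, hm'1⟩ => ?_⟩
  have hle : m' ≤ m := hmax m' hm'0
  by_contra hm'm
  linarith [hanti (show m' + 1 ≤ m by omega)]

noncomputable def carry (α : ℝ) (X : ℕ → ℝ) (m : ℤ) : ℕ → ℤ
  | 0 => 0
  | i + 1 => ⌊X i + α * carry α X m i - (1 - α) * m⌋

noncomputable def carryArg (α : ℝ) (X : ℕ → ℝ) (m : ℤ) (i : ℕ) : ℝ :=
  X i + α * carry α X m i - (1 - α) * m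

noncomputable def lastCoord (α : ℝ) (X : ℕ → ℝ) (n : ℕ) (m : ℤ) : ℝ :=
  carryArg α X m n - m

section Carry

variable {α : ℝ} {X : ℕ → ℝ} {m : ℤ}

theorem carry_zero : carry α X m 0 = 0 := rfl

theorem carry_succ (i : ℕ) : carry α X m (i + 1) = ⌊carryArg α X m i⌋ := rfl

theorem carryArg_add_one (i : ℕ) :
    carryArg α X (m + 1) i =
      carryArg α X m i - α * (carry α X m i - carry α X (m + 1) i : ℤ) - (1 - α) := by
  simp only [carryArg]
  push_cast
  ring

theorem carry_sub_carry_add_one (hα0 : 0 ≤ α) (hα1 : α ≤ 1) (i : ℕ) :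
    carry α X m i - carry α X (m + 1) i =
      if ∀ k < i, 1 - α ≤ Int.fract (carryArg α X m k) then 0 else 1 := by
  induction i with
  | zero => simp [carry_zero]
  | succ i ih =>
    rw [carry_succ, carry_succ, carryArg_add_one, ih]
    simp only [Nat.forall_lt_succ_right]
    by_cases hprev : ∀ k < i, 1 - α ≤ Int.fract (carryArg α X m k)
    · rw [if_pos hprev, Int.cast_zero, mul_zero, sub_zero,
        Int.floor_sub_eq_ite (by linarith) (by linarith)]
      split_ifs <;> simp_all
    · rw [if_neg hprev, Int.cast_one, mul_one, sub_sub, add_sub_cancel, Int.floor_sub_one,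
        if_neg fun h => hprev h.1]
      ring

theorem lastCoord_add_one (hα0 : 0 ≤ α) (hα1 : α ≤ 1) (n : ℕ) :
    lastCoord α X n (m + 1) = lastCoord α X n m - (2 - α) -
      α * if ∀ k < n, 1 - α ≤ Int.fract (carryArg α X m k) then 0 else 1 := by
  simp only [lastCoord, carryArg_add_one, carry_sub_carry_add_one hα0 hα1]
  split_ifs <;> push_cast <;> ring

theorem lastCoord_add_one_le (hα0 : 0 ≤ α) (hα1 : α ≤ 1) (n : ℕ) (m : ℤ) :
    lastCoord α X n (m + 1) ≤ lastCoord α X n m - (2 - α) := by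
  rw [lastCoord_add_one hα0 hα1]
  split_ifs <;> linarith

end Carry

def InNotchedBox (α : ℝ) (n : ℕ) (Y : ℕ → ℝ) : Prop :=
  ((∀ k < n, Y k ∈ Ico 0 1) ∧ Y n ∈ Ico 0 2) ∧
    ¬((∀ k < n, Y k ∈ Ico (1 - α) 1) ∧ Y n ∈ Ico (2 - α) 2)

-- Coordinate `k` of `x - Av` when `X k = xₖ`, `V k = vₖ₋₁` (with `V 0 = 0`) and `m = v_{d-1}`.
def subMulVecCoord (α : ℝ) (X : ℕ → ℝ) (V : ℕ → ℤ) (m : ℤ) (k : ℕ) : ℝ :=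
  X k + α * V k - (1 - α) * m - V (k + 1)

section SubMulVecCoord

variable {α : ℝ} {X : ℕ → ℝ} {m : ℤ} {V : ℕ → ℤ}

theorem forall_lt_subMulVecCoord_mem_Ico_iff (hV : V 0 = 0) (n : ℕ) :
    (∀ k < n, subMulVecCoord α X V m k ∈ Ico 0 1) ↔ ∀ k ≤ n, V k = carry α X m k := by
  induction n with
  | zero => simpa [carry_zero] using hV
  | succ n ih =>
    simp only [← Nat.lt_add_one_iff] at ih ⊢
    rw [Nat.forall_lt_succ_right, ih, Nat.forall_lt_succ_right (n := n + 1)]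
    refine and_congr_right fun hcarry => ?_
    rw [carry_succ, eq_comm, Int.floor_eq_iff, carryArg, ← hcarry n n.lt_add_one, mem_Ico,
      subMulVecCoord]
    constructor <;> rintro ⟨h, h'⟩ <;> constructor <;> linarith

theorem inNotchedBox_subMulVecCoord_iff (hα0 : 0 ≤ α) (hα1 : α ≤ 1) (hV : V 0 = 0) (n : ℕ)
    (hVm : V (n + 1) = m) :
    InNotchedBox α n (subMulVecCoord α X V m) ↔
      (∀ k ≤ n, V k = carry α X m k) ∧ 0 ≤ lastCoord α X n m ∧ lastCoord α X n (m + 1) < 0 := by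
  rw [InNotchedBox, and_assoc, forall_lt_subMulVecCoord_mem_Ico_iff hV]
  refine and_congr_right fun hcarry => ?_
  have hfract (k : ℕ) (hk : k < n) :
      subMulVecCoord α X V m k = Int.fract (carryArg α X m k) := by
    rw [subMulVecCoord, hcarry k hk.le, hcarry (k + 1) hk, carry_succ, ← Int.self_sub_floor,
      carryArg]
  have hlast : subMulVecCoord α X V m n = lastCoord α X n m := by
    rw [subMulVecCoord, hcarry n le_rfl, hVm, lastCoord, carryArg]
  have hnotch : (∀ k < n, subMulVecCoord α X V m k ∈ Ico (1 - α) 1) ↔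
      ∀ k < n, 1 - α ≤ Int.fract (carryArg α X m k) :=
    forall₂_congr fun k hk => by simp [hfract k hk, Int.fract_lt_one]
  rw [hnotch, hlast, lastCoord_add_one hα0 hα1, mem_Ico, mem_Ico]
  generalize lastCoord α X n m = L
  split_ifs with hall
  · constructor
    · rintro ⟨⟨hL0, hL2⟩, hnotch⟩
      exact ⟨hL0, by linarith [not_le.1 fun hL => hnotch ⟨hall, hL, hL2⟩]⟩
    · rintro ⟨hL0, hL⟩
      exact ⟨⟨hL0, by linarith⟩, fun ⟨_, hL', _⟩ => by linarith⟩
  · constructor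
    · rintro ⟨⟨hL0, hL2⟩, -⟩
      exact ⟨hL0, by linarith⟩
    · rintro ⟨hL0, hL⟩
      exact ⟨⟨hL0, by linarith⟩, fun ⟨hall', _⟩ => hall hall'⟩

end SubMulVecCoord

def prependZero {M : Type*} [Zero M] {d : ℕ} (w : Fin d → M) : ℕ → M
  | 0 => 0
  | k + 1 => if h : k < d then w ⟨k, h⟩ else 0

section PrependZero

variable {M : Type*} [Zero M] {d : ℕ}

theorem prependZero_zero (w : Fin d → M) : prependZero w 0 = 0 := rfl

theorem prependZero_val_add_one (w : Fin d → M) (i : Fin d) : prependZero w (i + 1) = w i := by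
  simp [prependZero]

theorem prependZero_comp {N : Type*} [Zero N] {f : M → N} (hf : f 0 = 0) (w : Fin d → M)
    (k : ℕ) : prependZero (f ∘ w) k = f (prependZero w k) := by
  cases k with
  | zero => exact hf.symm
  | succ k => simp only [prependZero]; split_ifs <;> simp [hf]

theorem sum_ite_eq_add_one_eq_prependZero {R : Type*} [AddCommMonoid R] (w : Fin d → R)
    (k : ℕ) : ∑ j : Fin d, (if k = j + 1 then w j else 0) = prependZero w k := by
  cases k with
  | zero => exact Finset.sum_eq_zero fun j _ => if_neg (by omega)
  | succ k =>
    simp only [Nat.add_right_cancel_iff, prependZero]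
    split_ifs with hk
    · rw [Finset.sum_eq_single_of_mem ⟨k, hk⟩ (Finset.mem_univ _)
        fun j _ hj => if_neg fun h => hj (Fin.ext h.symm), if_pos rfl]
    · exact Finset.sum_eq_zero fun j _ => if_neg (by omega)

theorem forall_le_prependZero_eq_iff {n : ℕ} (w : Fin (n + 1) → M) {c : ℕ → M} (hc : c 0 = 0) :
    (∀ k ≤ n, prependZero w k = c k) ↔ Fin.init w = fun i : Fin n => c (i + 1) := by
  constructor
  · intro h
    funext i
    have := h (i + 1) i.isLt
    rwa [← Fin.val_castSucc, prependZero_val_add_one] at this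
  · rintro h (_ | k) hk
    · exact hc.symm
    · rw [prependZero, dif_pos (by omega)]
      exact congrFun h ⟨k, hk⟩

end PrependZero

section Tile

variable {n : ℕ} {α : ℝ}

theorem Amat_apply (i j : Fin (n + 1)) :
    Amat (n + 1) α i j =
      (if j = Fin.last n then 1 - α else 0) + (if i = j then 1 else 0) -
        (if (i : ℕ) = j + 1 then α else 0) := by
  have := i.isLt
  have := j.isLt
  simp only [Amat, Matrix.of_apply, Fin.ext_iff, Fin.val_last, Nat.add_sub_cancel]
  split_ifs <;> first | ring1 | (exfalso; omega)

theorem Amat_mulVec_apply (w : Fin (n + 1) → ℝ) (i : Fin (n + 1)) :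
    (Amat (n + 1) α).mulVec w i = (1 - α) * w (Fin.last n) + w i - α * prependZero w i := by
  simp only [Matrix.mulVec, dotProduct, Amat_apply, add_mul, sub_mul, ite_mul, one_mul, zero_mul,
    Finset.sum_add_distrib, Finset.sum_sub_distrib, Finset.sum_ite_eq', Finset.sum_ite_eq,
    Finset.mem_univ, if_true]
  rw [← sum_ite_eq_add_one_eq_prependZero, Finset.mul_sum]
  simp only [mul_ite, mul_zero]

theorem mem_superTile_iff {y : Fin (n + 1) → ℝ} {Y : ℕ → ℝ} (hy : ∀ i : Fin (n + 1), y i = Y i) :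
    y ∈ superTile (n + 1) α ↔ InNotchedBox α n Y := by
  have hlt (P : ℕ → Prop) : (∀ i < n + 1, i < n → P i) ↔ ∀ i < n, P i :=
    ⟨fun h i hi => h i (by omega) hi, fun h i _ hi => h i hi⟩
  have heq (P : ℕ → Prop) : (∀ i < n + 1, i = n → P i) ↔ P n :=
    ⟨fun h => h n n.lt_add_one rfl, fun h i _ hi => hi ▸ h⟩
  simp only [superTile, InNotchedBox, mem_sdiff, mem_ofPred_eq, hy, Nat.add_sub_cancel,
    Fin.forall_iff, mem_Ico, hlt, heq]

theorem sub_mulVec_mem_superTile_iff (hα0 : 0 ≤ α) (hα1 : α ≤ 1) {x : Fin (n + 1) → ℝ}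
    {X : ℕ → ℝ} (hX : ∀ i : Fin (n + 1), X i = x i) (v : Fin (n + 1) → ℤ) :
    x - (Amat (n + 1) α).mulVec (fun i => (v i : ℝ)) ∈ superTile (n + 1) α ↔
      Fin.init v = (fun i : Fin n => carry α X (v (Fin.last n)) (i + 1)) ∧
        0 ≤ lastCoord α X n (v (Fin.last n)) ∧ lastCoord α X n (v (Fin.last n) + 1) < 0 := by
  have hV : prependZero v (n + 1) = v (Fin.last n) := prependZero_val_add_one v (Fin.last n)
  have hy (i : Fin (n + 1)) : (x - (Amat (n + 1) α).mulVec (fun i => (v i : ℝ))) i =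
      subMulVecCoord α X (prependZero v) (v (Fin.last n)) i := by
    have hcast : prependZero (fun i => (v i : ℝ)) i = prependZero v i :=
      prependZero_comp Int.cast_zero v i
    rw [Pi.sub_apply, Amat_mulVec_apply, subMulVecCoord, prependZero_val_add_one, hcast, hX]
    ring
  rw [mem_superTile_iff hy, inNotchedBox_subMulVecCoord_iff hα0 hα1 (prependZero_zero v) n hV,
    forall_le_prependZero_eq_iff v carry_zero]

end Tile

/-- `τ*` is a fundamental domain for the translation action of `Aℤ^d`
on `ℝ^d`: every point of `ℝ^d` lies in exactly one translate `τ* + Av`, `v ∈ ℤ^d`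
(the translates are pairwise disjoint and cover `ℝ^d`, i.e. they tile `ℝ^d`
periodically). -/
theorem superTile_fundamental_domain (d : ℕ) (hd : 1 ≤ d) (α : ℝ)
    (h0 : 0 < α) (h1 : α < 1) :
    ∀ x : Fin d → ℝ, ∃! v : Fin d → ℤ,
      x - (Amat d α).mulVec (fun i => (v i : ℝ)) ∈ superTile d α := by
  obtain ⟨n, rfl⟩ := Nat.exists_eq_add_of_le' hd
  intro x
  set X : ℕ → ℝ := fun k => prependZero x (k + 1)
  have hX (i : Fin (n + 1)) : X i = x i := prependZero_val_add_one x i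
  obtain ⟨m, hm, hm_unique⟩ := existsUnique_nonneg_and_succ_neg (by linarith : (0 : ℝ) < 2 - α)
    (lastCoord_add_one_le (X := X) h0.le h1.le n)
  refine ⟨Fin.snoc (fun i : Fin n => carry α X m (i + 1)) m, ?_, fun v hv => ?_⟩
  · refine (sub_mulVec_mem_superTile_iff h0.le h1.le hX _).2 ?_
    rw [Fin.init_snoc, Fin.snoc_last]
    exact ⟨rfl, hm⟩
  · obtain ⟨hinit, hsign⟩ := (sub_mulVec_mem_superTile_iff h0.le h1.le hX v).1 hv
    rw [← Fin.snoc_init_self v, hinit, hm_unique _ hsign]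
end

section
/- Fix d ∈ ℕ and α ∈ (0,1), and consider the periodic tiling 𝒩 = {τ* + Av : v ∈ ℤ^d} of ℝ^d by the supertile. For any v ∈ ℤ^d, if the top boundary of the translate τ* + Av intersects the bottom boundary of another translate τ* + Aw (w ≠ v), then this intersection exactly equals the top face of one of the basic tiles in the decomposition of τ* + Av into translates of the basic tiles τ_1, …, τ_{d+1}. -/
open Set

/-- The `d`-th standard basis vector of `ℝ^d` (0-based index `d-1`). -/
noncomputable def edVec (d : ℕ) : Fin d → ℝ := fun j => if (j : ℕ) = d - 1 then 1 else 0

/-- Translate of a set of `ℝ^d` by a vector. -/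
def transl (d : ℕ) (v : Fin d → ℝ) (S : Set (Fin d → ℝ)) : Set (Fin d → ℝ) :=
  (fun x => v + x) '' S

/-- The bottom boundary of the supertile `τ*` (before translation):
`[0,1)^{d-1} × {0}`. -/
def bottomBase (d : ℕ) : Set (Fin d → ℝ) :=
  {x | (∀ j : Fin d, (j : ℕ) < d - 1 → 0 ≤ x j ∧ x j < 1) ∧
    ∀ j : Fin d, (j : ℕ) = d - 1 → x j = 0}

/-- The top boundary of the supertile `τ*` (before translation):
`(([0,1)^{d-1} \ [1-α,1)^{d-1}) × {2}) ∪ ([1-α,1)^{d-1} × {2-α})`. -/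
def topBase (d : ℕ) (α : ℝ) : Set (Fin d → ℝ) :=
  {x | (∀ j : Fin d, (j : ℕ) < d - 1 → 0 ≤ x j ∧ x j < 1) ∧
      (∃ j : Fin d, (j : ℕ) < d - 1 ∧ x j < 1 - α) ∧
      ∀ j : Fin d, (j : ℕ) = d - 1 → x j = 2} ∪
    {x | (∀ j : Fin d, (j : ℕ) < d - 1 → 1 - α ≤ x j ∧ x j < 1) ∧
      ∀ j : Fin d, (j : ℕ) = d - 1 → x j = 2 - α}

/-- The decomposition of the supertile `τ*` into translates of the basic tiles:
pairs `(u, k)` meaning the piece `τ_k + u`. The bottom layer consists of `τ_k + w_k`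
for all `k : Fin (d+1)`, and the top layer of `τ_k + w_k + e_d` for `(k : ℕ) < d`. -/
def pieceSet (d : ℕ) (α : ℝ) : Set ((Fin d → ℝ) × Fin (d + 1)) :=
  {p | (∃ k : Fin (d + 1), p = (wShift d α k, k)) ∨
    (∃ k : Fin (d + 1), (k : ℕ) < d ∧ p = (wShift d α k + edVec d, k))}

/-- The top face of the translated basic tile `τ_k + u`: the face with maximal `d`-th
coordinate, the remaining coordinates ranging over the half-open sides of the tile. -/
def topFace (d : ℕ) (α : ℝ) (k : Fin (d + 1)) (u : Fin d → ℝ) : Set (Fin d → ℝ) :=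
  {x | (∀ j : Fin d, (j : ℕ) < d - 1 → u j ≤ x j ∧ x j < u j + upEdge d α k j) ∧
    ∀ j : Fin d, (j : ℕ) = d - 1 → x j = u j + upEdge d α k j}

lemma mem_transl {d : ℕ} {v x : Fin d → ℝ} {S : Set (Fin d → ℝ)} :
    x ∈ transl d v S ↔ x - v ∈ S := by
  unfold transl
  constructor
  · rintro ⟨y, hy, rfl⟩
    simpa using hy
  · intro h
    exact ⟨x - v, h, by simp⟩

lemma Amat_mulVec (d : ℕ) (hd : 0 < d) (α : ℝ) (x : Fin d → ℝ) (i : Fin d) :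
    (Amat d α).mulVec x i =
      (if (i : ℕ) = d - 1 then 2 - α else 1 - α) * x ⟨d - 1, by omega⟩ +
      (if (i : ℕ) = d - 1 then 0 else x i) +
      (if (i : ℕ) = 0 then 0 else
        -α * x ⟨(i : ℕ) - 1, lt_of_le_of_lt (Nat.sub_le _ _) i.isLt⟩) := by
  have key : ∀ j : Fin d, Amat d α i j * x j =
      (if j = (⟨d - 1, by omega⟩ : Fin d) then
        (if (i : ℕ) = d - 1 then 2 - α else 1 - α) * x j else 0) +
      (if (i : ℕ) = d - 1 then 0 else if j = i then x j else 0) +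
      (if (i : ℕ) = 0 then 0 else
        if j = (⟨(i : ℕ) - 1, lt_of_le_of_lt (Nat.sub_le _ _) i.isLt⟩ : Fin d) then
          -α * x j else 0) := by
    intro j
    have hi := i.isLt
    have hj := j.isLt
    simp only [Amat, Matrix.of_apply, Fin.ext_iff]
    split_ifs <;> first | ring1 | omega | (exfalso; omega)
  have hmv : (Amat d α).mulVec x i = ∑ j, Amat d α i j * x j := by
    simp [Matrix.mulVec, dotProduct]
  rw [hmv, Finset.sum_congr rfl fun j _ => key j, Finset.sum_add_distrib,
    Finset.sum_add_distrib]
  by_cases hP : (i : ℕ) = d - 1 <;> by_cases hQ : (i : ℕ) = 0 <;>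
    simp [hP, hQ, Finset.sum_ite_eq']

lemma chain_pos {α : ℝ} (h0 : 0 < α) (h1 : α < 1) {D : ℕ} {z : ℕ → ℤ} {m : ℤ}
    (hm : 1 ≤ m) {C : ℕ → ℝ}
    (hC0 : 0 < D → C 0 = (z 0 : ℝ) + (1 - α) * (m : ℝ))
    (hCs : ∀ n, n + 1 < D → C (n + 1) = (z (n + 1) : ℝ) - α * (z n : ℝ) + (1 - α) * (m : ℝ))
    (hub : ∀ n, n < D → C n < 1) :
    ∀ j, j < D → z j < 1 := by
  intro j
  induction j with
  | zero =>
    intro hD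
    by_contra hge
    push_neg at hge
    have h1z : (1 : ℝ) ≤ (z 0 : ℝ) := by exact_mod_cast hge
    have h1m : (1 : ℝ) ≤ (m : ℝ) := by exact_mod_cast hm
    have hu := hub 0 hD
    rw [hC0 hD] at hu
    nlinarith
  | succ n ih =>
    intro hD
    by_contra hge
    push_neg at hge
    have h1z : (1 : ℝ) ≤ (z (n + 1) : ℝ) := by exact_mod_cast hge
    have h1m : (1 : ℝ) ≤ (m : ℝ) := by exact_mod_cast hm
    have hu := hub (n + 1) hD
    rw [hCs n hD] at hu
    have hαm : (1 - α) * 1 ≤ (1 - α) * (m : ℝ) :=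
      mul_le_mul_of_nonneg_left h1m (by linarith)
    have hpos : 0 < α * (z n : ℝ) := by linarith
    have hznr : (0 : ℝ) < (z n : ℝ) := by
      by_contra hle
      push_neg at hle
      have : α * (z n : ℝ) ≤ 0 := mul_nonpos_of_nonneg_of_nonpos h0.le hle
      linarith
    have hzn : 1 ≤ z n := by exact_mod_cast hznr
    have := ih (by omega)
    omega

lemma chain_neg {α : ℝ} (h0 : 0 < α) (h1 : α < 1) {D : ℕ} {z : ℕ → ℤ} {m : ℤ}
    {C : ℕ → ℝ} {L : ℝ} {t : ℤ}
    (hbase : (t : ℝ) + (1 - α) * (m : ℝ) ≤ L)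
    (hstep : (t : ℝ) - L + (1 - α) * (m : ℝ) ≤ α * ((t : ℝ) + 1))
    (hC0 : 0 < D → C 0 = (z 0 : ℝ) + (1 - α) * (m : ℝ))
    (hCs : ∀ n, n + 1 < D → C (n + 1) = (z (n + 1) : ℝ) - α * (z n : ℝ) + (1 - α) * (m : ℝ))
    (hlb : ∀ n, n < D → L < C n) :
    ∀ j, j < D → t < z j := by
  intro j
  induction j with
  | zero =>
    intro hD
    by_contra hge
    push_neg at hge
    have h1z : (z 0 : ℝ) ≤ (t : ℝ) := by exact_mod_cast hge
    have hl := hlb 0 hD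
    rw [hC0 hD] at hl
    linarith
  | succ n ih =>
    intro hD
    by_contra hge
    push_neg at hge
    have h1z : (z (n + 1) : ℝ) ≤ (t : ℝ) := by exact_mod_cast hge
    have hl := hlb (n + 1) hD
    rw [hCs n hD] at hl
    have hmul : α * (z n : ℝ) < α * ((t : ℝ) + 1) := by linarith
    have hzr : (z n : ℝ) < (t : ℝ) + 1 := lt_of_mul_lt_mul_left hmul h0.le
    have hzn : z n ≤ t := by
      have h2 : (z n : ℝ) < ((t + 1 : ℤ) : ℝ) := by push_cast; linarith
      have h3 : z n < t + 1 := by exact_mod_cast h2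
      omega
    have := ih (by omega)
    omega
lemma caseA_eq {d : ℕ} {α : ℝ} (h0 : 0 < α) (h1 : α < 1) {k : ℕ} (hk : k < d - 1)
    {a b : Fin d → ℝ}
    (hck : ∀ j : Fin d, (j : ℕ) < d - 1 →
      b j - a j = if (j : ℕ) < k then 1 - α else if (j : ℕ) = k then -α else 0)
    (hcl : ∀ j : Fin d, (j : ℕ) = d - 1 → b j - a j = 2) :
    transl d a (topBase d α) ∩ transl d b (bottomBase d) =
      topFace d α ⟨k, by omega⟩ (a + (wShift d α ⟨k, by omega⟩ + edVec d)) := by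
  have hd2 : 2 ≤ d := by omega
  ext x
  simp only [Set.mem_inter_iff, mem_transl, topBase, bottomBase, topFace, Set.mem_union,
    Set.mem_setOf_eq, Pi.sub_apply, Pi.add_apply, wShift, edVec, upEdge]
  constructor
  · rintro ⟨htop, hbot1, hbot2⟩
    rcases htop with ⟨htb, _, htl⟩ | ⟨htb, htl⟩
    · constructor
      · intro j hj
        have hb := hbot1 j hj
        have ht := htb j hj
        have hc := hck j hj
        have hjne : ¬((j : ℕ) = d - 1) := by omega
        by_cases h2 : (j : ℕ) < k
        · simp only [if_pos h2, if_neg hjne] at hc ⊢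
          constructor <;> linarith
        · by_cases h3 : (j : ℕ) = k
          · simp only [if_neg h2, if_pos h3, if_neg hjne] at hc ⊢
            constructor <;> linarith
          · simp only [if_neg h2, if_neg h3, if_neg hjne] at hc ⊢
            constructor <;> linarith
      · intro j hj
        have hc := hcl j hj
        have hb := hbot2 j hj
        have h2 : ¬((j : ℕ) < k) := by omega
        have h3 : ¬((j : ℕ) = k) := by omega
        simp only [if_neg h2, if_pos hj, if_neg h3]
        linarith
    · exfalso
      have hj : ((⟨d - 1, by omega⟩ : Fin d) : ℕ) = d - 1 := rfl
      have h2 := htl _ hj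
      have h3 := hbot2 _ hj
      have h4 := hcl _ hj
      linarith
  · rintro ⟨hside, hlastf⟩
    have hlx : ∀ j : Fin d, (j : ℕ) = d - 1 → x j - a j = 2 := by
      intro j hj
      have hf := hlastf j hj
      have h2 : ¬((j : ℕ) < k) := by omega
      have h3 : ¬((j : ℕ) = k) := by omega
      simp only [if_neg h2, if_pos hj, if_neg h3] at hf
      linarith
    refine ⟨Or.inl ⟨?_, ?_, ?_⟩, ?_, ?_⟩
    · intro j hj
      have hs := hside j hj
      have hjne : ¬((j : ℕ) = d - 1) := by omega
      by_cases h2 : (j : ℕ) < k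
      · simp only [if_pos h2, if_neg hjne] at hs
        constructor <;> linarith [hs.1, hs.2]
      · by_cases h3 : (j : ℕ) = k
        · simp only [if_neg h2, if_pos h3, if_neg hjne] at hs
          constructor <;> linarith [hs.1, hs.2]
        · simp only [if_neg h2, if_neg h3, if_neg hjne] at hs
          constructor <;> linarith [hs.1, hs.2]
    · refine ⟨⟨k, by omega⟩, hk, ?_⟩
      have hs := hside ⟨k, by omega⟩ hk
      have h2 : ¬((k : ℕ) < k) := by omega
      have hjne : ¬((k : ℕ) = d - 1) := by omega
      simp only [if_neg h2, if_neg hjne, if_pos rfl, if_true] at hs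
      linarith [hs.1, hs.2]
    · exact hlx
    · intro j hj
      have hs := hside j hj
      have hc := hck j hj
      have hjne : ¬((j : ℕ) = d - 1) := by omega
      by_cases h2 : (j : ℕ) < k
      · simp only [if_pos h2, if_neg hjne] at hs hc
        constructor <;> linarith [hs.1, hs.2]
      · by_cases h3 : (j : ℕ) = k
        · simp only [if_neg h2, if_pos h3, if_neg hjne] at hs hc
          constructor <;> linarith [hs.1, hs.2]
        · simp only [if_neg h2, if_neg h3, if_neg hjne] at hs hc
          constructor <;> linarith [hs.1, hs.2]
    · intro j hj
      have hc := hcl j hj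
      have h2 := hlx j hj
      linarith

lemma caseB_eq {d : ℕ} (hd : 1 ≤ d) {α : ℝ} (h0 : 0 < α) (h1 : α < 1)
    {a b : Fin d → ℝ}
    (hck : ∀ j : Fin d, (j : ℕ) < d - 1 → b j - a j = 1 - α)
    (hcl : ∀ j : Fin d, (j : ℕ) = d - 1 → b j - a j = 2 - α) :
    transl d a (topBase d α) ∩ transl d b (bottomBase d) =
      topFace d α ⟨d - 1, by omega⟩ (a + (wShift d α ⟨d - 1, by omega⟩ + edVec d)) := by
  ext x
  simp only [Set.mem_inter_iff, mem_transl, topBase, bottomBase, topFace, Set.mem_union,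
    Set.mem_setOf_eq, Pi.sub_apply, Pi.add_apply, wShift, edVec, upEdge]
  constructor
  · rintro ⟨htop, hbot1, hbot2⟩
    rcases htop with ⟨htb, _, htl⟩ | ⟨htb, htl⟩
    · exfalso
      have hj : ((⟨d - 1, by omega⟩ : Fin d) : ℕ) = d - 1 := rfl
      have h2 := htl _ hj
      have h3 := hbot2 _ hj
      have h4 := hcl _ hj
      linarith
    · constructor
      · intro j hj
        have ht := htb j hj
        have hjne : ¬((j : ℕ) = d - 1) := by omega
        simp only [if_neg hjne, if_pos hj]
        constructor <;> linarith [ht.1, ht.2]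
      · intro j hj
        have h3 := hbot2 j hj
        have h4 := hcl j hj
        have h2 : ¬((j : ℕ) < d - 1) := by omega
        simp only [if_neg h2, if_pos hj]
        linarith
  · rintro ⟨hside, hlastf⟩
    have hlx : ∀ j : Fin d, (j : ℕ) = d - 1 → x j - a j = 2 - α := by
      intro j hj
      have hf := hlastf j hj
      have h2 : ¬((j : ℕ) < d - 1) := by omega
      simp only [if_neg h2, if_pos hj] at hf
      linarith
    refine ⟨Or.inr ⟨?_, ?_⟩, ?_, ?_⟩
    · intro j hj
      have hs := hside j hj
      have hjne : ¬((j : ℕ) = d - 1) := by omega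
      simp only [if_neg hjne, if_pos hj] at hs
      constructor <;> linarith [hs.1, hs.2]
    · exact hlx
    · intro j hj
      have hs := hside j hj
      have hc := hck j hj
      have hjne : ¬((j : ℕ) = d - 1) := by omega
      simp only [if_neg hjne, if_pos hj] at hs
      constructor <;> linarith [hs.1, hs.2]
    · intro j hj
      have hc := hcl j hj
      have h2 := hlx j hj
      linarith

/-- Tile Intersection Property: in the periodic notched-cube tiling
`𝒩 = {τ* + Av : v ∈ ℤ^d}`, if the top boundary of `τ* + Av` meets the bottom boundary
of a different translate `τ* + Aw`, then the intersection is exactly the top face of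
one of the basic tiles in the decomposition of `τ* + Av`. -/
theorem tile_intersection_property (d : ℕ) (hd : 1 ≤ d) (α : ℝ)
    (h0 : 0 < α) (h1 : α < 1) :
    ∀ v w : Fin d → ℤ, v ≠ w →
      (transl d ((Amat d α).mulVec (fun i => (v i : ℝ))) (topBase d α) ∩
        transl d ((Amat d α).mulVec (fun i => (w i : ℝ))) (bottomBase d)).Nonempty →
      ∃ q ∈ pieceSet d α,
        transl d ((Amat d α).mulVec (fun i => (v i : ℝ))) (topBase d α) ∩
            transl d ((Amat d α).mulVec (fun i => (w i : ℝ))) (bottomBase d) =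
          topFace d α q.2 ((Amat d α).mulVec (fun i => (v i : ℝ)) + q.1) := by
  intro v w hvw hne
  obtain ⟨x0, hx0⟩ := hne
  set a := (Amat d α).mulVec (fun i => ((v i : ℝ))) with ha
  set b := (Amat d α).mulVec (fun i => ((w i : ℝ))) with hb
  set z : ℕ → ℤ := fun n => if h : n < d then w ⟨n, h⟩ - v ⟨n, h⟩ else 0 with hzdef
  have hd0 : 0 < d := hd
  have hzc : ∀ (n : ℕ) (h : n < d), (z n : ℝ) = ((w ⟨n, h⟩ : ℝ)) - ((v ⟨n, h⟩ : ℝ)) := by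
    intro n h
    simp only [hzdef, dif_pos h]
    push_cast
    ring
  have hcgen : ∀ j : Fin d, b j - a j =
      (if (j : ℕ) = d - 1 then 2 - α else 1 - α) * (z (d - 1) : ℝ) +
      (if (j : ℕ) = d - 1 then 0 else (z (j : ℕ) : ℝ)) +
      (if (j : ℕ) = 0 then 0 else -α * (z ((j : ℕ) - 1) : ℝ)) := by
    intro j
    rw [hb, ha, Amat_mulVec d hd0 α _ j, Amat_mulVec d hd0 α _ j]
    have e1 := hzc (d - 1) (by omega)
    have e2 := hzc (j : ℕ) j.isLt
    by_cases hj0 : (j : ℕ) = 0 <;> by_cases hjD : (j : ℕ) = d - 1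
    · simp only [if_pos hj0, if_pos hjD, Fin.eta]
      rw [e1]
      ring
    · simp only [if_pos hj0, if_neg hjD, Fin.eta]
      rw [e1, e2]
      ring
    · have e3 := hzc ((j : ℕ) - 1) (by omega)
      simp only [if_neg hj0, if_pos hjD, Fin.eta]
      rw [e1, e3]
      ring
    · have e3 := hzc ((j : ℕ) - 1) (by omega)
      simp only [if_neg hj0, if_neg hjD, Fin.eta]
      rw [e1, e2, e3]
      ring
  have hc0 : ∀ j : Fin d, (j : ℕ) = 0 → 0 < d - 1 →
      b j - a j = (z 0 : ℝ) + (1 - α) * (z (d - 1) : ℝ) := by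
    intro j hj0 hD
    have h2 : ¬((j : ℕ) = d - 1) := by omega
    rw [hcgen j]
    simp only [if_neg h2, if_pos hj0]
    rw [hj0]
    ring
  have hcs : ∀ (j : Fin d) (n : ℕ), (j : ℕ) = n + 1 → n + 1 < d - 1 →
      b j - a j = (z (n + 1) : ℝ) - α * (z n : ℝ) + (1 - α) * (z (d - 1) : ℝ) := by
    intro j n hj hD
    have h2 : ¬((j : ℕ) = d - 1) := by omega
    have h3 : ¬((j : ℕ) = 0) := by omega
    rw [hcgen j]
    simp only [if_neg h2, if_neg h3]
    rw [hj]
    simp only [Nat.add_sub_cancel]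
    ring
  have hclast : 1 ≤ d - 1 → ∀ j : Fin d, (j : ℕ) = d - 1 →
      b j - a j = (2 - α) * (z (d - 1) : ℝ) - α * (z (d - 2) : ℝ) := by
    intro hD j hj
    have h3 : ¬((j : ℕ) = 0) := by omega
    have h4 : d - 1 - 1 = d - 2 := by omega
    rw [hcgen j]
    simp only [if_pos hj, if_neg h3]
    rw [hj, h4]
    ring
  have hclast0 : d = 1 → ∀ j : Fin d,
      b j - a j = (2 - α) * (z (d - 1) : ℝ) := by
    intro hD j
    have hj0 : (j : ℕ) = 0 := by omega
    have hjD : (j : ℕ) = d - 1 := by omega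
    rw [hcgen j]
    simp only [if_pos hjD, if_pos hj0]
    ring
  rw [Set.mem_inter_iff, mem_transl, mem_transl] at hx0
  obtain ⟨htop, hbot⟩ := hx0
  simp only [bottomBase, Set.mem_setOf_eq, Pi.sub_apply] at hbot
  obtain ⟨hbot1, hbot2⟩ := hbot
  have hclastx : ∀ j : Fin d, (j : ℕ) = d - 1 → b j - a j = x0 j - a j := by
    intro j hj
    have := hbot2 j hj
    linarith
  simp only [topBase, Set.mem_union, Set.mem_setOf_eq, Pi.sub_apply] at htop
  rcases htop with ⟨htb, hex, htl⟩ | ⟨htb, htl⟩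
  · -- CASE A: top at height 2
    obtain ⟨j0, hj0lt, -⟩ := hex
    have hD1 : 1 ≤ d - 1 := by omega
    have hcl2 : ∀ j : Fin d, (j : ℕ) = d - 1 → b j - a j = 2 := by
      intro j hj
      rw [hclastx j hj, htl j hj]
    have heq : (2 - α) * (z (d - 1) : ℝ) - α * (z (d - 2) : ℝ) = 2 := by
      have h2 := hcl2 ⟨d - 1, by omega⟩ rfl
      have h3 := hclast hD1 ⟨d - 1, by omega⟩ rfl
      linarith
    have hCb : ∀ (n : ℕ) (hn : n < d - 1),
        -1 < b ⟨n, by omega⟩ - a ⟨n, by omega⟩ ∧ b ⟨n, by omega⟩ - a ⟨n, by omega⟩ < 1 := by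
      intro n h
      have h2 := htb ⟨n, by omega⟩ h
      have h3 := hbot1 ⟨n, by omega⟩ h
      constructor <;> linarith [h2.1, h2.2, h3.1, h3.2]
    set C : ℕ → ℝ := fun n => if h : n < d - 1 then
        b ⟨n, by omega⟩ - a ⟨n, by omega⟩ else 0 with hCdef
    have hC0 : 0 < d - 1 → C 0 = (z 0 : ℝ) + (1 - α) * (z (d - 1) : ℝ) := by
      intro h
      simp only [hCdef, dif_pos h]
      exact hc0 ⟨0, by omega⟩ rfl h
    have hCs : ∀ n, n + 1 < d - 1 →
        C (n + 1) = (z (n + 1) : ℝ) - α * (z n : ℝ) + (1 - α) * (z (d - 1) : ℝ) := by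
      intro n h
      simp only [hCdef, dif_pos h]
      exact hcs ⟨n + 1, by omega⟩ n rfl h
    have hub : ∀ n, n < d - 1 → C n < 1 := by
      intro n h
      simp only [hCdef, dif_pos h]
      exact (hCb n h).2
    have hlb : ∀ n, n < d - 1 → (-1 : ℝ) < C n := by
      intro n h
      simp only [hCdef, dif_pos h]
      exact (hCb n h).1
    set m := z (d - 1) with hmdef
    have hm1 : m = 1 := by
      rcases (by omega : m ≤ 0 ∨ m = 1 ∨ 2 ≤ m) with hm | hm | hm
      · exfalso
        have hmr : (m : ℝ) ≤ 0 := by exact_mod_cast hm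
        have hP : α * (z (d - 2) : ℝ) ≤ -2 := by
          nlinarith [mul_nonpos_of_nonneg_of_nonpos (by linarith : (0:ℝ) ≤ 2 - α) hmr]
        have hz2 : (z (d - 2) : ℝ) < 0 := by
          by_contra hcon
          push_neg at hcon
          nlinarith [mul_nonneg h0.le hcon]
        have hz2' : z (d - 2) ≤ -1 := by
          have : z (d - 2) < 0 := by exact_mod_cast hz2
          omega
        have hchain := chain_neg h0 h1 (t := -1) (L := (-1 : ℝ)) (m := m) (z := z) (C := C)
          (by push_cast
              nlinarith [mul_nonpos_of_nonneg_of_nonpos (by linarith : (0:ℝ) ≤ 1 - α) hmr])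
          (by push_cast
              nlinarith [mul_nonpos_of_nonneg_of_nonpos (by linarith : (0:ℝ) ≤ 1 - α) hmr])
          hC0 hCs hlb (d - 2) (by omega)
        omega
      · exact hm
      · exfalso
        have hmr : (2 : ℝ) ≤ (m : ℝ) := by exact_mod_cast hm
        have hP : 2 * (1 - α) ≤ α * (z (d - 2) : ℝ) := by
          nlinarith [mul_le_mul_of_nonneg_left hmr (by linarith : (0:ℝ) ≤ 2 - α)]
        have hz2 : (0 : ℝ) < (z (d - 2) : ℝ) := by
          by_contra hcon
          push_neg at hcon
          nlinarith [mul_nonpos_of_nonneg_of_nonpos h0.le hcon]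
        have hz2' : 1 ≤ z (d - 2) := by exact_mod_cast hz2
        have hchain := chain_pos h0 h1 (by omega : 1 ≤ m) hC0 hCs hub (d - 2) (by omega)
        omega
    have hmr : (m : ℝ) = 1 := by exact_mod_cast hm1
    have hzD2 : z (d - 2) = -1 := by
      have h' : α * (z (d - 2) : ℝ) = α * (-1) := by
        rw [hmr] at heq
        linarith
      have : (z (d - 2) : ℝ) = -1 := mul_left_cancel₀ (ne_of_gt h0) h'
      exact_mod_cast this
    have hno1 := chain_pos h0 h1 (by omega : 1 ≤ m) hC0 hCs hub
    have hno2 := chain_neg h0 h1 (t := -2) (L := (-1 : ℝ)) (m := m) (z := z) (C := C)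
      (by push_cast; rw [hmr]; linarith)
      (by push_cast; rw [hmr]; linarith)
      hC0 hCs hlb
    have hrange : ∀ j, j < d - 1 → z j = -1 ∨ z j = 0 := by
      intro j hj
      have := hno1 j hj
      have := hno2 j hj
      omega
    have hexz : ∃ n, n < d - 1 ∧ z n = -1 := ⟨d - 2, by omega, hzD2⟩
    set k := Nat.find hexz with hkdef
    have hkspec := Nat.find_spec hexz
    have hkD : k < d - 1 := hkspec.1
    have hzero : ∀ j, j < k → z j = 0 := by
      intro j hj
      have h2 := Nat.find_min hexz hj
      rcases hrange j (by omega) with h | h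
      · exact absurd ⟨by omega, h⟩ h2
      · exact h
    have hneg : ∀ j, k ≤ j → j < d - 1 → z j = -1 := by
      intro j
      induction j with
      | zero =>
        intro hkj hj
        have hk0 : k = 0 := by omega
        rw [← hk0]
        exact hkspec.2
      | succ n ih =>
        intro hkj hjD
        by_cases hkn : k = n + 1
        · rw [← hkn]
          exact hkspec.2
        · have hzn : z n = -1 := ih (by omega) (by omega)
          rcases hrange (n + 1) hjD with h | h
          · exact h
          · exfalso
            have hC := hub (n + 1) hjD
            rw [hCs n hjD] at hC
            rw [h, hzn, hmr] at hC
            push_cast at hC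
            linarith
    have hck : ∀ j : Fin d, (j : ℕ) < d - 1 →
        b j - a j = if (j : ℕ) < k then 1 - α else if (j : ℕ) = k then -α else 0 := by
      intro j hj
      rcases Nat.eq_zero_or_pos (j : ℕ) with hj0 | hjpos
      · rw [hc0 j hj0 (by omega)]
        by_cases hk0 : 0 < k
        · rw [hzero 0 hk0, hmr, if_pos (by omega : (j : ℕ) < k)]
          push_cast
          ring
        · have hk0' : k = 0 := by omega
          have hz0 : z 0 = -1 := by
            rw [← hk0']
            exact hkspec.2
          rw [hz0, hmr, if_neg (by omega : ¬((j : ℕ) < k)),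
            if_pos (by omega : (j : ℕ) = k)]
          push_cast
          ring
      · obtain ⟨n, hn⟩ : ∃ n, (j : ℕ) = n + 1 := ⟨(j : ℕ) - 1, by omega⟩
        rw [hcs j n hn (by omega)]
        by_cases h2 : (j : ℕ) < k
        · rw [hzero (n + 1) (by omega), hzero n (by omega), hmr, if_pos h2]
          push_cast
          ring
        · by_cases h3 : (j : ℕ) = k
          · have hzn1 : z (n + 1) = -1 := by
              rw [show n + 1 = k by omega]
              exact hkspec.2
            rw [hzn1, hzero n (by omega), hmr, if_neg h2, if_pos h3]
            push_cast
            ring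
          · have hzn1 : z (n + 1) = -1 := hneg (n + 1) (by omega) (by omega)
            have hzn : z n = -1 := hneg n (by omega) (by omega)
            rw [hzn1, hzn, hmr, if_neg h2, if_neg h3]
            push_cast
            ring
    have hkd : k < d := by omega
    refine ⟨(wShift d α ⟨k, by omega⟩ + edVec d, ⟨k, by omega⟩),
      Or.inr ⟨⟨k, by omega⟩, hkd, rfl⟩, ?_⟩
    exact caseA_eq h0 h1 hkD hck hcl2
  · -- CASE B: top at height 2 - α
    have hcl2 : ∀ j : Fin d, (j : ℕ) = d - 1 → b j - a j = 2 - α := by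
      intro j hj
      rw [hclastx j hj, htl j hj]
    rcases Nat.eq_zero_or_pos (d - 1) with hD0 | hD1
    · have hd1 : d = 1 := by omega
      have hkd : d - 1 < d := by omega
      refine ⟨(wShift d α ⟨d - 1, by omega⟩ + edVec d, ⟨d - 1, by omega⟩),
        Or.inr ⟨⟨d - 1, by omega⟩, hkd, rfl⟩, ?_⟩
      exact caseB_eq hd h0 h1 (fun j hj => absurd hj (by omega)) hcl2
    · have heq : (2 - α) * (z (d - 1) : ℝ) - α * (z (d - 2) : ℝ) = 2 - α := by
        have h2 := hcl2 ⟨d - 1, by omega⟩ rfl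
        have h3 := hclast hD1 ⟨d - 1, by omega⟩ rfl
        linarith
      have hCb : ∀ (n : ℕ) (hn : n < d - 1),
          -α < b ⟨n, by omega⟩ - a ⟨n, by omega⟩ ∧ b ⟨n, by omega⟩ - a ⟨n, by omega⟩ < 1 := by
        intro n h
        have h2 := htb ⟨n, by omega⟩ h
        have h3 := hbot1 ⟨n, by omega⟩ h
        constructor <;> linarith [h2.1, h2.2, h3.1, h3.2]
      set C : ℕ → ℝ := fun n => if h : n < d - 1 then
          b ⟨n, by omega⟩ - a ⟨n, by omega⟩ else 0 with hCdef
      have hC0 : 0 < d - 1 → C 0 = (z 0 : ℝ) + (1 - α) * (z (d - 1) : ℝ) := by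
        intro h
        simp only [hCdef, dif_pos h]
        exact hc0 ⟨0, by omega⟩ rfl h
      have hCs : ∀ n, n + 1 < d - 1 →
          C (n + 1) = (z (n + 1) : ℝ) - α * (z n : ℝ) + (1 - α) * (z (d - 1) : ℝ) := by
        intro n h
        simp only [hCdef, dif_pos h]
        exact hcs ⟨n + 1, by omega⟩ n rfl h
      have hub : ∀ n, n < d - 1 → C n < 1 := by
        intro n h
        simp only [hCdef, dif_pos h]
        exact (hCb n h).2
      have hlb : ∀ n, n < d - 1 → -α < C n := by
        intro n h
        simp only [hCdef, dif_pos h]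
        exact (hCb n h).1
      set m := z (d - 1) with hmdef
      have hm1 : m = 1 := by
        rcases (by omega : m ≤ 0 ∨ m = 1 ∨ 2 ≤ m) with hm | hm | hm
        · exfalso
          have hmr : (m : ℝ) ≤ 0 := by exact_mod_cast hm
          have hP : α * (z (d - 2) : ℝ) ≤ α - 2 := by
            nlinarith [mul_nonpos_of_nonneg_of_nonpos (by linarith : (0:ℝ) ≤ 2 - α) hmr]
          have hz2 : (z (d - 2) : ℝ) < 0 := by
            by_contra hcon
            push_neg at hcon
            nlinarith [mul_nonneg h0.le hcon]
          have hz2' : z (d - 2) ≤ -1 := by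
            have : z (d - 2) < 0 := by exact_mod_cast hz2
            omega
          have hchain := chain_neg h0 h1 (t := -1) (L := -α) (m := m) (z := z) (C := C)
            (by push_cast
                nlinarith [mul_nonpos_of_nonneg_of_nonpos (by linarith : (0:ℝ) ≤ 1 - α) hmr])
            (by push_cast
                nlinarith [mul_nonpos_of_nonneg_of_nonpos (by linarith : (0:ℝ) ≤ 1 - α) hmr])
            hC0 hCs hlb (d - 2) (by omega)
          omega
        · exact hm
        · exfalso
          have hmr : (2 : ℝ) ≤ (m : ℝ) := by exact_mod_cast hm
          have hP : 2 - α ≤ α * (z (d - 2) : ℝ) := by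
            nlinarith [mul_le_mul_of_nonneg_left hmr (by linarith : (0:ℝ) ≤ 2 - α)]
          have hz2 : (0 : ℝ) < (z (d - 2) : ℝ) := by
            by_contra hcon
            push_neg at hcon
            nlinarith [mul_nonpos_of_nonneg_of_nonpos h0.le hcon]
          have hz2' : 1 ≤ z (d - 2) := by exact_mod_cast hz2
          have hchain := chain_pos h0 h1 (by omega : 1 ≤ m) hC0 hCs hub (d - 2) (by omega)
          omega
      have hmr : (m : ℝ) = 1 := by exact_mod_cast hm1
      have hno1 := chain_pos h0 h1 (by omega : 1 ≤ m) hC0 hCs hub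
      have hno2 := chain_neg h0 h1 (t := -1) (L := -α) (m := m) (z := z) (C := C)
        (by push_cast; rw [hmr]; linarith)
        (by push_cast; rw [hmr]; linarith)
        hC0 hCs hlb
      have hzall : ∀ j, j < d - 1 → z j = 0 := by
        intro j hj
        have := hno1 j hj
        have := hno2 j hj
        omega
      have hck : ∀ j : Fin d, (j : ℕ) < d - 1 → b j - a j = 1 - α := by
        intro j hj
        rcases Nat.eq_zero_or_pos (j : ℕ) with hj0 | hjpos
        · rw [hc0 j hj0 (by omega), hzall 0 (by omega), hmr]
          push_cast
          ring
        · obtain ⟨n, hn⟩ : ∃ n, (j : ℕ) = n + 1 := ⟨(j : ℕ) - 1, by omega⟩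
          rw [hcs j n hn (by omega), hzall (n + 1) (by omega), hzall n (by omega), hmr]
          push_cast
          ring
      have hkd : d - 1 < d := by omega
      refine ⟨(wShift d α ⟨d - 1, by omega⟩ + edVec d, ⟨d - 1, by omega⟩),
        Or.inr ⟨⟨d - 1, by omega⟩, hkd, rfl⟩, ?_⟩
      exact caseB_eq hd h0 h1 hck hcl2
end

section
/- Let 𝒯 be a finite list of half-open rectangular tiles in ℝ² and let μ be a probability measure on Y_𝒯 invariant under the translation action (S_v)_{v∈ℝ²}. If μ is ergodic for the horizontal flow (S_{t e₁})_{t∈ℝ} and ergodic for the vertical flow (S_{t e₂})_{t∈ℝ}, then the set of tilings containing an infinite (semi-infinite or bi-infinite) shear is μ-null. -/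
open Set MeasureTheory

namespace Tiling2

/-- Points of the plane. -/
abbrev Pt : Type := ℝ × ℝ

/-- The half-open rectangle `[0, w) × [0, h)`. -/
def rect (w h : ℝ) : Set Pt := Ico (0 : ℝ) w ×ˢ Ico (0 : ℝ) h

/-- `P ⊆ ℝ² × Fin k` is a tiling of `ℝ²` by the half-open rectangles with sizes
`sz : Fin k → ℝ × ℝ` (width, height) if the translated rectangles
`{p + rect (sz i) : (p, i) ∈ P}` partition `ℝ²`: every point lies in exactly one. -/
def IsTiling {k : ℕ} (sz : Fin k → ℝ × ℝ) (P : Set (Pt × Fin k)) : Prop :=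
  ∀ x : Pt, ∃! q : Pt × Fin k, q ∈ P ∧ x - q.1 ∈ rect (sz q.2).1 (sz q.2).2

/-- The space `Y_𝒯` of all tilings of `ℝ²` by the tiles with sizes `sz`. -/
def Tilings {k : ℕ} (sz : Fin k → ℝ × ℝ) : Type := {P : Set (Pt × Fin k) // IsTiling sz P}

/-- The σ-algebra on `Y_𝒯` generated by the sets
`{P : some (p,i) ∈ P has p ∈ U and i = j}`, for `U ⊆ ℝ²` open and `j : Fin k`. -/
instance instMS {k : ℕ} (sz : Fin k → ℝ × ℝ) : MeasurableSpace (Tilings sz) :=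
  MeasurableSpace.generateFrom
    {s | ∃ (U : Set Pt) (j : Fin k), IsOpen U ∧
      s = {P : Tilings sz | ∃ q ∈ P.val, q.1 ∈ U ∧ q.2 = j}}

/-- Translation `S_v P = {(p - v, i) : (p, i) ∈ P}` on sets of placed tiles. -/
def trSet {k : ℕ} (v : Pt) (P : Set (Pt × Fin k)) : Set (Pt × Fin k) :=
  (fun q : Pt × Fin k => (q.1 - v, q.2)) '' P

theorem IsTiling.trSet {k : ℕ} {sz : Fin k → ℝ × ℝ} {P : Set (Pt × Fin k)}
    (h : IsTiling sz P) (v : Pt) : IsTiling sz (Tiling2.trSet v P) := by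
  intro x
  obtain ⟨q, ⟨hqP, hqx⟩, huniq⟩ := h (x + v)
  refine ⟨(q.1 - v, q.2), ⟨⟨q, hqP, rfl⟩, ?_⟩, ?_⟩
  · have hx : x - (q.1 - v) = x + v - q.1 := by abel
    rw [hx]; exact hqx
  · rintro r ⟨⟨s, hsP, rfl⟩, hrx⟩
    have h2 : s = q := by
      refine huniq s ⟨hsP, ?_⟩
      have hx : x + v - s.1 = x - (s.1 - v) := by abel
      rw [hx]; exact hrx
    rw [h2]

/-- The translation action `S_v` on the space of tilings. -/
def S {k : ℕ} (sz : Fin k → ℝ × ℝ) (v : Pt) (x : Tilings sz) : Tilings sz :=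
  ⟨trSet v x.1, x.2.trSet v⟩

/-- The closed placed tile (closure of the placed half-open rectangle) of `q = (p, i)`. -/
def closedTile {k : ℕ} (sz : Fin k → ℝ × ℝ) (q : Pt × Fin k) : Set Pt :=
  Icc q.1.1 (q.1.1 + (sz q.2).1) ×ˢ Icc q.1.2 (q.1.2 + (sz q.2).2)

/-- The union of the boundaries of the placed tiles of `P`. -/
def bdry {k : ℕ} (sz : Fin k → ℝ × ℝ) (P : Set (Pt × Fin k)) : Set Pt :=
  ⋃ q ∈ P, frontier (closedTile sz q)

/-- The four closed faces of the placed tile `q`. -/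
def faces {k : ℕ} (sz : Fin k → ℝ × ℝ) (q : Pt × Fin k) : Set (Set Pt) :=
  { ({q.1.1} : Set ℝ) ×ˢ Icc q.1.2 (q.1.2 + (sz q.2).2),
    ({q.1.1 + (sz q.2).1} : Set ℝ) ×ˢ Icc q.1.2 (q.1.2 + (sz q.2).2),
    Icc q.1.1 (q.1.1 + (sz q.2).1) ×ˢ ({q.1.2} : Set ℝ),
    Icc q.1.1 (q.1.1 + (sz q.2).1) ×ˢ ({q.1.2 + (sz q.2).2} : Set ℝ) }

/-- `e` is a shared edge of `P`: a common closed face of two distinct placed tiles. -/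
def SharedEdge {k : ℕ} (sz : Fin k → ℝ × ℝ) (P : Set (Pt × Fin k)) (e : Set Pt) : Prop :=
  ∃ q ∈ P, ∃ q' ∈ P, q ≠ q' ∧ e ∈ faces sz q ∧ e ∈ faces sz q'

/-- `ℓ` is a (nonempty) horizontal segment: `I × {y}` with `I` a nonempty interval. -/
def IsHSeg (ℓ : Set Pt) : Prop :=
  ∃ (I : Set ℝ) (y : ℝ), I.Nonempty ∧ Convex ℝ I ∧ ℓ = I ×ˢ ({y} : Set ℝ)

/-- `ℓ` is a (nonempty) vertical segment: `{a} × I` with `I` a nonempty interval. -/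
def IsVSeg (ℓ : Set Pt) : Prop :=
  ∃ (a : ℝ) (I : Set ℝ), I.Nonempty ∧ Convex ℝ I ∧ ℓ = ({a} : Set ℝ) ×ˢ I

/-- `ℓ` contains no shared edge of `P`. -/
def NoSharedEdgeWithin {k : ℕ} (sz : Fin k → ℝ × ℝ) (P : Set (Pt × Fin k))
    (ℓ : Set Pt) : Prop :=
  ∀ e : Set Pt, SharedEdge sz P e → ¬e ⊆ ℓ

/-- `ℓ` is a shear of `P`: a maximal horizontal or vertical segment contained in the
union of the boundaries of the placed tiles and containing no shared edge. -/
def IsShear {k : ℕ} (sz : Fin k → ℝ × ℝ) (P : Set (Pt × Fin k)) (ℓ : Set Pt) : Prop :=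
  (IsHSeg ℓ ∨ IsVSeg ℓ) ∧ ℓ ⊆ bdry sz P ∧ NoSharedEdgeWithin sz P ℓ ∧
    ∀ ℓ' : Set Pt, (IsHSeg ℓ' ∨ IsVSeg ℓ') → ℓ' ⊆ bdry sz P →
      NoSharedEdgeWithin sz P ℓ' → ℓ ⊆ ℓ' → ℓ' = ℓ

/-- `ℓ` is a closed half-line (horizontal or vertical). -/
def SemiInfinite (ℓ : Set Pt) : Prop :=
  (∃ y a : ℝ, ℓ = Ici a ×ˢ ({y} : Set ℝ) ∨ ℓ = Iic a ×ˢ ({y} : Set ℝ)) ∨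
    (∃ x a : ℝ, ℓ = ({x} : Set ℝ) ×ˢ Ici a ∨ ℓ = ({x} : Set ℝ) ×ˢ Iic a)

/-- `ℓ` is a full (horizontal or vertical) line. -/
def BiInfinite (ℓ : Set Pt) : Prop :=
  (∃ y : ℝ, ℓ = (univ : Set ℝ) ×ˢ ({y} : Set ℝ)) ∨
    (∃ x : ℝ, ℓ = ({x} : Set ℝ) ×ˢ (univ : Set ℝ))

end Tiling2

/-!
An infinite shear is a horizontal or vertical half-line (or line) inside the union `bdry` of the
tile boundaries, and transposing tilings exchanges the two cases, so consider vertical half-lines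
and let `X x ⊆ ℝ` be the set of their abscissae in the tiling `x`. The event `E(I)` that `X`
meets a compact interval `I` is invariant under the vertical flow, hence has measure `0` or `1`,
and by horizontal invariance its measure depends only on the length of `I`. If it is `0` for some
length, countably many translates of `E(I)` cover `{X ≠ ∅}`. If it is `1` for every length, then
almost surely `X ∩ [0, 1]` has arbitrarily many points. This is impossible: the tile areas are
bounded below, so a unit square meets boundedly many tiles, and at a height avoiding their
horizontal edges every point of `X ∩ [0, 1]` is the abscissa of a vertical edge of one of them.
The events `E(I)` are measurable because `bdry` is closed (the tiling is locally finite) and `I`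
is compact.
-/

open Filter Metric
open scoped Pointwise ENNReal

lemma preimage_setOf_inter_Icc_nonempty {Ω : Type*} {X : Ω → Set ℝ} {f : Ω → Ω} {t : ℝ}
    (hf : ∀ ω, X (f ω) = (· + t) ⁻¹' X ω) (p q : ℝ) :
    f ⁻¹' {ω | (X ω ∩ Icc p q).Nonempty} = {ω | (X ω ∩ Icc (p + t) (q + t)).Nonempty} := by
  ext ω
  rw [mem_preimage, mem_ofPred_eq, mem_ofPred_eq, hf, ← image_nonempty (f := (· + t)),
    image_preimage_inter, image_add_const_Icc]

theorem measure_setOf_nonempty_eq_zero_of_stationary {Ω : Type*} [MeasurableSpace Ω]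
    {μ : Measure Ω} [IsProbabilityMeasure μ] {X : Ω → Set ℝ} {T : ℝ → Ω → Ω}
    (hT : ∀ t, MeasurePreserving (T t) μ μ) (hXT : ∀ t ω, X (T t ω) = (· + t) ⁻¹' X ω)
    (hmeas : ∀ p q, MeasurableSet {ω | (X ω ∩ Icc p q).Nonempty})
    (h01 : ∀ p q, μ {ω | (X ω ∩ Icc p q).Nonempty} = 0 ∨ μ {ω | (X ω ∩ Icc p q).Nonempty} = 1)
    {N : ℕ} (hN : ∀ ω (F : Finset ℝ), ↑F ⊆ X ω ∩ Icc 0 1 → F.card ≤ N) :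
    μ {ω | (X ω).Nonempty} = 0 := by
  set E : ℝ → ℝ → Set Ω := fun p q => {ω | (X ω ∩ Icc p q).Nonempty}
  have hshift : ∀ p q t, μ (E (p + t) (q + t)) = μ (E p q) := fun p q t => by
    have h := (hT t).measure_preimage (hmeas p q).nullMeasurableSet
    rwa [preimage_setOf_inter_Icc_nonempty (hXT t)] at h
  set ε : ℝ := 1 / (2 * N + 2)
  have hε : 0 < ε := by positivity
  rcases h01 0 ε with h0 | h1
  · refine measure_mono_null (t := ⋃ i : ℤ, E (0 + i * ε) (ε + i * ε)) ?_
      (measure_iUnion_null fun i => (hshift _ _ _).trans h0)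
    rintro ω ⟨a, ha⟩
    refine mem_iUnion.2 ⟨⌊a / ε⌋, a, ha, ?_, ?_⟩
    · have := Int.floor_le (a / ε)
      rw [le_div_iff₀ hε] at this
      linarith
    · have := Int.lt_floor_add_one (a / ε)
      rw [div_lt_iff₀ hε] at this
      linarith
  · exfalso
    -- the `N + 1` disjoint intervals `[2iε, (2i+1)ε]` of `[0, 1]` all meet `X ω` for a.e. `ω`
    have hall : ∀ᵐ ω ∂μ, ∀ i : Fin (N + 1), ω ∈ E (0 + 2 * i * ε) (ε + 2 * i * ε) :=
      ae_all_iff.2 fun i => (ae_mem_iff_measure_eq (hmeas _ _).nullMeasurableSet).2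
        (by rw [hshift, h1, measure_univ])
    obtain ⟨ω, hω⟩ := hall.exists
    choose a haX haI using hω
    have hmono : StrictMono a := by
      intro i j hij
      have hij' : (i : ℝ) + 1 ≤ j := by exact_mod_cast hij
      nlinarith [(haI i).2, (haI j).1]
    have hcard := hN ω (Finset.univ.image a) (by
      intro b hb
      obtain ⟨i, -, rfl⟩ := Finset.mem_image.1 hb
      refine ⟨haX i, ?_, ?_⟩
      · nlinarith [(haI i).1, (Nat.cast_nonneg (α := ℝ) i)]
      · have hi : (i : ℝ) ≤ N := by exact_mod_cast Nat.lt_succ_iff.1 i.2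
        have : (2 * N + 1) * ε < 1 := by
          rw [← div_eq_mul_one_div, div_lt_one (by positivity)]; linarith
        nlinarith [(haI i).2])
    rw [Finset.card_image_of_injective _ hmono.injective, Finset.card_univ,
      Fintype.card_fin] at hcard
    omega

theorem measurableSet_setOf_exists_singleton_prod_subset {Ω X Y : Type*} [MeasurableSpace Ω]
    [MetricSpace X] [PseudoMetricSpace Y] {C : Ω → Set (X × Y)}
    (hC : ∀ ω, IsClosed (C ω)) (hCU : ∀ U, IsOpen U → MeasurableSet {ω | (C ω ∩ U).Nonempty})
    {I : Set X} (hI : IsCompact I) {S : Set Y} (hS : S.Countable) :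
    MeasurableSet {ω | ∃ a ∈ I, {a} ×ˢ S ⊆ C ω} := by
  obtain ⟨D, hDI, hD, hID⟩ := hI.isSeparable.exists_countable_dense_subset
  suffices h : {ω | ∃ a ∈ I, {a} ×ˢ S ⊆ C ω} =
      ⋂ n : ℕ, ⋃ r ∈ D, ⋂ s ∈ S, {ω | (C ω ∩ ball (r, s) (1 / (n + 1))).Nonempty} by
    rw [h]
    exact .iInter fun n => .biUnion hD fun r _ => .biInter hS fun s _ => hCU _ isOpen_ball
  ext ω
  simp only [mem_ofPred_eq, mem_iInter, mem_iUnion, exists_prop]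
  constructor
  · rintro ⟨a, haI, ha⟩ n
    obtain ⟨r, hrD, hr⟩ := mem_closure_iff.1 (hID haI) _ (Nat.one_div_pos_of_nat (n := n))
    refine ⟨r, hrD, fun s hs => ⟨(a, s), ha ⟨rfl, hs⟩, ?_⟩⟩
    rwa [mem_ball, Prod.dist_eq, dist_self, max_eq_left dist_nonneg]
  · intro h
    -- a limit point of the centres `r` works, by compactness of `I` and closedness of `C ω`
    set F : ℕ → Set X := fun n => I ∩ ⋂ s ∈ S, (·, s) ⁻¹' cthickening (1 / (n + 1)) (C ω)
    have hF : (⋂ n, F n).Nonempty := by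
      refine IsCompact.nonempty_iInter_of_sequence_nonempty_isCompact_isClosed F
        (fun n => inter_subset_inter_right _ (iInter₂_mono fun s _ => preimage_mono
          (cthickening_mono (by gcongr; linarith) _)))
        (fun n => ?_) (hI.inter_right ?_) (fun n => hI.isClosed.inter ?_)
      · obtain ⟨r, hrD, hr⟩ := h n
        refine ⟨r, hDI hrD, mem_iInter₂.2 fun s hs => ?_⟩
        obtain ⟨z, hz, hzr⟩ := hr s hs
        exact mem_cthickening_of_dist_le _ z _ _ hz (dist_comm z _ ▸ (mem_ball.1 hzr).le)
      all_goals exact isClosed_biInter fun s _ =>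
        isClosed_cthickening.preimage (Continuous.prodMk_left s)
    obtain ⟨a, ha⟩ := hF
    have ha' := mem_iInter.1 ha
    refine ⟨a, (ha' 0).1, ?_⟩
    rintro ⟨b, s⟩ ⟨rfl, hs⟩
    rw [← (hC ω).closure_eq, closure_eq_iInter_cthickening]
    refine mem_iInter₂.2 fun δ hδ => ?_
    obtain ⟨n, hn⟩ := exists_nat_one_div_lt hδ
    exact cthickening_mono hn.le _ (mem_iInter₂.1 (ha' n).2 s hs)

lemma singleton_prod_subset_iff_of_subset_closure {X Y : Type*} [TopologicalSpace X] [T1Space X]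
    [TopologicalSpace Y] {C : Set (X × Y)} (hC : IsClosed C) {S T : Set Y}
    (hST : S ⊆ T) (hTS : T ⊆ closure S) (a : X) : {a} ×ˢ T ⊆ C ↔ {a} ×ˢ S ⊆ C := by
  refine ⟨(prod_mono le_rfl hST).trans, fun h => ?_⟩
  calc {a} ×ˢ T ⊆ closure ({a} ×ˢ S) := by
        rw [closure_prod_eq, closure_singleton]; exact prod_mono le_rfl hTS
    _ ⊆ C := closure_minimal h hC

lemma closure_subset_closure_inter_range_ratCast {U : Set ℝ} (hU : IsOpen U) :
    closure U ⊆ closure (U ∩ range ((↑) : ℚ → ℝ)) :=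
  closure_minimal (Rat.denseRange_cast.open_subset_closure_inter hU) isClosed_closure

namespace Tiling2

variable {k : ℕ} {sz : Fin k → ℝ × ℝ}

def rayColumns (C : Set Pt) : Set ℝ :=
  {a | ∃ m : ℝ, {a} ×ˢ Ici m ⊆ C ∨ {a} ×ˢ Iic m ⊆ C}

lemma mem_rayColumns_iff {C : Set Pt} (hC : IsClosed C) {a : ℝ} :
    a ∈ rayColumns C ↔ ∃ m : ℤ, {a} ×ˢ (Ioi (m : ℝ) ∩ range ((↑) : ℚ → ℝ)) ⊆ C ∨
      {a} ×ˢ (Iio (m : ℝ) ∩ range ((↑) : ℚ → ℝ)) ⊆ C := by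
  have hIci (m : ℝ) := singleton_prod_subset_iff_of_subset_closure hC
    (inter_subset_left.trans Ioi_subset_Ici_self)
    ((closure_Ioi m).symm.subset.trans (closure_subset_closure_inter_range_ratCast isOpen_Ioi)) a
  have hIic (m : ℝ) := singleton_prod_subset_iff_of_subset_closure hC
    (inter_subset_left.trans Iio_subset_Iic_self)
    ((closure_Iio m).symm.subset.trans (closure_subset_closure_inter_range_ratCast isOpen_Iio)) a
  simp only [← hIci, ← hIic]
  constructor
  · rintro ⟨m, h | h⟩
    · exact ⟨⌈m⌉, Or.inl ((prod_mono le_rfl (Ici_subset_Ici.2 (Int.le_ceil m))).trans h)⟩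
    · exact ⟨⌊m⌋, Or.inr ((prod_mono le_rfl (Iic_subset_Iic.2 (Int.floor_le m))).trans h)⟩
  · rintro ⟨m, h⟩
    exact ⟨m, h⟩

theorem measurableSet_setOf_rayColumns_inter_nonempty {Ω : Type*} [MeasurableSpace Ω]
    {C : Ω → Set Pt} (hC : ∀ ω, IsClosed (C ω))
    (hCU : ∀ U, IsOpen U → MeasurableSet {ω | (C ω ∩ U).Nonempty}) (p q : ℝ) :
    MeasurableSet {ω | (rayColumns (C ω) ∩ Icc p q).Nonempty} := by
  have h : {ω | (rayColumns (C ω) ∩ Icc p q).Nonempty} = ⋃ m : ℤ,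
      ({ω | ∃ a ∈ Icc p q, {a} ×ˢ (Ioi (m : ℝ) ∩ range ((↑) : ℚ → ℝ)) ⊆ C ω} ∪
        {ω | ∃ a ∈ Icc p q, {a} ×ˢ (Iio (m : ℝ) ∩ range ((↑) : ℚ → ℝ)) ⊆ C ω}) := by
    ext ω
    simp only [mem_ofPred_eq, mem_iUnion, mem_union, Set.Nonempty, mem_inter_iff,
      mem_rayColumns_iff (hC ω)]
    constructor
    · rintro ⟨a, ⟨m, h | h⟩, ha⟩
      exacts [⟨m, Or.inl ⟨a, ha, h⟩⟩, ⟨m, Or.inr ⟨a, ha, h⟩⟩]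
    · rintro ⟨m, ⟨a, ha, h⟩ | ⟨a, ha, h⟩⟩
      exacts [⟨a, ⟨m, Or.inl h⟩, ha⟩, ⟨a, ⟨m, Or.inr h⟩, ha⟩]
  rw [h]
  exact .iUnion fun m =>
    (measurableSet_setOf_exists_singleton_prod_subset hC hCU isCompact_Icc
      ((countable_range _).mono inter_subset_right)).union
    (measurableSet_setOf_exists_singleton_prod_subset hC hCU isCompact_Icc
      ((countable_range _).mono inter_subset_right))

lemma rayColumns_preimage_add (C : Set Pt) (v : Pt) :
    rayColumns ((· + v) ⁻¹' C) = (· + v.1) ⁻¹' rayColumns C := by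
  obtain ⟨v₁, v₂⟩ := v
  have key : ∀ (a : ℝ) (I : Set ℝ), {a} ×ˢ I ⊆ (· + (v₁, v₂)) ⁻¹' C ↔
      {a + v₁} ×ˢ ((· - v₂) ⁻¹' I) ⊆ C := fun a I => by
    constructor
    · rintro h ⟨b, y⟩ ⟨rfl, hy⟩
      simpa using h (mk_mem_prod rfl hy)
    · rintro h ⟨b, y⟩ ⟨rfl, hy⟩
      simpa using h (mk_mem_prod rfl (by simpa using hy))
  ext a
  simp only [rayColumns, mem_ofPred_eq, mem_preimage, key, preimage_sub_const_Ici,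
    preimage_sub_const_Iic]
  constructor
  · rintro ⟨m, h⟩; exact ⟨m + v₂, h⟩
  · rintro ⟨m, h⟩; exact ⟨m - v₂, by simpa using h⟩

lemma rayColumns_nonempty_of_subset {C ℓ : Set Pt} (hℓC : ℓ ⊆ C)
    (hℓ : SemiInfinite ℓ ∨ BiInfinite ℓ) :
    (rayColumns C).Nonempty ∨ (rayColumns (Prod.swap ⁻¹' C)).Nonempty := by
  have hswap : ∀ (I : Set ℝ) (y : ℝ), I ×ˢ {y} ⊆ C → {y} ×ˢ I ⊆ Prod.swap ⁻¹' C :=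
    fun I y h z hz => h (mem_prod.2 ⟨hz.2, hz.1⟩)
  rcases hℓ with (⟨y, a, rfl | rfl⟩ | ⟨x, a, rfl | rfl⟩) | (⟨y, rfl⟩ | ⟨x, rfl⟩)
  · exact .inr ⟨y, a, .inl (hswap _ _ hℓC)⟩
  · exact .inr ⟨y, a, .inr (hswap _ _ hℓC)⟩
  · exact .inl ⟨x, a, .inl hℓC⟩
  · exact .inl ⟨x, a, .inr hℓC⟩
  · exact .inr ⟨y, 0, .inl ((prod_mono le_rfl (subset_univ _)).trans (hswap _ _ hℓC))⟩
  · exact .inl ⟨x, 0, .inl ((prod_mono le_rfl (subset_univ _)).trans hℓC)⟩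

theorem measure_setOf_rayColumns_nonempty_eq_zero {Ω : Type*} [MeasurableSpace Ω]
    {μ : Measure Ω} [IsProbabilityMeasure μ] {C : Ω → Set Pt} (hC : ∀ ω, IsClosed (C ω))
    (hCU : ∀ U, IsOpen U → MeasurableSet {ω | (C ω ∩ U).Nonempty})
    {T V : ℝ → Ω → Ω} (hT : ∀ t, MeasurePreserving (T t) μ μ)
    (hCT : ∀ t ω, C (T t ω) = (· + (t, 0)) ⁻¹' C ω)
    (hCV : ∀ t ω, C (V t ω) = (· + (0, t)) ⁻¹' C ω)
    (herg : ∀ E, MeasurableSet E → (∀ t, V t ⁻¹' E = E) → μ E = 0 ∨ μ E = 1)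
    {N : ℕ} (hN : ∀ ω (F : Finset ℝ), ↑F ⊆ rayColumns (C ω) ∩ Icc 0 1 → F.card ≤ N) :
    μ {ω | (rayColumns (C ω)).Nonempty} = 0 := by
  have hmeas := measurableSet_setOf_rayColumns_inter_nonempty hC hCU
  refine measure_setOf_nonempty_eq_zero_of_stationary hT
    (fun t ω => by rw [hCT, rayColumns_preimage_add]) hmeas
    (fun p q => herg _ (hmeas p q) fun t => ?_) hN
  ext ω
  simp [hCV, rayColumns_preimage_add]

lemma exists_closedTile_subset_closedBall (sz : Fin k → ℝ × ℝ) :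
    ∃ D, ∀ q : Pt × Fin k, closedTile sz q ⊆ closedBall q.1 D := by
  obtain ⟨D, hD⟩ := Finite.bddAbove_range fun j => max (sz j).1 (sz j).2
  refine ⟨D, fun q z ⟨⟨h₁, h₂⟩, h₃, h₄⟩ => ?_⟩
  have hq := hD ⟨q.2, rfl⟩
  rw [mem_closedBall, Prod.dist_eq, Real.dist_eq, Real.dist_eq, abs_of_nonneg (by linarith),
    abs_of_nonneg (by linarith)]
  exact (max_le_max (by linarith) (by linarith)).trans hq

lemma isClosed_closedTile (q : Pt × Fin k) : IsClosed (closedTile sz q) :=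
  isClosed_Icc.prod isClosed_Icc

lemma frontier_closedTile_subset (q : Pt × Fin k) : frontier (closedTile sz q) ⊆
    {z | z.2 = q.1.2 ∨ z.2 = q.1.2 + (sz q.2).2 ∨ z.1 = q.1.1 ∨ z.1 = q.1.1 + (sz q.2).1} := by
  intro z hz
  rw [closedTile, frontier_prod_eq, closure_Icc, closure_Icc] at hz
  rcases hz with ⟨-, hz⟩ | ⟨hz, -⟩ <;>
    rw [frontier, closure_Icc, interior_Icc, Set.mem_sdiff, mem_Icc, mem_Ioo] at hz
  · rcases hz.1.1.eq_or_lt with h | h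
    · exact .inl h.symm
    · exact .inr (.inl (hz.1.2.eq_of_not_lt fun h' => hz.2 ⟨h, h'⟩))
  · rcases hz.1.1.eq_or_lt with h | h
    · exact .inr (.inr (.inl h.symm))
    · exact .inr (.inr (.inr (hz.1.2.eq_of_not_lt fun h' => hz.2 ⟨h, h'⟩)))

def placedTile (sz : Fin k → ℝ × ℝ) (q : Pt × Fin k) : Set Pt :=
  (· - q.1) ⁻¹' rect (sz q.2).1 (sz q.2).2

lemma placedTile_subset_closedTile (q : Pt × Fin k) : placedTile sz q ⊆ closedTile sz q := by
  rintro z ⟨⟨h₁, h₂⟩, h₃, h₄⟩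
  simp only [Prod.fst_sub, Prod.snd_sub] at h₁ h₂ h₃ h₄
  exact ⟨⟨by linarith, by linarith⟩, by linarith, by linarith⟩

lemma measurableSet_placedTile (q : Pt × Fin k) : MeasurableSet (placedTile sz q) :=
  (measurableSet_Ico.prod measurableSet_Ico).preimage (measurable_id.sub_const _)

lemma volume_placedTile (q : Pt × Fin k) :
    volume (placedTile sz q) = ENNReal.ofReal (sz q.2).1 * ENNReal.ofReal (sz q.2).2 := by
  simp only [placedTile, sub_eq_add_neg]
  rw [measure_preimage_add_right, rect, Measure.volume_eq_prod, Measure.prod_prod,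
    Real.volume_Ico, Real.volume_Ico, sub_zero, sub_zero]

lemma IsTiling.pairwiseDisjoint_placedTile {P : Set (Pt × Fin k)} (hP : IsTiling sz P) :
    P.PairwiseDisjoint (placedTile sz) := by
  intro q hq q' hq' hne
  refine disjoint_left.2 fun z hz hz' => hne ?_
  obtain ⟨_, -, huniq⟩ := hP z
  exact (huniq q ⟨hq, hz⟩).trans (huniq q' ⟨hq', hz'⟩).symm

theorem exists_card_le_of_forall_mem_closedBall (hsz : ∀ j, 0 < (sz j).1 ∧ 0 < (sz j).2)
    (r : ℝ) : ∃ N : ℕ, ∀ P, IsTiling sz P → ∀ (c : Pt) (F : Finset (Pt × Fin k)), ↑F ⊆ P →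
      (∀ q ∈ F, q.1 ∈ closedBall c r) → F.card ≤ N := by
  obtain ⟨D, hD⟩ := exists_closedTile_subset_closedBall sz
  obtain ⟨δ, hδ, hδle⟩ : ∃ δ > 0, ∀ j, δ ≤ (sz j).1 * (sz j).2 := by
    rcases isEmpty_or_nonempty (Fin k) with _ | _
    · exact ⟨1, one_pos, isEmptyElim⟩
    · obtain ⟨j₀, hj₀⟩ := Finite.exists_min fun j => (sz j).1 * (sz j).2
      exact ⟨_, mul_pos (hsz j₀).1 (hsz j₀).2, hj₀⟩
  set R := |r| + |D|
  refine ⟨⌊2 * R * (2 * R) / δ⌋₊, fun P hP c F hFP hFc => Nat.le_floor ?_⟩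
  -- the disjoint tiles of `F` have area at least `δ` each and lie in `closedBall c R`
  have hvol : (F.card : ℝ≥0∞) * ENNReal.ofReal δ ≤ volume (closedBall c R) := calc
    _ = ∑ _q ∈ F, ENNReal.ofReal δ := by rw [Finset.sum_const, nsmul_eq_mul]
    _ ≤ ∑ q ∈ F, volume (placedTile sz q) := Finset.sum_le_sum fun q _ => by
        rw [volume_placedTile, ← ENNReal.ofReal_mul (hsz _).1.le]
        exact ENNReal.ofReal_le_ofReal (hδle _)
    _ = volume (⋃ q ∈ F, placedTile sz q) :=
        (measure_biUnion_finset (hP.pairwiseDisjoint_placedTile.subset hFP)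
          fun q _ => measurableSet_placedTile q).symm
    _ ≤ volume (closedBall c R) := measure_mono <| iUnion₂_subset fun q hq =>
        (placedTile_subset_closedTile q).trans <| (hD q).trans <| closedBall_subset_closedBall' <|
          by linarith [le_abs_self r, le_abs_self D, mem_closedBall.1 (hFc q hq)]
  have hR : 0 ≤ 2 * R := by positivity
  rw [← closedBall_prod_same c.1 c.2, Measure.volume_eq_prod, Measure.prod_prod,
    Real.volume_closedBall, Real.volume_closedBall, ← ENNReal.ofReal_mul hR,
    ← ENNReal.ofReal_natCast, ← ENNReal.ofReal_mul (Nat.cast_nonneg _),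
    ENNReal.ofReal_le_ofReal_iff (mul_nonneg hR hR)] at hvol
  rwa [le_div_iff₀ hδ]

lemma IsTiling.finite_setOf_mem_of_isBounded (hsz : ∀ j, 0 < (sz j).1 ∧ 0 < (sz j).2)
    {P : Set (Pt × Fin k)} (hP : IsTiling sz P) {A : Set Pt} (hA : Bornology.IsBounded A) :
    {q ∈ P | q.1 ∈ A}.Finite := by
  obtain ⟨r, hAr⟩ := hA.subset_closedBall 0
  obtain ⟨N, hN⟩ := exists_card_le_of_forall_mem_closedBall hsz r
  by_contra hinf
  obtain ⟨F, hF, hcard⟩ := Set.Infinite.exists_subset_card_eq hinf (N + 1)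
  have := hN P hP 0 F (fun q hq => (hF hq).1) fun q hq => hAr (hF hq).2
  omega

lemma IsTiling.isClosed_bdry (hsz : ∀ j, 0 < (sz j).1 ∧ 0 < (sz j).2)
    {P : Set (Pt × Fin k)} (hP : IsTiling sz P) : IsClosed (bdry sz P) := by
  obtain ⟨D, hD⟩ := exists_closedTile_subset_closedBall sz
  have hlf : LocallyFinite fun q : P => frontier (closedTile sz q) := by
    intro z
    refine ⟨closedBall z 1, closedBall_mem_nhds z one_pos,
      ((hP.finite_setOf_mem_of_isBounded hsz (isBounded_closedBall (x := z) (r := D + 1))).preimage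
        Subtype.val_injective.injOn).subset ?_⟩
    rintro ⟨q, hq⟩ ⟨w, hwq, hwz⟩
    have hwq' := hD q ((isClosed_closedTile q).frontier_subset hwq)
    refine ⟨hq, (dist_triangle q.1 w z).trans ?_⟩
    linarith [mem_closedBall.1 hwz, dist_comm q.1 w ▸ mem_closedBall.1 hwq']
  simpa only [bdry, biUnion_eq_iUnion] using hlf.isClosed_iUnion fun _ => isClosed_frontier

lemma mem_frontier_closedTile {q : Pt × Fin k} {z : Pt} :
    z ∈ frontier (closedTile sz q) ↔ z - q.1 ∈ frontier (closedTile sz (0, q.2)) := by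
  have h : closedTile sz q = Homeomorph.addRight (-q.1) ⁻¹' closedTile sz (0, q.2) := by
    ext z
    simp only [closedTile, Homeomorph.coe_addRight, mem_preimage, mem_prod, mem_Icc,
      Prod.fst_add, Prod.snd_add, Prod.fst_neg, Prod.snd_neg, Prod.fst_zero, Prod.snd_zero]
    constructor <;> rintro ⟨⟨h₁, h₂⟩, h₃, h₄⟩ <;>
      exact ⟨⟨by linarith, by linarith⟩, by linarith, by linarith⟩
  rw [h, ← Homeomorph.preimage_frontier, mem_preimage, Homeomorph.coe_addRight, sub_eq_add_neg]

lemma mem_bdry_iff {P : Set (Pt × Fin k)} {z : Pt} :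
    z ∈ bdry sz P ↔ ∃ q ∈ P, z - q.1 ∈ frontier (closedTile sz (0, q.2)) := by
  simp only [bdry, mem_iUnion₂, exists_prop]
  exact exists_congr fun q => and_congr_right fun _ => mem_frontier_closedTile

lemma measurableSet_setOf_bdry_inter_nonempty {U : Set Pt} (hU : IsOpen U) :
    MeasurableSet {x : Tilings sz | (bdry sz x.val ∩ U).Nonempty} := by
  have h : {x : Tilings sz | (bdry sz x.val ∩ U).Nonempty} = ⋃ j : Fin k,
      {x : Tilings sz | ∃ q ∈ x.val, q.1 ∈ U - frontier (closedTile sz (0, j)) ∧ q.2 = j} := by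
    ext x
    simp only [mem_ofPred_eq, mem_iUnion, Set.Nonempty, mem_inter_iff, mem_bdry_iff, Set.mem_sub]
    constructor
    · rintro ⟨z, ⟨q, hq, hz⟩, hzU⟩
      exact ⟨q.2, q, hq, ⟨z, hzU, _, hz, sub_sub_cancel z q.1⟩, rfl⟩
    · rintro ⟨j, q, hq, ⟨z, hzU, e, he, hze⟩, rfl⟩
      have hze : z - e = q.1 := hze
      exact ⟨z, ⟨q, hq, by rwa [← hze, sub_sub_cancel]⟩, hzU⟩
  rw [h]
  exact .iUnion fun j => MeasurableSpace.measurableSet_generateFrom ⟨_, j, hU.sub_right, rfl⟩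

lemma bdry_S (v : Pt) (x : Tilings sz) : bdry sz (S sz v x).val = (· + v) ⁻¹' bdry sz x.val := by
  ext z
  simp only [S, trSet, mem_preimage, mem_bdry_iff, mem_image, exists_exists_and_eq_and]
  refine exists_congr fun q => and_congr_right fun _ => ?_
  rw [sub_sub_eq_add_sub]

theorem exists_card_le_of_forall_segment_subset_bdry (hsz : ∀ j, 0 < (sz j).1 ∧ 0 < (sz j).2) :
    ∃ N : ℕ, ∀ P, IsTiling sz P → ∀ (y : ℝ) (F : Finset ℝ),
      (∀ a ∈ F, a ∈ Icc 0 1 ∧ {a} ×ˢ Icc y (y + 1) ⊆ bdry sz P) → F.card ≤ N := by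
  classical
  obtain ⟨D, hD⟩ := exists_closedTile_subset_closedBall sz
  obtain ⟨N, hN⟩ := exists_card_le_of_forall_mem_closedBall hsz (D + 1)
  refine ⟨N + N, fun P hP y F hF => ?_⟩
  have hT := hP.finite_setOf_mem_of_isBounded hsz (isBounded_closedBall (x := (0, y)) (r := D + 1))
  set T := hT.toFinset
  have hTN : T.card ≤ N :=
    hN P hP _ T (fun q hq => (hT.mem_toFinset.1 hq).1) fun q hq => (hT.mem_toFinset.1 hq).2
  -- at a height `y₀` avoiding the horizontal edges of `T`, a boundary point lies on a vertical edge
  obtain ⟨y₀, hy₀, hy₀T⟩ := ((Ioo_infinite (lt_add_one y)).sdiff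
    (T.image (·.1.2) ∪ T.image fun q => q.1.2 + (sz q.2).2).finite_toSet).nonempty
  have hFT : F ⊆ T.image (·.1.1) ∪ T.image fun q => q.1.1 + (sz q.2).1 := by
    intro a ha
    obtain ⟨ha01, hseg⟩ := hF a ha
    obtain ⟨q, hqP, hfr⟩ := mem_iUnion₂.1 (hseg (mk_mem_prod rfl (Ioo_subset_Icc_self hy₀)))
    have hqT : q ∈ T := by
      refine hT.mem_toFinset.2 ⟨hqP, (dist_triangle q.1 (a, y₀) (0, y)).trans ?_⟩
      have h₁ := dist_comm q.1 (a, y₀) ▸ mem_closedBall.1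
        (hD q ((isClosed_closedTile q).frontier_subset hfr))
      have h₂ : dist (a, y₀) ((0, y) : Pt) ≤ 1 := by
        rw [Prod.dist_eq, Real.dist_eq, Real.dist_eq]
        exact max_le (abs_le.2 ⟨by linarith [ha01.1], by linarith [ha01.2]⟩)
          (abs_le.2 ⟨by linarith [hy₀.1], by linarith [hy₀.2]⟩)
      linarith
    rcases frontier_closedTile_subset q hfr with hy | hy | hx | hx
    · exact absurd (Finset.mem_union_left _ (Finset.mem_image.2 ⟨q, hqT, hy.symm⟩)) hy₀T
    · exact absurd (Finset.mem_union_right _ (Finset.mem_image.2 ⟨q, hqT, hy.symm⟩)) hy₀T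
    · exact Finset.mem_union_left _ (Finset.mem_image.2 ⟨q, hqT, hx.symm⟩)
    · exact Finset.mem_union_right _ (Finset.mem_image.2 ⟨q, hqT, hx.symm⟩)
  calc F.card ≤ _ := Finset.card_le_card hFT
    _ ≤ _ := Finset.card_union_le _ _
    _ ≤ N + N := add_le_add (Finset.card_image_le.trans hTN) (Finset.card_image_le.trans hTN)

theorem exists_card_le_of_subset_rayColumns_bdry (hsz : ∀ j, 0 < (sz j).1 ∧ 0 < (sz j).2) :
    ∃ N : ℕ, ∀ P, IsTiling sz P → ∀ F : Finset ℝ,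
      ↑F ⊆ rayColumns (bdry sz P) ∩ Icc 0 1 → F.card ≤ N := by
  classical
  obtain ⟨N, hN⟩ := exists_card_le_of_forall_segment_subset_bdry hsz
  refine ⟨N + N, fun P hP F hF => ?_⟩
  set seg : ℝ → ℝ → Prop := fun a y => {a} ×ˢ Icc y (y + 1) ⊆ bdry sz P
  -- upward rays contain the segments at all large heights, downward rays at all small ones
  have hcount : ∀ (l : Filter ℝ) [l.NeBot] (G : Finset ℝ), G ⊆ F →
      (∀ a ∈ G, ∀ᶠ y in l, seg a y) → G.card ≤ N := by
    intro l _ G hGF hG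
    obtain ⟨y, hy⟩ := ((Filter.eventually_all_finset G).2 hG).exists
    exact hN P hP y G fun a ha => ⟨(hF (hGF ha)).2, hy a ha⟩
  have hdown : ∀ a ∈ F, ¬(∀ᶠ y in atTop, seg a y) → ∀ᶠ y in atBot, seg a y := by
    intro a ha hup
    obtain ⟨m, hm | hm⟩ := (hF ha).1
    · exact absurd ((eventually_ge_atTop m).mono fun y hy =>
        (Set.prod_mono le_rfl fun z hz => hy.trans hz.1).trans hm) hup
    · exact (eventually_le_atBot (m - 1)).mono fun y hy =>
        (Set.prod_mono le_rfl fun z hz => show z ≤ m by linarith [hz.2]).trans hm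
  rw [← Finset.card_filter_add_card_filter_not fun a => ∀ᶠ y in atTop, seg a y]
  exact add_le_add
    (hcount atTop _ (Finset.filter_subset _ _) fun a ha => (Finset.mem_filter.1 ha).2)
    (hcount atBot _ (Finset.filter_subset _ _) fun a ha =>
      hdown a (Finset.mem_filter.1 ha).1 (Finset.mem_filter.1 ha).2)

def transposeEquiv (k : ℕ) : (Pt × Fin k) ≃ (Pt × Fin k) :=
  (Equiv.prodComm ℝ ℝ).prodCongr (Equiv.refl (Fin k))

lemma IsTiling.transpose {P : Set (Pt × Fin k)} (hP : IsTiling sz P) :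
    IsTiling (fun j => (sz j).swap) (transposeEquiv k ⁻¹' P) := by
  intro z
  rw [← (transposeEquiv k).existsUnique_congr_right]
  refine (existsUnique_congr fun q => ?_).1 (hP z.swap)
  simp only [transposeEquiv, Equiv.prodCongr_apply, Equiv.coe_prodComm, Equiv.coe_refl,
    Prod.map_fst, Prod.map_snd, id_eq, mem_preimage, rect, mem_prod, Prod.fst_sub, Prod.snd_sub,
    Prod.fst_swap, Prod.snd_swap]
  tauto

def transpose (x : Tilings sz) : Tilings fun j => (sz j).swap :=
  ⟨transposeEquiv k ⁻¹' x.val, x.2.transpose⟩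

lemma measurable_transpose : Measurable (transpose (sz := sz)) := by
  refine measurable_generateFrom fun s ⟨U, j, hU, hs⟩ => ?_
  have h : transpose ⁻¹' s = {x : Tilings sz | ∃ q ∈ x.val, q.1 ∈ Prod.swap ⁻¹' U ∧ q.2 = j} := by
    subst hs
    ext x
    exact (transposeEquiv k).exists_congr_right (q := fun q => q ∈ x.val ∧ q.1.swap ∈ U ∧ q.2 = j)
  rw [h]
  exact MeasurableSpace.measurableSet_generateFrom ⟨_, j, hU.preimage continuous_swap, rfl⟩

lemma mem_trSet {v : Pt} {P : Set (Pt × Fin k)} {q : Pt × Fin k} :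
    q ∈ trSet v P ↔ (q.1 + v, q.2) ∈ P :=
  ⟨fun ⟨r, hr, hrq⟩ => by simpa [← hrq] using hr, fun h => ⟨_, h, by simp⟩⟩

lemma transpose_S (v : Pt) (x : Tilings sz) : transpose (S sz v x) = S _ v.swap (transpose x) := by
  refine Subtype.ext (Set.ext fun q => ?_)
  simp [transpose, S, mem_trSet, transposeEquiv, Prod.swap_add]

lemma closedTile_transpose (q : Pt × Fin k) :
    closedTile (fun j => (sz j).swap) q = Prod.swap ⁻¹' closedTile sz (transposeEquiv k q) := by
  rw [closedTile, closedTile, preimage_swap_prod]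
  rfl

lemma bdry_transpose (x : Tilings sz) :
    bdry (fun j => (sz j).swap) (transpose x).val = Prod.swap ⁻¹' bdry sz x.val := by
  ext z
  simp only [bdry, mem_preimage, mem_iUnion₂, exists_prop]
  refine Iff.trans ?_ (transposeEquiv k).exists_congr_right
  refine exists_congr fun q => and_congr_right fun _ => ?_
  rw [closedTile_transpose, ← Homeomorph.coe_prodComm, ← Homeomorph.preimage_frontier,
    mem_preimage]

end Tiling2

open Tiling2

/-- if a translation-invariant probability measure `μ` on the space of
tilings of `ℝ²` by a finite list of half-open rectangular tiles is ergodic for the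
horizontal flow and ergodic for the vertical flow, then the set of tilings containing
an infinite (semi-infinite or bi-infinite) shear is `μ`-null. -/
theorem infinite_shears_null_of_directionally_ergodic {k : ℕ} (sz : Fin k → ℝ × ℝ)
    (hsz : ∀ j, 0 < (sz j).1 ∧ 0 < (sz j).2)
    (μ : Measure (Tilings sz)) [IsProbabilityMeasure μ]
    (hinv : ∀ v : Pt, MeasurePreserving (S sz v) μ μ)
    (hergH : ∀ E : Set (Tilings sz), MeasurableSet E →
      (∀ t : ℝ, S sz (t, 0) ⁻¹' E = E) → μ E = 0 ∨ μ E = 1)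
    (hergV : ∀ E : Set (Tilings sz), MeasurableSet E →
      (∀ t : ℝ, S sz (0, t) ⁻¹' E = E) → μ E = 0 ∨ μ E = 1) :
    ∃ N : Set (Tilings sz), MeasurableSet N ∧ μ N = 0 ∧
      {x : Tilings sz | ∃ ℓ : Set Pt, IsShear sz x.val ℓ ∧
        (SemiInfinite ℓ ∨ BiInfinite ℓ)} ⊆ N := by
  obtain ⟨n, hn⟩ := exists_card_le_of_subset_rayColumns_bdry hsz
  obtain ⟨n', hn'⟩ := exists_card_le_of_subset_rayColumns_bdry
    (sz := fun j => (sz j).swap) fun j => (hsz j).symm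
  have hV : μ {x | (rayColumns (bdry sz x.val)).Nonempty} = 0 :=
    measure_setOf_rayColumns_nonempty_eq_zero (T := fun t => S sz (t, 0))
      (V := fun t => S sz (0, t)) (fun x => x.2.isClosed_bdry hsz) (fun _ => measurableSet_setOf_bdry_inter_nonempty)
      (fun t => hinv (t, 0)) (fun t => bdry_S _) (fun t => bdry_S _) hergV fun x => hn _ x.2
  have hH : μ {x | (rayColumns (Prod.swap ⁻¹' bdry sz x.val)).Nonempty} = 0 := by
    simp_rw [← bdry_transpose]
    exact measure_setOf_rayColumns_nonempty_eq_zero (T := fun t => S sz (0, t))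
      (V := fun t => S sz (t, 0)) (fun x => (transpose x).2.isClosed_bdry fun j => (hsz j).symm)
      (fun _ hU => measurable_transpose (measurableSet_setOf_bdry_inter_nonempty hU))
      (fun t => hinv (0, t)) (fun t x => by rw [transpose_S, bdry_S]; rfl)
      (fun t x => by rw [transpose_S, bdry_S]; rfl) hergH fun x => hn' _ (transpose x).2
  refine ⟨toMeasurable μ _, measurableSet_toMeasurable _ _,
    (measure_toMeasurable _).trans (measure_union_null hV hH), ?_⟩
  rintro x ⟨ℓ, hℓ, hinf⟩
  exact subset_toMeasurable _ _ (rayColumns_nonempty_of_subset hℓ.2.1 hinf)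
end

section
/- Let A and B be half-open rectangular tiles of dimensions w_A × h_A and w_B × h_B in ℝ². Suppose there exists a probability measure on Y_{A,B} invariant under the translation action and ergodic in both coordinate directions (ergodic for the horizontal flow (S_{t e₁}) and for the vertical flow (S_{t e₂})). Then h_A/h_B ∉ ℚ and w_A/w_B ∉ ℚ. -/
open Set MeasureTheory

open Tiling2

namespace TwoRect

variable {k : ℕ} {sz : Fin k → ℝ × ℝ}

lemma mem_rect {w h : ℝ} {x : Pt} :
    x ∈ rect w h ↔ (0 ≤ x.1 ∧ x.1 < w) ∧ (0 ≤ x.2 ∧ x.2 < h) := by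
  simp [rect, Set.mem_prod, Set.mem_Ico, and_assoc]

noncomputable def tileAt (P : Tilings sz) (x : Pt) : Pt × Fin k :=
  (P.2 x).exists.choose

lemma tileAt_mem (P : Tilings sz) (x : Pt) : tileAt P x ∈ P.1 :=
  (P.2 x).exists.choose_spec.1

lemma tileAt_cont (P : Tilings sz) (x : Pt) :
    x - (tileAt P x).1 ∈ rect (sz (tileAt P x).2).1 (sz (tileAt P x).2).2 :=
  (P.2 x).exists.choose_spec.2

lemma tileAt_eq (P : Tilings sz) {x : Pt} {q : Pt × Fin k} (hq : q ∈ P.1)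
    (hx : x - q.1 ∈ rect (sz q.2).1 (sz q.2).2) : q = tileAt P x := by
  obtain ⟨y, -, huniq⟩ := P.2 x
  rw [huniq q ⟨hq, hx⟩, huniq (tileAt P x) ⟨tileAt_mem P x, tileAt_cont P x⟩]

lemma tileAt_coords (P : Tilings sz) (x : Pt) :
    ((tileAt P x).1.1 ≤ x.1 ∧ x.1 < (tileAt P x).1.1 + (sz (tileAt P x).2).1) ∧
      ((tileAt P x).1.2 ≤ x.2 ∧ x.2 < (tileAt P x).1.2 + (sz (tileAt P x).2).2) := by
  have h := tileAt_cont P x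
  rw [mem_rect] at h
  obtain ⟨⟨h1, h2⟩, h3, h4⟩ := h
  simp only [Prod.fst_sub, Prod.snd_sub] at h1 h2 h3 h4
  constructor <;> constructor <;> linarith

end TwoRect

namespace TwoRect

variable {k : ℕ} {sz : Fin k → ℝ × ℝ}

lemma tileAt_coords' (P : Tilings sz) (a b : ℝ) :
    ((tileAt P (a,b)).1.1 ≤ a ∧ a < (tileAt P (a,b)).1.1 + (sz (tileAt P (a,b)).2).1) ∧
      ((tileAt P (a,b)).1.2 ≤ b ∧ b < (tileAt P (a,b)).1.2 + (sz (tileAt P (a,b)).2).2) :=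
  tileAt_coords P (a,b)

lemma mem_rect' {w h a b : ℝ} {p : Pt} :
    ((a,b) : Pt) - p ∈ rect w h ↔
      (0 ≤ a - p.1 ∧ a - p.1 < w) ∧ (0 ≤ b - p.2 ∧ b - p.2 < h) :=
  mem_rect

lemma same_tile_v (P : Tilings sz) {c y y' : ℝ}
    (h1 : (tileAt P (c,y)).1.2 ≤ y')
    (h2 : y' < (tileAt P (c,y)).1.2 + (sz (tileAt P (c,y)).2).2) :
    tileAt P (c, y') = tileAt P (c, y) := by
  refine (tileAt_eq P (tileAt_mem P (c,y)) ?_).symm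
  rw [mem_rect']
  obtain ⟨⟨ha1, ha2⟩, -, -⟩ := tileAt_coords' P c y
  exact ⟨⟨by linarith, by linarith⟩, by linarith, by linarith⟩

lemma same_tile_h (P : Tilings sz) {c c' y : ℝ}
    (h1 : (tileAt P (c,y)).1.1 ≤ c')
    (h2 : c' < (tileAt P (c,y)).1.1 + (sz (tileAt P (c,y)).2).1) :
    tileAt P (c', y) = tileAt P (c, y) := by
  refine (tileAt_eq P (tileAt_mem P (c,y)) ?_).symm
  rw [mem_rect']
  obtain ⟨-, hb1, hb2⟩ := tileAt_coords' P c y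
  exact ⟨⟨by linarith, by linarith⟩, by linarith, by linarith⟩

section Chain

variable {u ε : ℝ}

lemma adj_v (hh : ∀ i, 0 < (sz i).2) (P : Tilings sz) (c y : ℝ) :
    (tileAt P (c, (tileAt P (c,y)).1.2 + (sz (tileAt P (c,y)).2).2)).1.2
      = (tileAt P (c,y)).1.2 + (sz (tileAt P (c,y)).2).2 := by
  obtain ⟨⟨hxa, hxb⟩, hya, hyb⟩ := tileAt_coords' P c y
  set q := tileAt P (c, y) with hqdef
  set T := q.1.2 + (sz q.2).2 with hT
  obtain ⟨⟨hxa', hxb'⟩, hya', hyb'⟩ := tileAt_coords' P c T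
  set q' := tileAt P (c, T) with hq'def
  rcases eq_or_lt_of_le hya' with h | h
  · exact h
  · exfalso
    have hHq : 0 < (sz q.2).2 := hh _
    have hHq' : 0 < (sz q'.2).2 := hh _
    obtain ⟨r, -, hr⟩ := P.2 ((c, max q.1.2 q'.1.2) : Pt)
    have e1 : q = r := by
      refine hr q ⟨tileAt_mem P (c,y), ?_⟩
      rw [mem_rect']
      have hmax : max q.1.2 q'.1.2 < q.1.2 + (sz q.2).2 :=
        max_lt (by linarith) h
      exact ⟨⟨by linarith, by linarith⟩,
        by simp [le_max_left], by linarith [le_max_left q.1.2 q'.1.2]⟩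
    have e2 : q' = r := by
      refine hr q' ⟨tileAt_mem P (c,T), ?_⟩
      rw [mem_rect']
      have hmax : max q.1.2 q'.1.2 < q'.1.2 + (sz q'.2).2 :=
        max_lt (by linarith) (by linarith)
      exact ⟨⟨by linarith, by linarith⟩,
        by simp [le_max_right], by linarith [le_max_right q.1.2 q'.1.2]⟩
    have e3 : q = q' := e1.trans e2.symm
    rw [← e3] at hyb'
    exact absurd hyb' (lt_irrefl T)

lemma bot_congr_le (hhu : ∀ i, ∃ z : ℤ, (sz i).2 = z * u) (hhε : ∀ i, ε ≤ (sz i).2)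
    (hε : 0 < ε) (P : Tilings sz) (c : ℝ) {s t : ℝ} (hst : s ≤ t) :
    ∃ z : ℤ, (tileAt P (c,t)).1.2 - (tileAt P (c,s)).1.2 = z * u := by
  classical
  have hh : ∀ i, 0 < (sz i).2 := fun i => lt_of_lt_of_le hε (hhε i)
  set B : ℝ → ℝ := fun y => (tileAt P (c,y)).1.2 with hBdef
  set H : ℝ → ℝ := fun y => (sz (tileAt P (c,y)).2).2 with hHdef
  have hHε : ∀ y, ε ≤ H y := fun y => hhε _
  have hBle : ∀ y, B y ≤ y ∧ y < B y + H y := fun y => (tileAt_coords' P c y).2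
  have adj : ∀ y, B (B y + H y) = B y + H y := fun y => adj_v hh P c y
  let g : ℕ → ℝ := fun n => Nat.rec (B s) (fun _ y => y + H y) n
  have hg0 : g 0 = B s := rfl
  have hgsucc : ∀ n, g (n+1) = g n + H (g n) := fun n => rfl
  have hBg : ∀ n, B (g n) = g n := by
    intro n
    induction n with
    | zero =>
      show B (B s) = B s
      have heq : tileAt P (c, B s) = tileAt P (c, s) := by
        refine same_tile_v P (le_refl _) ?_
        have h1 := (hBle s).1
        have h2 := hHε s
        show (tileAt P (c,s)).1.2 < (tileAt P (c,s)).1.2 + (sz (tileAt P (c,s)).2).2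
        have : ε ≤ (sz (tileAt P (c,s)).2).2 := hhε _
        linarith
      show (tileAt P (c, B s)).1.2 = B s
      rw [heq]
    | succ n ih =>
      rw [hgsucc]
      have h2 := adj (g n)
      rw [ih] at h2
      exact h2
  have hmono : ∀ n, B s + n * ε ≤ g n := by
    intro n
    induction n with
    | zero => simp [hg0]
    | succ n ih =>
      rw [hgsucc]
      have := hHε (g n)
      push_cast
      nlinarith
  have hcong : ∀ n, ∃ z : ℤ, g n - g 0 = z * u := by
    intro n
    induction n with
    | zero => exact ⟨0, by simp⟩
    | succ n ih =>
      obtain ⟨z, hz⟩ := ih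
      obtain ⟨z', hz'⟩ := hhu (tileAt P (c, g n)).2
      refine ⟨z + z', ?_⟩
      rw [hgsucc]
      have h3 : H (g n) = (z' : ℝ) * u := hz'
      push_cast
      linarith
  have hex : ∃ N, t < g N := by
    obtain ⟨N, hN⟩ := exists_nat_gt ((t - B s)/ε)
    refine ⟨N, ?_⟩
    have h1 : t - B s < N * ε := by
      rw [div_lt_iff₀ hε] at hN
      linarith
    have := hmono N
    linarith
  have hcover : ∀ N t', s ≤ t' → t' < g N → ∃ m, g m ≤ t' ∧ t' < g (m+1) := by
    intro N
    induction N with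
    | zero =>
      intro t' hst' hlt
      rw [hg0] at hlt
      have h1 := (hBle s).1
      exact absurd hlt (by linarith)
    | succ N ih =>
      intro t' hst' hlt
      rcases Classical.em (t' < g N) with hc | hc
      · exact ih t' hst' hc
      · exact ⟨N, le_of_not_gt hc, hlt⟩
  obtain ⟨N, hN⟩ := hex
  obtain ⟨m, hm, hm2⟩ := hcover N t hst hN
  have heq : tileAt P (c, t) = tileAt P (c, g m) := by
    refine same_tile_v P ?_ ?_
    · show B (g m) ≤ t
      rw [hBg]; exact hm
    · show t < B (g m) + H (g m)
      rw [hBg]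
      rw [← hgsucc]
      exact hm2
  have hBt : (tileAt P (c,t)).1.2 = g m := by
    rw [heq]
    exact hBg m
  obtain ⟨z, hz⟩ := hcong m
  rw [hg0] at hz
  exact ⟨z, by rw [hBt]; linarith⟩

lemma bot_congr (hhu : ∀ i, ∃ z : ℤ, (sz i).2 = z * u) (hhε : ∀ i, ε ≤ (sz i).2)
    (hε : 0 < ε) (P : Tilings sz) (c s t : ℝ) :
    ∃ z : ℤ, (tileAt P (c,t)).1.2 - (tileAt P (c,s)).1.2 = z * u := by
  rcases le_total s t with h | h
  · exact bot_congr_le hhu hhε hε P c h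
  · obtain ⟨z, hz⟩ := bot_congr_le hhu hhε hε P c h
    exact ⟨-z, by push_cast; linarith⟩

end Chain

end TwoRect

namespace TwoRect

variable {k : ℕ} {sz : Fin k → ℝ × ℝ}

lemma S_S (v w : Pt) (P : Tilings sz) : S sz v (S sz w P) = S sz (w + v) P := by
  apply Subtype.ext
  show trSet v (trSet w P.1) = trSet (w + v) P.1
  unfold Tiling2.trSet
  rw [← Set.image_comp]
  congr 1
  funext q
  simp [Function.comp, sub_sub]

lemma tileAt_S (v : Pt) (P : Tilings sz) (x : Pt) :
    tileAt (S sz v P) x = ((tileAt P (x+v)).1 - v, (tileAt P (x+v)).2) := by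
  refine (tileAt_eq (S sz v P) ?_ ?_).symm
  · exact ⟨tileAt P (x+v), tileAt_mem P (x+v), rfl⟩
  · show x - ((tileAt P (x+v)).1 - v) ∈ rect _ _
    have h : x - ((tileAt P (x+v)).1 - v) = (x+v) - (tileAt P (x+v)).1 := by abel
    rw [h]
    exact tileAt_cont P (x+v)

lemma tile_eq_of_close {εw εh : ℝ} (hεw0 : 0 < εw) (hεh0 : 0 < εh)
    (hεw : ∀ i, εw ≤ (sz i).1) (hεh : ∀ i, εh ≤ (sz i).2)
    (P : Tilings sz) {q q' : Pt × Fin k} (hq : q ∈ P.1) (hq' : q' ∈ P.1)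
    (hx : |q.1.1 - q'.1.1| < εw) (hy : |q.1.2 - q'.1.2| < εh) : q = q' := by
  obtain ⟨r, -, hr⟩ := P.2 ((max q.1.1 q'.1.1, max q.1.2 q'.1.2) : Pt)
  rw [abs_lt] at hx hy
  have hwq := hεw q.2; have hhq := hεh q.2
  have hwq' := hεw q'.2; have hhq' := hεh q'.2
  have e1 : q = r := by
    refine hr q ⟨hq, ?_⟩
    rw [mem_rect']
    rcases le_total q.1.1 q'.1.1 with h | h <;> rcases le_total q.1.2 q'.1.2 with h' | h' <;>
      simp only [max_eq_right, max_eq_left, h, h'] <;>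
      exact ⟨⟨by linarith [le_max_left q.1.1 q'.1.1], by linarith [max_lt (show q.1.1 < q.1.1 + (sz q.2).1 by linarith) (show q'.1.1 < q.1.1 + (sz q.2).1 by linarith)]⟩,
        by linarith [le_max_left q.1.2 q'.1.2], by linarith [max_lt (show q.1.2 < q.1.2 + (sz q.2).2 by linarith) (show q'.1.2 < q.1.2 + (sz q.2).2 by linarith)]⟩
  have e2 : q' = r := by
    refine hr q' ⟨hq', ?_⟩
    rw [mem_rect']
    exact ⟨⟨by linarith [le_max_right q.1.1 q'.1.1], by linarith [max_lt (show q.1.1 < q'.1.1 + (sz q'.2).1 by linarith) (show q'.1.1 < q'.1.1 + (sz q'.2).1 by linarith)]⟩,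
      by linarith [le_max_right q.1.2 q'.1.2], by linarith [max_lt (show q.1.2 < q'.1.2 + (sz q'.2).2 by linarith) (show q'.1.2 < q'.1.2 + (sz q'.2).2 by linarith)]⟩
  exact e1.trans e2.symm

lemma abs_sub_lt_of_floor_eq {x y c : ℝ} (hc : 0 < c) (h : ⌊x/c⌋ = ⌊y/c⌋) :
    |x - y| < c := by
  have h1 : x/c - y/c = Int.fract (x/c) - Int.fract (y/c) := by
    unfold Int.fract
    rw [h]; ring
  have h2 : |x/c - y/c| < 1 := by
    rw [h1, abs_lt]
    constructor <;>
      linarith [Int.fract_nonneg (x/c), Int.fract_lt_one (x/c),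
        Int.fract_nonneg (y/c), Int.fract_lt_one (y/c)]
  have h3 : x - y = (x/c - y/c) * c := by field_simp
  rw [h3, abs_mul, abs_of_pos hc]
  calc |x/c - y/c| * c < 1 * c := by exact mul_lt_mul_of_pos_right h2 hc
    _ = c := one_mul c

lemma finite_tiles_in {εw εh : ℝ} (hεw0 : 0 < εw) (hεh0 : 0 < εh)
    (hεw : ∀ i, εw ≤ (sz i).1) (hεh : ∀ i, εh ≤ (sz i).2)
    (P : Tilings sz) {B : Set Pt} (hB : Bornology.IsBounded B) :
    {q : Pt × Fin k | q ∈ P.1 ∧ q.1 ∈ B}.Finite := by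
  obtain ⟨R, hR⟩ := hB.subset_closedBall 0
  have hcoord : ∀ p : Pt, p ∈ B → |p.1| ≤ R ∧ |p.2| ≤ R := by
    intro p hp
    have := hR hp
    rw [Metric.mem_closedBall, Prod.dist_eq] at this
    constructor
    · calc |p.1| = dist p.1 (0:ℝ) := by rw [Real.dist_eq, sub_zero]
        _ ≤ _ := le_trans (le_max_left _ _) this
    · calc |p.2| = dist p.2 (0:ℝ) := by rw [Real.dist_eq, sub_zero]
        _ ≤ _ := le_trans (le_max_right _ _) this
  set f : Pt × Fin k → ℤ × ℤ := fun q => (⌊q.1.1/εw⌋, ⌊q.1.2/εh⌋) with hf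
  have hinj : Set.InjOn f {q : Pt × Fin k | q ∈ P.1 ∧ q.1 ∈ B} := by
    intro q hq q' hq' heq
    simp only [hf, Prod.mk.injEq] at heq
    exact tile_eq_of_close hεw0 hεh0 hεw hεh P hq.1 hq'.1
      (abs_sub_lt_of_floor_eq hεw0 heq.1) (abs_sub_lt_of_floor_eq hεh0 heq.2)
  refine Set.Finite.of_finite_image ?_ hinj
  refine Set.Finite.subset (Set.Finite.prod (Set.finite_Icc ⌊-R/εw⌋ ⌊R/εw⌋)
    (Set.finite_Icc ⌊-R/εh⌋ ⌊R/εh⌋)) ?_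
  rintro z ⟨q, hq, rfl⟩
  obtain ⟨h1, h2⟩ := hcoord q.1 hq.2
  rw [abs_le] at h1 h2
  constructor
  · exact ⟨Int.floor_le_floor ((div_le_div_iff_of_pos_right hεw0).mpr h1.1),
      Int.floor_le_floor ((div_le_div_iff_of_pos_right hεw0).mpr h1.2)⟩
  · exact ⟨Int.floor_le_floor ((div_le_div_iff_of_pos_right hεh0).mpr h2.1),
      Int.floor_le_floor ((div_le_div_iff_of_pos_right hεh0).mpr h2.2)⟩

end TwoRect

namespace TwoRect

variable {k : ℕ} {sz : Fin k → ℝ × ℝ}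

lemma meas_gen {U : Set Pt} (hU : IsOpen U) (j : Fin k) :
    MeasurableSet {P : Tilings sz | ∃ q ∈ P.1, q.1 ∈ U ∧ q.2 = j} :=
  MeasurableSpace.measurableSet_generateFrom ⟨U, j, hU, rfl⟩

lemma meas_exists_iInter {εw εh : ℝ} (hεw0 : 0 < εw) (hεh0 : 0 < εh)
    (hεw : ∀ i, εw ≤ (sz i).1) (hεh : ∀ i, εh ≤ (sz i).2)
    (U : ℕ → Set Pt) (ho : ∀ n, IsOpen (U n)) (ha : ∀ m n, m ≤ n → U n ⊆ U m)
    (hb : Bornology.IsBounded (U 0)) (j : Fin k) :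
    MeasurableSet {P : Tilings sz | ∃ q ∈ P.1, q.1 ∈ (⋂ n, U n) ∧ q.2 = j} := by
  have hset : {P : Tilings sz | ∃ q ∈ P.1, q.1 ∈ (⋂ n, U n) ∧ q.2 = j}
      = ⋂ n, {P : Tilings sz | ∃ q ∈ P.1, q.1 ∈ U n ∧ q.2 = j} := by
    ext P
    simp only [Set.mem_iInter, Set.mem_setOf_eq]
    constructor
    · rintro ⟨q, hqP, hqU, hqj⟩ n
      exact ⟨q, hqP, hqU n, hqj⟩
    · intro h
      choose f hf1 hf2 hf3 using h
      have hfin : {q : Pt × Fin k | q ∈ P.1 ∧ q.1 ∈ U 0}.Finite :=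
        finite_tiles_in hεw0 hεh0 hεw hεh P hb
      haveI := hfin.to_subtype
      have hrange : ∀ n, f n ∈ {q : Pt × Fin k | q ∈ P.1 ∧ q.1 ∈ U 0} :=
        fun n => ⟨hf1 n, ha 0 n (Nat.zero_le n) (hf2 n)⟩
      obtain ⟨y, hy⟩ := Finite.exists_infinite_fiber
        (fun n : ℕ => (⟨f n, hrange n⟩ : {q : Pt × Fin k | q ∈ P.1 ∧ q.1 ∈ U 0}))
      replace hy := Set.infinite_coe_iff.mp hy
      have hval : ∀ m, m ∈ (fun n : ℕ => (⟨f n, hrange n⟩ :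
          {q : Pt × Fin k | q ∈ P.1 ∧ q.1 ∈ U 0})) ⁻¹' {y} → f m = y.1 := by
        intro m hm
        have : (⟨f m, hrange m⟩ : {q : Pt × Fin k | q ∈ P.1 ∧ q.1 ∈ U 0}) = y := hm
        exact congrArg Subtype.val this
      refine ⟨y.1, y.2.1, ?_, ?_⟩
      · intro n
        obtain ⟨m, hm, hnm⟩ := hy.exists_gt n
        rw [← hval m hm]
        exact ha n m hnm.le (hf2 m)
      · obtain ⟨m, hm, -⟩ := hy.exists_gt 0
        rw [← hval m hm]
        exact hf3 m
  rw [hset]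
  exact MeasurableSet.iInter fun n => meas_gen (ho n) j

noncomputable def rho (P : Tilings sz) : ℝ := (tileAt P ((0:ℝ),(0:ℝ))).1.2

lemma forall_one_div_le {x : ℝ} (h : ∀ n : ℕ, x < 1/(n+1)) : x ≤ 0 := by
  by_contra hx
  push_neg at hx
  obtain ⟨n, hn⟩ := exists_nat_one_div_lt hx
  exact absurd (h n) (not_lt.mpr hn.le)

lemma meas_rho {εw εh : ℝ} (hεw0 : 0 < εw) (hεh0 : 0 < εh)
    (hεw : ∀ i, εw ≤ (sz i).1) (hεh : ∀ i, εh ≤ (sz i).2) :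
    Measurable (rho : Tilings sz → ℝ) := by
  apply measurable_of_Iio
  intro r
  have hset : (rho : Tilings sz → ℝ) ⁻¹' (Iio r) = ⋃ j : Fin k,
      {P : Tilings sz | ∃ q ∈ P.1, q.1 ∈
        (⋂ n : ℕ, (Ioo (-(sz j).1) (1/(n+1)) ×ˢ (Ioo (-(sz j).2) (1/(n+1)) ∩ Iio r)))
        ∧ q.2 = j} := by
    ext P
    simp only [Set.mem_preimage, Set.mem_Iio, Set.mem_iUnion, Set.mem_setOf_eq]
    constructor
    · intro hr
      refine ⟨(tileAt P ((0:ℝ),(0:ℝ))).2, tileAt P ((0:ℝ),(0:ℝ)), tileAt_mem P _, ?_, rfl⟩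
      rw [Set.mem_iInter]
      intro n
      obtain ⟨⟨ha1, ha2⟩, hb1, hb2⟩ := tileAt_coords' P 0 0
      have hpos : (0:ℝ) < 1/(n+1) := by positivity
      refine ⟨⟨by linarith, by linarith⟩, ⟨by linarith, by linarith⟩, hr⟩
    · rintro ⟨j, q, hqP, hqU, hqj⟩
      have h0 := Set.mem_iInter.mp hqU 0
      obtain ⟨⟨hx1, -⟩, ⟨hy1, -⟩, hyr⟩ := h0
      have hx2 : q.1.1 ≤ 0 := forall_one_div_le fun n => (Set.mem_iInter.mp hqU n).1.2
      have hy2 : q.1.2 ≤ 0 := forall_one_div_le fun n => ((Set.mem_iInter.mp hqU n).2.1).2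
      have heq : q = tileAt P ((0:ℝ),(0:ℝ)) := by
        refine tileAt_eq P hqP ?_
        rw [mem_rect', hqj]
        exact ⟨⟨by linarith, by linarith⟩, by linarith, by linarith⟩
      show rho P < r
      rw [rho, ← heq]
      exact hyr
  rw [hset]
  refine MeasurableSet.iUnion fun j => meas_exists_iInter hεw0 hεh0 hεw hεh _ ?_ ?_ ?_ j
  · intro n
    exact ((isOpen_Ioo).prod ((isOpen_Ioo).inter isOpen_Iio))
  · intro m n hmn
    have h1 : (1:ℝ)/(n+1) ≤ 1/(m+1) := by
      apply one_div_le_one_div_of_le (by positivity)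
      push_cast; linarith [(Nat.cast_le (α := ℝ)).mpr hmn]
    rintro p ⟨⟨hp1, hp2⟩, ⟨hp3, hp4⟩, hp5⟩
    exact ⟨⟨hp1, lt_of_lt_of_le hp2 h1⟩, ⟨hp3, lt_of_lt_of_le hp4 h1⟩, hp5⟩
  · refine Bornology.IsBounded.subset ((Metric.isBounded_Ioo (-(sz j).1) 1).prod
      (Metric.isBounded_Ioo (-(sz j).2) 1)) ?_
    rintro p ⟨⟨hp1, hp2⟩, ⟨hp3, hp4⟩, -⟩
    norm_num at hp2 hp4
    exact ⟨⟨hp1, by linarith⟩, ⟨hp3, by linarith⟩⟩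

end TwoRect

namespace TwoRect

variable {k : ℕ} {sz : Fin k → ℝ × ℝ}

lemma meas_S (v : Pt) : Measurable (S sz v : Tilings sz → Tilings sz) := by
  apply measurable_generateFrom
  rintro s ⟨U, j, hU, rfl⟩
  have hset : S sz v ⁻¹' {P : Tilings sz | ∃ q ∈ P.val, q.1 ∈ U ∧ q.2 = j}
      = {P : Tilings sz | ∃ q ∈ P.val, q.1 ∈ (fun p : Pt => p - v) ⁻¹' U ∧ q.2 = j} := by
    ext P
    simp only [Set.mem_preimage, Set.mem_setOf_eq]
    constructor
    · rintro ⟨q, hq, hqU, hqj⟩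
      obtain ⟨q', hq', rfl⟩ := hq
      exact ⟨q', hq', hqU, hqj⟩
    · rintro ⟨q, hq, hqU, hqj⟩
      exact ⟨(q.1 - v, q.2), ⟨q, hq, rfl⟩, hqU, hqj⟩
  rw [hset]
  exact meas_gen (hU.preimage (continuous_id.sub continuous_const)) j

noncomputable def theta (P : Tilings sz) (s : ℝ) : ℝ := (tileAt P (s, (0:ℝ))).1.2

noncomputable def Fc (sz : Fin k → ℝ × ℝ) (u : ℝ) (s : ℝ) (P : Tilings sz) : ℝ :=
  Int.fract (rho (S sz (s,0) P) / u)

lemma rho_S (a b : ℝ) (P : Tilings sz) :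
    rho (S sz (a,b) P) = (tileAt P (a,b)).1.2 - b := by
  show (tileAt (S sz (a,b) P) ((0:ℝ),(0:ℝ))).1.2 = _
  rw [tileAt_S]
  have h1 : ((0:ℝ),(0:ℝ)) + ((a:ℝ),(b:ℝ)) = ((a:ℝ),(b:ℝ)) := by simp
  rw [h1]
  simp [Prod.snd_sub]

lemma Fc_eq (u s : ℝ) (P : Tilings sz) : Fc sz u s P = Int.fract (theta P s / u) := by
  rw [Fc, rho_S, theta]
  norm_num

lemma Fc_S_horiz (u s t : ℝ) (P : Tilings sz) :
    Fc sz u s (S sz (t,0) P) = Fc sz u (s+t) P := by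
  rw [Fc, S_S, show ((t,(0:ℝ)):Pt) + (s,(0:ℝ)) = ((s+t : ℝ), (0:ℝ)) from
    (by rw [Prod.mk_add_mk, Prod.mk.injEq]; constructor <;> ring), Fc]

lemma Fc_S_vert {u ε : ℝ} (hu : u ≠ 0) (hhu : ∀ i, ∃ z : ℤ, (sz i).2 = z * u)
    (hhε : ∀ i, ε ≤ (sz i).2) (hε : 0 < ε) (s t : ℝ) (P : Tilings sz) :
    Fc sz u s (S sz (0,t) P) = Int.fract ((theta P s - t)/u) := by
  rw [Fc, S_S, show ((0,t):Pt) + (s,(0:ℝ)) = ((s : ℝ), (t:ℝ)) from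
    (by rw [Prod.mk_add_mk, Prod.mk.injEq]; constructor <;> ring), rho_S]
  obtain ⟨z, hz⟩ := bot_congr hhu hhε hε P s 0 t
  refine Int.fract_eq_fract.mpr ⟨z, ?_⟩
  rw [theta]
  field_simp
  linarith

lemma Fc_local (u : ℝ) (P : Tilings sz) {c c' : ℝ}
    (h1 : (tileAt P (c,(0:ℝ))).1.1 ≤ c')
    (h2 : c' < (tileAt P (c,(0:ℝ))).1.1 + (sz (tileAt P (c,(0:ℝ))).2).1) :
    Fc sz u c' P = Fc sz u c P := by
  rw [Fc_eq, Fc_eq, theta, theta, same_tile_h P h1 h2]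

def Con (sz : Fin k → ℝ × ℝ) (u : ℝ) (s t : ℝ) : Set (Tilings sz) :=
  {P | Fc sz u s P = Fc sz u t P}

def Kset (sz : Fin k → ℝ × ℝ) (u : ℝ) (a l : ℝ) : Set (Tilings sz) :=
  ⋂ (s : ℚ) (_ : a ≤ (s:ℝ) ∧ (s:ℝ) < a + l)
    (t : ℚ) (_ : a ≤ (t:ℝ) ∧ (t:ℝ) < a + l), Con sz u s t

def Ec (sz : Fin k → ℝ × ℝ) (u : ℝ) : Set (Tilings sz) :=
  ⋂ (s : ℚ) (t : ℚ), Con sz u (s:ℝ) (t:ℝ)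

lemma mem_Kset {u a l : ℝ} {P : Tilings sz} :
    P ∈ Kset sz u a l ↔ ∀ s : ℚ, (a ≤ (s:ℝ) ∧ (s:ℝ) < a + l) →
      ∀ t : ℚ, (a ≤ (t:ℝ) ∧ (t:ℝ) < a + l) → Fc sz u s P = Fc sz u t P := by
  simp only [Kset, Con, Set.mem_iInter, Set.mem_setOf_eq]

lemma mem_Ec {u : ℝ} {P : Tilings sz} :
    P ∈ Ec sz u ↔ ∀ s t : ℚ, Fc sz u (s:ℝ) P = Fc sz u (t:ℝ) P := by
  simp only [Ec, Con, Set.mem_iInter, Set.mem_setOf_eq]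

section Meas

variable {εw εh : ℝ}

lemma meas_Fc (hεw0 : 0 < εw) (hεh0 : 0 < εh)
    (hεw : ∀ i, εw ≤ (sz i).1) (hεh : ∀ i, εh ≤ (sz i).2) (u s : ℝ) :
    Measurable (Fc sz u s) :=
  (((meas_rho hεw0 hεh0 hεw hεh).comp (meas_S (s,0))).div_const u).fract

lemma meas_Con (hεw0 : 0 < εw) (hεh0 : 0 < εh)
    (hεw : ∀ i, εw ≤ (sz i).1) (hεh : ∀ i, εh ≤ (sz i).2) (u s t : ℝ) :
    MeasurableSet (Con sz u s t) :=
  measurableSet_eq_fun (meas_Fc hεw0 hεh0 hεw hεh u s) (meas_Fc hεw0 hεh0 hεw hεh u t)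

lemma meas_Kset (hεw0 : 0 < εw) (hεh0 : 0 < εh)
    (hεw : ∀ i, εw ≤ (sz i).1) (hεh : ∀ i, εh ≤ (sz i).2) (u a l : ℝ) :
    MeasurableSet (Kset sz u a l) :=
  MeasurableSet.iInter fun s => MeasurableSet.iInter fun _ =>
    MeasurableSet.iInter fun t => MeasurableSet.iInter fun _ =>
      meas_Con hεw0 hεh0 hεw hεh u s t

lemma meas_Ec (hεw0 : 0 < εw) (hεh0 : 0 < εh)
    (hεw : ∀ i, εw ≤ (sz i).1) (hεh : ∀ i, εh ≤ (sz i).2) (u : ℝ) :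
    MeasurableSet (Ec sz u) :=
  MeasurableSet.iInter fun s => MeasurableSet.iInter fun t =>
    meas_Con hεw0 hεh0 hεw hεh u s t

end Meas

lemma fract_shift_iff {u : ℝ} (hu : u ≠ 0) (x y r : ℝ) :
    Int.fract ((x - r)/u) = Int.fract ((y - r)/u) ↔
      Int.fract (x/u) = Int.fract (y/u) := by
  rw [Int.fract_eq_fract, Int.fract_eq_fract]
  constructor <;> rintro ⟨z, hz⟩ <;> refine ⟨z, ?_⟩ <;>
    (field_simp at hz ⊢; linarith)

lemma Con_vert {u ε : ℝ} (hu : 0 < u) (hhu : ∀ i, ∃ z : ℤ, (sz i).2 = z * u)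
    (hhε : ∀ i, ε ≤ (sz i).2) (hε : 0 < ε) (r s t : ℝ) :
    S sz (0,r) ⁻¹' Con sz u s t = Con sz u s t := by
  ext P
  simp only [Con, Set.mem_preimage, Set.mem_setOf_eq]
  rw [Fc_S_vert hu.ne' hhu hhε hε, Fc_S_vert hu.ne' hhu hhε hε, Fc_eq, Fc_eq]
  exact fract_shift_iff hu.ne' _ _ r

lemma Con_horiz (u r s t : ℝ) :
    S sz (r,0) ⁻¹' Con sz u s t = Con sz u (s+r) (t+r) := by
  ext P
  simp only [Con, Set.mem_preimage, Set.mem_setOf_eq, Fc_S_horiz]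

lemma Kset_vert {u ε : ℝ} (hu : 0 < u) (hhu : ∀ i, ∃ z : ℤ, (sz i).2 = z * u)
    (hhε : ∀ i, ε ≤ (sz i).2) (hε : 0 < ε) (r a l : ℝ) :
    S sz (0,r) ⁻¹' Kset sz u a l = Kset sz u a l := by
  simp only [Kset, Set.preimage_iInter]
  exact Set.iInter_congr fun s => Set.iInter_congr fun _ =>
    Set.iInter_congr fun t => Set.iInter_congr fun _ =>
      Con_vert hu hhu hhε hε r s t

lemma Ec_vert {u ε : ℝ} (hu : 0 < u) (hhu : ∀ i, ∃ z : ℤ, (sz i).2 = z * u)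
    (hhε : ∀ i, ε ≤ (sz i).2) (hε : 0 < ε) (r : ℝ) :
    S sz (0,r) ⁻¹' Ec sz u = Ec sz u := by
  simp only [Ec, Set.preimage_iInter]
  exact Set.iInter_congr fun s => Set.iInter_congr fun t =>
    Con_vert hu hhu hhε hε r s t

lemma Kset_shift (u : ℝ) (r : ℚ) (a l : ℝ) :
    S sz ((r:ℝ),0) ⁻¹' Kset sz u a l = Kset sz u (a + r) l := by
  ext P
  rw [Set.mem_preimage, mem_Kset, mem_Kset]
  constructor
  · intro h s hs t ht
    have h1 := h (s - r) (by push_cast; constructor <;> [linarith [hs.1]; linarith [hs.2]])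
      (t - r) (by push_cast; constructor <;> [linarith [ht.1]; linarith [ht.2]])
    rw [Fc_S_horiz, show (((s - r : ℚ)):ℝ) + (r:ℝ) = (s:ℝ) by push_cast; ring,
      Fc_S_horiz, show (((t - r : ℚ)):ℝ) + (r:ℝ) = (t:ℝ) by push_cast; ring] at h1
    exact h1
  · intro h s hs t ht
    have h1 := h (s + r) (by push_cast; constructor <;> [linarith [hs.1]; linarith [hs.2]])
      (t + r) (by push_cast; constructor <;> [linarith [ht.1]; linarith [ht.2]])
    rw [Fc_S_horiz, Fc_S_horiz,
      show ((s:ℝ)) + (r:ℝ) = (((s + r : ℚ)):ℝ) by push_cast; ring,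
      show ((t:ℝ)) + (r:ℝ) = (((t + r : ℚ)):ℝ) by push_cast; ring]
    exact h1

lemma Ec_eq_const (hw : ∀ i, 0 < (sz i).1) (u : ℝ) :
    Ec sz u = {P : Tilings sz | ∀ c c' : ℝ, Fc sz u c P = Fc sz u c' P} := by
  ext P
  rw [mem_Ec]
  simp only [Set.mem_setOf_eq]
  constructor
  · intro h c c'
    have key : ∀ d : ℝ, ∃ qq : ℚ, Fc sz u d P = Fc sz u qq P := by
      intro d
      obtain ⟨⟨h1, h2⟩, -⟩ := tileAt_coords' P d 0
      obtain ⟨qq, hq1, hq2⟩ := exists_rat_btwn h2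
      exact ⟨qq, (Fc_local u P (le_trans h1 hq1.le) hq2).symm⟩
    obtain ⟨q1, hq1⟩ := key c
    obtain ⟨q2, hq2⟩ := key c'
    rw [hq1, hq2]
    exact h q1 q2
  · intro h s t
    exact h s t

lemma Ec_horiz (hw : ∀ i, 0 < (sz i).1) (u r : ℝ) :
    S sz (r,0) ⁻¹' Ec sz u = Ec sz u := by
  rw [Ec_eq_const hw]
  ext P
  simp only [Set.mem_preimage, Set.mem_setOf_eq, Fc_S_horiz]
  constructor
  · intro h c c'
    have := h (c - r) (c' - r)
    simpa using this
  · intro h c c'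
    exact h (c+r) (c'+r)

lemma sub_half_div {u x : ℝ} (hu : u ≠ 0) : (x - u/2)/u = x/u - 1/2 := by
  rw [sub_div, div_right_comm, div_self hu]

lemma fract_half (y : ℝ) :
    Int.fract (y - 1/2) < 1/2 ↔ ¬ (Int.fract y < 1/2) := by
  have h0 : Int.fract (y - 1/2) = Int.fract (Int.fract y - 1/2) :=
    Int.fract_eq_fract.mpr ⟨⌊y⌋, by rw [show y - 1/2 - (Int.fract y - 1/2) = y - Int.fract y by ring, Int.self_sub_fract]⟩
  rcases lt_or_ge (Int.fract y) (1/2) with h | h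
  · rw [h0]
    have h1 : Int.fract (Int.fract y - 1/2) = Int.fract y + 1/2 := by
      rw [show Int.fract y - 1/2 = (Int.fract y + 1/2) - ((1:ℤ):ℝ) by push_cast; ring,
        Int.fract_sub_intCast]
      exact Int.fract_eq_self.mpr ⟨by linarith [Int.fract_nonneg y], by linarith⟩
    rw [h1]
    constructor
    · intro hh
      exfalso
      linarith [Int.fract_nonneg y]
    · intro hh
      exact absurd h hh
  · rw [h0]
    have h1 : Int.fract (Int.fract y - 1/2) = Int.fract y - 1/2 :=
      Int.fract_eq_self.mpr ⟨by linarith, by linarith [Int.fract_lt_one y]⟩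
    rw [h1]
    constructor
    · intro _
      exact not_lt.mpr h
    · intro _
      linarith [Int.fract_lt_one y]

end TwoRect

namespace TwoRect

theorem main_height (wA hA wB hB : ℝ) (hwA : 0 < wA) (hhA : 0 < hA) (hwB : 0 < wB)
    (hhB : 0 < hB)
    (h : ∃ μ : Measure (Tilings ![(wA, hA), (wB, hB)]), IsProbabilityMeasure μ ∧
      (∀ v : Pt, MeasurePreserving (S ![(wA, hA), (wB, hB)] v) μ μ) ∧
      (∀ E : Set (Tilings ![(wA, hA), (wB, hB)]), MeasurableSet E →
        (∀ t : ℝ, S ![(wA, hA), (wB, hB)] (t, 0) ⁻¹' E = E) → μ E = 0 ∨ μ E = 1) ∧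
      (∀ E : Set (Tilings ![(wA, hA), (wB, hB)]), MeasurableSet E →
        (∀ t : ℝ, S ![(wA, hA), (wB, hB)] (0, t) ⁻¹' E = E) → μ E = 0 ∨ μ E = 1)) :
    Irrational (hA / hB) := by
  by_contra hI
  have hmem : hA / hB ∈ Set.range ((↑) : ℚ → ℝ) := not_not.mp hI
  obtain ⟨q, hq⟩ := hmem
  set szv : Fin 2 → ℝ × ℝ := ![(wA, hA), (wB, hB)] with hszv
  obtain ⟨μ, hprob, hinv, hergH, hergV⟩ := h
  haveI := hprob
  have h0 : szv 0 = (wA, hA) := rfl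
  have h1 : szv 1 = (wB, hB) := rfl
  -- arithmetic setup
  have hden : (0:ℝ) < (q.den : ℝ) := by exact_mod_cast q.pos
  set u : ℝ := hB / (q.den : ℝ) with hu
  have hu0 : 0 < u := div_pos hhB hden
  have hAB : hA = (q:ℝ) * hB := by
    have := hq.symm  -- hA / hB = q... hq : ↑q = hA/hB
    exact ((div_eq_iff hhB.ne').mp hq.symm)
  have hAeq : hA = (q.num : ℝ) * u := by
    rw [hAB, Rat.cast_def, hu]
    ring
  have hBeq : hB = ((q.den : ℤ) : ℝ) * u := by
    rw [hu]
    push_cast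
    field_simp
  have hhu : ∀ i : Fin 2, ∃ z : ℤ, (szv i).2 = z * u := by
    intro i
    fin_cases i
    · exact ⟨q.num, hAeq⟩
    · exact ⟨(q.den : ℤ), hBeq⟩
  have hwpos : ∀ i : Fin 2, 0 < (szv i).1 := by
    intro i; fin_cases i
    · exact hwA
    · exact hwB
  have hεw : ∀ i : Fin 2, min wA wB ≤ (szv i).1 := by
    intro i; fin_cases i
    · exact min_le_left _ _
    · exact min_le_right _ _
  have hεh : ∀ i : Fin 2, min hA hB ≤ (szv i).2 := by
    intro i; fin_cases i
    · exact min_le_left _ _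
    · exact min_le_right _ _
  have hεw0 : 0 < min wA wB := lt_min hwA hwB
  have hεh0 : 0 < min hA hB := lt_min hhA hhB
  -- measurability facts
  have measK : ∀ a l : ℝ, MeasurableSet (Kset szv u a l) :=
    fun a l => meas_Kset hεw0 hεh0 hεw hεh u a l
  have measEc : MeasurableSet (Ec szv u) := meas_Ec hεw0 hεh0 hεw hεh u
  -- invariance facts
  have hKV : ∀ r a l : ℝ, S szv (0,r) ⁻¹' Kset szv u a l = Kset szv u a l :=
    fun r a l => Kset_vert hu0 hhu hεh hεh0 r a l
  have hK01 : ∀ a l : ℝ, μ (Kset szv u a l) = 0 ∨ μ (Kset szv u a l) = 1 :=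
    fun a l => hergV _ (measK a l) (fun r => hKV r a l)
  have hμshift : ∀ (r : ℚ) (l : ℝ), μ (Kset szv u (r:ℝ) l) = μ (Kset szv u 0 l) := by
    intro r l
    have h1 := Kset_shift (sz := szv) u r 0 l
    rw [zero_add] at h1
    rw [← h1]
    exact (hinv ((r:ℝ),0)).measure_preimage (measK 0 l).nullMeasurableSet
  -- claim 1 : K(0, εw/2) has measure one
  have claim1 : μ (Kset szv u 0 (min wA wB / 2)) = 1 := by
    rcases hK01 0 (min wA wB / 2) with hc | hc
    · exfalso
      have hall : μ (⋃ r : ℚ, Kset szv u (r:ℝ) (min wA wB / 2)) = 0 :=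
        measure_iUnion_null fun r => by rw [hμshift]; exact hc
      have hne : (⋃ r : ℚ, Kset szv u (r:ℝ) (min wA wB / 2)) ≠ Set.univ := by
        intro hcu
        rw [hcu, measure_univ] at hall
        exact one_ne_zero hall
      obtain ⟨P, hP⟩ := (Set.ne_univ_iff_exists_notMem _).mp hne
      apply hP
      obtain ⟨⟨ha1, ha2⟩, -⟩ := tileAt_coords' P 0 0
      have hwtile : min wA wB ≤ (szv (tileAt P ((0:ℝ),(0:ℝ))).2).1 := hεw _
      obtain ⟨qq, hq1, hq2⟩ := exists_rat_btwn
        (show (tileAt P ((0:ℝ),(0:ℝ))).1.1 <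
            (tileAt P ((0:ℝ),(0:ℝ))).1.1 + min wA wB / 2 by linarith)
      refine Set.mem_iUnion.mpr ⟨qq, mem_Kset.mpr ?_⟩
      have key : ∀ s' : ℚ, ((qq:ℝ) ≤ s' ∧ (s':ℝ) < (qq:ℝ) + min wA wB/2) →
          Fc szv u s' P = Fc szv u 0 P := by
        intro s' hs'
        apply Fc_local
        · linarith [hs'.1]
        · linarith [hs'.2, hwtile]
      intro s hs t ht
      rw [key s hs, key t ht]
    · exact hc
  -- claim 2 : gluing
  have claim2 : ∀ l : ℝ, 0 < l → μ (Kset szv u 0 l) = 1 →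
      ∀ e : ℚ, 0 < (e:ℝ) → (e:ℝ) < l → μ (Kset szv u 0 (l + e)) = 1 := by
    intro l hl hμl e he0 hel
    have h1 : μ (Kset szv u ((e:ℚ):ℝ) l) = 1 := by rw [hμshift e l]; exact hμl
    have hsub : Kset szv u 0 l ∩ Kset szv u ((e:ℚ):ℝ) l ⊆ Kset szv u 0 (l + e) := by
      rintro P ⟨hP1, hP2⟩
      rw [mem_Kset] at hP1 hP2 ⊢
      have key : ∀ s : ℚ, (0 ≤ (s:ℝ) ∧ (s:ℝ) < 0 + (l + e)) →
          Fc szv u s P = Fc szv u e P := by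
        intro s hs
        rcases lt_or_ge (s:ℝ) l with hcs | hcs
        · exact hP1 s ⟨hs.1, by linarith⟩ e ⟨by linarith, by linarith⟩
        · exact hP2 s ⟨by linarith, by linarith [hs.2]⟩ e ⟨le_refl _, by linarith⟩
      intro s hs t ht
      rw [key s hs, key t ht]
    have hμi : μ (Kset szv u 0 l ∩ Kset szv u ((e:ℚ):ℝ) l) = 1 := by
      have hcc : μ ((Kset szv u 0 l ∩ Kset szv u ((e:ℚ):ℝ) l)ᶜ) = 0 := by
        rw [Set.compl_inter]
        refine measure_union_null ?_ ?_ <;>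
          rw [prob_compl_eq_zero_iff (measK _ _)] <;> assumption
      exact (prob_compl_eq_zero_iff ((measK 0 l).inter (measK _ _))).mp hcc
    exact le_antisymm prob_le_one (hμi ▸ measure_mono hsub)
  -- monotonicity
  have hKmono : ∀ x l : ℝ, x ≤ l → Kset szv u 0 l ⊆ Kset szv u 0 x := by
    intro x l hxl P hP
    rw [mem_Kset] at hP ⊢
    intro s hs t ht
    exact hP s ⟨hs.1, by linarith [hs.2]⟩ t ⟨ht.1, by linarith [ht.2]⟩
  -- claim 3
  have claim3 : ∀ x : ℝ, 0 < x → μ (Kset szv u 0 x) = 1 := by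
    have grow : ∀ n : ℕ, ∃ l : ℝ, 0 < l ∧ μ (Kset szv u 0 l) = 1 ∧
        (min wA wB / 2) * (3/2)^n ≤ l := by
      intro n
      induction n with
      | zero => exact ⟨min wA wB / 2, by positivity, claim1, by norm_num⟩
      | succ n ih =>
        obtain ⟨l, hl0, hl1, hln⟩ := ih
        obtain ⟨e, he1, he2⟩ := exists_rat_btwn (show l/2 < l by linarith)
        refine ⟨l + e, by linarith, claim2 l hl0 hl1 e (by linarith) he2, ?_⟩
        rw [pow_succ]
        nlinarith [hln]
    intro x hx
    obtain ⟨n, hn⟩ := pow_unbounded_of_one_lt (x / (min wA wB / 2))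
      (show (1:ℝ) < 3/2 by norm_num)
    obtain ⟨l, hl0, hl1, hln⟩ := grow n
    have hxl : x ≤ l := by
      rw [div_lt_iff₀ (by positivity : (0:ℝ) < min wA wB / 2)] at hn
      nlinarith
    exact le_antisymm prob_le_one (hl1 ▸ measure_mono (hKmono x l hxl))
  -- claim 4 : Ec has measure one
  have claim4 : μ (Ec szv u) = 1 := by
    have hEcap : Ec szv u = ⋂ n : ℕ, Kset szv u ((-(n:ℚ) : ℚ):ℝ) (2*n+1) := by
      ext P
      rw [mem_Ec]
      simp only [Set.mem_iInter]
      constructor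
      · intro hf n
        rw [mem_Kset]
        intro s hs t ht
        exact hf s t
      · intro hf s t
        obtain ⟨n, hn⟩ := exists_nat_gt (max |(s:ℝ)| |(t:ℝ)|)
        have hsb := abs_lt.mp (lt_of_le_of_lt (le_max_left |(s:ℝ)| |(t:ℝ)|) hn)
        have htb := abs_lt.mp (lt_of_le_of_lt (le_max_right |(s:ℝ)| |(t:ℝ)|) hn)
        refine mem_Kset.mp (hf n) s ⟨by push_cast; linarith [hsb.1], by push_cast; linarith [hsb.2]⟩
          t ⟨by push_cast; linarith [htb.1], by push_cast; linarith [htb.2]⟩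
    rw [hEcap]
    have hone : ∀ n : ℕ, μ (Kset szv u ((-(n:ℚ) : ℚ):ℝ) (2*n+1)) = 1 := by
      intro n
      rw [hμshift (-(n:ℚ)) (2*n+1)]
      exact claim3 _ (by positivity)
    have hcc : μ ((⋂ n : ℕ, Kset szv u ((-(n:ℚ) : ℚ):ℝ) (2*n+1))ᶜ) = 0 := by
      rw [Set.compl_iInter]
      exact measure_iUnion_null fun n =>
        (prob_compl_eq_zero_iff (measK _ _)).mpr (hone n)
    exact (prob_compl_eq_zero_iff (MeasurableSet.iInter fun n => measK _ _)).mp hcc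
  -- final contradiction
  set A : Set (Tilings szv) := {P | Fc szv u 0 P < 1/2} with hAdef
  have measA : MeasurableSet A :=
    measurableSet_lt (meas_Fc hεw0 hεh0 hεw hεh u 0) measurable_const
  set E1 : Set (Tilings szv) := Ec szv u ∩ A with hE1def
  set E2 : Set (Tilings szv) := Ec szv u \ A with hE2def
  have hEcmem : ∀ (v : Pt), S szv v ⁻¹' Ec szv u = Ec szv u →
      ∀ P : Tilings szv, (S szv v P ∈ Ec szv u ↔ P ∈ Ec szv u) :=
    fun v hv P => Set.ext_iff.mp hv P
  have hE1H : ∀ t : ℝ, S szv (t,0) ⁻¹' E1 = E1 := by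
    intro t
    ext P
    have hEh := hEcmem (t,0) (Ec_horiz hwpos u t) P
    constructor
    · rintro ⟨hc1, hc2⟩
      have hPE : P ∈ Ec szv u := hEh.mp hc1
      refine ⟨hPE, ?_⟩
      have hfe : Fc szv u 0 (S szv (t,0) P) = Fc szv u 0 P := by
        rw [Fc_S_horiz, zero_add]
        rw [Ec_eq_const hwpos] at hPE
        exact hPE t 0
      show Fc szv u 0 P < 1/2
      rw [← hfe]
      exact hc2
    · rintro ⟨hc1, hc2⟩
      refine ⟨hEh.mpr hc1, ?_⟩
      have hfe : Fc szv u 0 (S szv (t,0) P) = Fc szv u 0 P := by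
        rw [Fc_S_horiz, zero_add]
        have hPE := hc1
        rw [Ec_eq_const hwpos] at hPE
        exact hPE t 0
      show Fc szv u 0 (S szv (t,0) P) < 1/2
      rw [hfe]
      exact hc2
  have hvertA : ∀ P : Tilings szv,
      (Fc szv u 0 (S szv (0, u/2) P) < 1/2) ↔ ¬ (Fc szv u 0 P < 1/2) := by
    intro P
    rw [Fc_S_vert hu0.ne' hhu hεh hεh0, Fc_eq,
      sub_half_div hu0.ne']
    exact fract_half _
  have hE1V : S szv (0, u/2) ⁻¹' E1 = E2 := by
    ext P
    have hEv := hEcmem (0, u/2) (Ec_vert hu0 hhu hεh hεh0 (u/2)) P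
    constructor
    · rintro ⟨hc1, hc2⟩
      exact ⟨hEv.mp hc1, (hvertA P).mp hc2⟩
    · rintro ⟨hc1, hc2⟩
      exact ⟨hEv.mpr hc1, (hvertA P).mpr hc2⟩
  have hμE1 : μ E1 = 0 ∨ μ E1 = 1 := hergH E1 (measEc.inter measA) hE1H
  have hsum : μ E1 + μ E2 = 1 := by
    rw [hE1def, hE2def, measure_inter_add_diff (Ec szv u) measA]
    exact claim4
  have hμeq : μ E2 = μ E1 := by
    rw [← hE1V]
    exact (hinv (0, u/2)).measure_preimage (measEc.inter measA).nullMeasurableSet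
  rcases hμE1 with hc | hc <;> rw [hμeq, hc] at hsum <;> norm_num at hsum

end TwoRect

namespace TwoRect

variable {k : ℕ} {sz sz' : Fin k → ℝ × ℝ}

def trT (P : Set (Pt × Fin k)) : Set (Pt × Fin k) :=
  (fun q : Pt × Fin k => (((q.1.2, q.1.1) : Pt), q.2)) '' P

lemma mem_trT {P : Set (Pt × Fin k)} {q : Pt × Fin k} :
    q ∈ trT P ↔ (((q.1.2, q.1.1) : Pt), q.2) ∈ P := by
  constructor
  · rintro ⟨q', hq', rfl⟩
    exact hq'
  · intro hq
    exact ⟨(((q.1.2, q.1.1) : Pt), q.2), hq, rfl⟩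

lemma isTiling_trT (hsw : ∀ i, sz' i = ((sz i).2, (sz i).1)) {P : Set (Pt × Fin k)}
    (h : IsTiling sz P) : IsTiling sz' (trT P) := by
  intro x
  obtain ⟨q, ⟨hq, hmem⟩, huniq⟩ := h ((x.2, x.1))
  rw [mem_rect] at hmem
  refine ⟨(((q.1.2, q.1.1) : Pt), q.2), ⟨⟨q, hq, rfl⟩, ?_⟩, ?_⟩
  · rw [mem_rect, hsw]
    exact ⟨⟨hmem.2.1, hmem.2.2⟩, hmem.1.1, hmem.1.2⟩
  · rintro r ⟨hr, hrx⟩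
    rw [mem_trT] at hr
    have h2 : (((r.1.2, r.1.1) : Pt), r.2) = q := by
      apply huniq
      refine ⟨hr, ?_⟩
      rw [mem_rect, hsw] at hrx
      rw [mem_rect]
      exact ⟨⟨hrx.2.1, hrx.2.2⟩, hrx.1.1, hrx.1.2⟩
    rw [← h2]

def tpose (hsw : ∀ i, sz' i = ((sz i).2, (sz i).1)) (P : Tilings sz) : Tilings sz' :=
  ⟨trT P.1, isTiling_trT hsw P.2⟩

lemma meas_tpose (hsw : ∀ i, sz' i = ((sz i).2, (sz i).1)) :
    Measurable (tpose hsw) := by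
  apply measurable_generateFrom
  rintro s ⟨U, j, hU, rfl⟩
  have hset : tpose hsw ⁻¹' {Q : Tilings sz' | ∃ q ∈ Q.val, q.1 ∈ U ∧ q.2 = j}
      = {P : Tilings sz | ∃ q ∈ P.val,
          q.1 ∈ (fun p : Pt => ((p.2, p.1) : Pt)) ⁻¹' U ∧ q.2 = j} := by
    ext P
    simp only [Set.mem_preimage, Set.mem_setOf_eq]
    constructor
    · rintro ⟨q, hq, hqU, hqj⟩
      obtain ⟨q', hq', rfl⟩ := hq
      exact ⟨q', hq', hqU, hqj⟩
    · rintro ⟨q, hq, hqU, hqj⟩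
      exact ⟨(((q.1.2, q.1.1) : Pt), q.2), ⟨q, hq, rfl⟩, hqU, hqj⟩
  rw [hset]
  exact meas_gen (hU.preimage (continuous_snd.prodMk continuous_fst)) j

lemma tpose_S (hsw : ∀ i, sz' i = ((sz i).2, (sz i).1)) (v : Pt) (P : Tilings sz) :
    tpose hsw (S sz v P) = S sz' ((v.2, v.1)) (tpose hsw P) := by
  apply Subtype.ext
  show trT (trSet v P.1) = trSet (v.2, v.1) (trT P.1)
  unfold trT Tiling2.trSet
  rw [← Set.image_comp, ← Set.image_comp]
  rfl

end TwoRect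

/-- if the space of tilings of `ℝ²` by two rectangles `A = [0,w_A)×[0,h_A)`
and `B = [0,w_B)×[0,h_B)` supports a translation-invariant probability measure that is
ergodic in both coordinate directions, then `h_A/h_B` and `w_A/w_B` are irrational. -/
theorem incommensurable_of_directionally_ergodic_measure
    (wA hA wB hB : ℝ) (hwA : 0 < wA) (hhA : 0 < hA) (hwB : 0 < wB) (hhB : 0 < hB)
    (h : ∃ μ : Measure (Tilings ![(wA, hA), (wB, hB)]), IsProbabilityMeasure μ ∧
      (∀ v : Pt, MeasurePreserving (S ![(wA, hA), (wB, hB)] v) μ μ) ∧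
      (∀ E : Set (Tilings ![(wA, hA), (wB, hB)]), MeasurableSet E →
        (∀ t : ℝ, S ![(wA, hA), (wB, hB)] (t, 0) ⁻¹' E = E) → μ E = 0 ∨ μ E = 1) ∧
      (∀ E : Set (Tilings ![(wA, hA), (wB, hB)]), MeasurableSet E →
        (∀ t : ℝ, S ![(wA, hA), (wB, hB)] (0, t) ⁻¹' E = E) → μ E = 0 ∨ μ E = 1)) :
    Irrational (hA / hB) ∧ Irrational (wA / wB) := by
  constructor
  · exact TwoRect.main_height wA hA wB hB hwA hhA hwB hhB h
  · refine TwoRect.main_height hA wA hB wB hhA hwA hhB hwB ?_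
    obtain ⟨μ, hprob, hinv, hergH, hergV⟩ := h
    haveI := hprob
    have hsw : ∀ i : Fin 2, (![(hA, wA), (hB, wB)] : Fin 2 → ℝ × ℝ) i
        = (((![(wA, hA), (wB, hB)] : Fin 2 → ℝ × ℝ) i).2,
           ((![(wA, hA), (wB, hB)] : Fin 2 → ℝ × ℝ) i).1) := by
      intro i; fin_cases i <;> rfl
    have hmτ : Measurable (TwoRect.tpose hsw) := TwoRect.meas_tpose hsw
    refine ⟨Measure.map (TwoRect.tpose hsw) μ,
      Measure.isProbabilityMeasure_map hmτ.aemeasurable, ?_, ?_, ?_⟩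
    · intro v
      have hcomm : S ![(hA, wA), (hB, wB)] v ∘ TwoRect.tpose hsw
          = TwoRect.tpose hsw ∘ S ![(wA, hA), (wB, hB)] (v.2, v.1) := by
        funext P
        exact (TwoRect.tpose_S hsw (v.2, v.1) P).symm
      refine ⟨TwoRect.meas_S v, ?_⟩
      rw [Measure.map_map (TwoRect.meas_S v) hmτ, hcomm,
        ← Measure.map_map hmτ (hinv (v.2, v.1)).measurable, (hinv (v.2, v.1)).map_eq]
    · intro E hE hEinv
      have hpre : MeasurableSet (TwoRect.tpose hsw ⁻¹' E) := hmτ hE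
      have hinvE : ∀ t : ℝ, S ![(wA, hA), (wB, hB)] (0, t) ⁻¹'
          (TwoRect.tpose hsw ⁻¹' E) = TwoRect.tpose hsw ⁻¹' E := by
        intro t
        rw [← Set.preimage_comp]
        have hcm : TwoRect.tpose hsw ∘ S ![(wA, hA), (wB, hB)] (0, t)
            = S ![(hA, wA), (hB, wB)] (t, 0) ∘ TwoRect.tpose hsw := by
          funext P
          exact TwoRect.tpose_S hsw (0, t) P
        rw [hcm, Set.preimage_comp, hEinv t]
      have hres := hergV (TwoRect.tpose hsw ⁻¹' E) hpre hinvE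
      rwa [Measure.map_apply hmτ hE]
    · intro E hE hEinv
      have hpre : MeasurableSet (TwoRect.tpose hsw ⁻¹' E) := hmτ hE
      have hinvE : ∀ t : ℝ, S ![(wA, hA), (wB, hB)] (t, 0) ⁻¹'
          (TwoRect.tpose hsw ⁻¹' E) = TwoRect.tpose hsw ⁻¹' E := by
        intro t
        rw [← Set.preimage_comp]
        have hcm : TwoRect.tpose hsw ∘ S ![(wA, hA), (wB, hB)] (t, 0)
            = S ![(hA, wA), (hB, wB)] (0, t) ∘ TwoRect.tpose hsw := by
          funext P
          exact TwoRect.tpose_S hsw (t, 0) P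
        rw [hcm, Set.preimage_comp, hEinv t]
      have hres := hergH (TwoRect.tpose hsw ⁻¹' E) hpre hinvE
      rwa [Measure.map_apply hmτ hE]
end

section
/- Let W = (ℕ × ℕ)^ℤ with the product σ-algebra and let σ : W → W be the left shift. Let Z = W × W with the commuting transformations S₁(w, w') = (σw, w') and S₂(w, w') = (w, σw'). A probability measure λ on Z invariant under both S₁ and S₂ is ergodic for the generated ℤ² action (every measurable set invariant under both S₁ and S₂ has λ-measure 0 or 1) if and only if λ = λ₁ ⊗ λ₂ is the product of two shift-invariant ergodic probability measures λ₁, λ₂ on W. -/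
open MeasureTheory

/-- The space `W = (ℕ × ℕ)^ℤ` of bi-infinite sequences, with the product σ-algebra. -/
abbrev SeqW : Type := ℤ → ℕ × ℕ

/-- The left shift `σ` on `W`. -/
def shiftW (w : SeqW) : SeqW := fun n => w (n + 1)

/-- The transformation `S₁(w, w') = (σ w, w')` on `Z = W × W`. -/
def shiftFst (p : SeqW × SeqW) : SeqW × SeqW := (shiftW p.1, p.2)

/-- The transformation `S₂(w, w') = (w, σ w')` on `Z = W × W`. -/
def shiftSnd (p : SeqW × SeqW) : SeqW × SeqW := (p.1, shiftW p.2)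

/-!
An invariant finite measure absolutely continuous with respect to an ergodic one is a multiple
of it. If `λ` is `S₁`-invariant with ergodic first marginal `λ₁`, then for each measurable `t` the
measure `u ↦ λ (u × t)` is such a measure, so `λ (u × t) = λ₁ u * λ₂ t`. Conversely, for
`λ₁ ⊗ λ₂` with both factors ergodic, the slices of a doubly invariant set have `λ₂`-measure
`0` or `1`, and the set of points whose slice is full is `σ`-invariant.
-/

open Measure Set

variable {α β : Type*} [MeasurableSpace α] [MeasurableSpace β] {f : α → α} {g : β → β}

theorem preErgodic_iff_measure_eq_zero_or_one {μ : Measure α} [IsProbabilityMeasure μ] :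
    PreErgodic f μ ↔ ∀ s, MeasurableSet s → f ⁻¹' s = s → μ s = 0 ∨ μ s = 1 := by
  refine ⟨fun h _ hs hfs => h.prob_eq_zero_or_one hs hfs, fun h => ⟨fun s hs hfs => ?_⟩⟩
  rw [Filter.eventuallyConst_set']
  rcases h s hs hfs with h0 | h1
  · exact Or.inl (ae_eq_empty.2 h0)
  · exact Or.inr ((ae_eq_univ_iff_measure_eq hs.nullMeasurableSet).2 (by simp [h1]))

def PreErgodicPair (f : α → α) (g : β → β) (μ : Measure (α × β)) : Prop :=
  ∀ s, MeasurableSet s → Prod.map f id ⁻¹' s = s → Prod.map id g ⁻¹' s = s →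
    μ s = 0 ∨ μ s = 1

theorem MeasureTheory.MeasurePreserving.fst_of_prodMap {μ : Measure (α × β)}
    (h : MeasurePreserving (Prod.map f g) μ μ) (hf : Measurable f) :
    MeasurePreserving f μ.fst μ.fst :=
  (measurable_fst.measurePreserving μ).of_semiconj h (fun _ => rfl) hf

theorem MeasureTheory.MeasurePreserving.snd_of_prodMap {μ : Measure (α × β)}
    (h : MeasurePreserving (Prod.map f g) μ μ) (hg : Measurable g) :
    MeasurePreserving g μ.snd μ.snd :=
  (measurable_snd.measurePreserving μ).of_semiconj h (fun _ => rfl) hg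

namespace PreErgodicPair

variable {μ : Measure (α × β)} [IsProbabilityMeasure μ]

theorem preErgodic_fst (h : PreErgodicPair f g μ) : PreErgodic f μ.fst := by
  refine preErgodic_iff_measure_eq_zero_or_one.2 fun s hs hfs => ?_
  rw [fst_apply hs]
  exact h _ (measurable_fst hs) (congrArg (Prod.fst ⁻¹' ·) hfs) rfl

theorem preErgodic_snd (h : PreErgodicPair f g μ) : PreErgodic g μ.snd := by
  refine preErgodic_iff_measure_eq_zero_or_one.2 fun s hs hgs => ?_
  rw [snd_apply hs]
  exact h _ (measurable_snd hs) rfl (congrArg (Prod.snd ⁻¹' ·) hgs)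

end PreErgodicPair

theorem PreErgodic.preErgodicPair_prod {μ : Measure α} {ν : Measure β} [IsProbabilityMeasure μ]
    [IsProbabilityMeasure ν] (hf : PreErgodic f μ) (hg : PreErgodic g ν) :
    PreErgodicPair f g (μ.prod ν) := by
  intro s hs hfs hgs
  have hslice (a : α) : ν (Prod.mk a ⁻¹' s) = 0 ∨ ν (Prod.mk a ⁻¹' s) = 1 :=
    hg.prob_eq_zero_or_one (measurable_prodMk_left hs) (congrArg (Prod.mk a ⁻¹' ·) hgs)
  set B := {a | ν (Prod.mk a ⁻¹' s) = 1}
  have hB : MeasurableSet B := measurable_measure_prodMk_left hs (measurableSet_singleton 1)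
  have hfB : f ⁻¹' B = B := by
    ext a
    exact Iff.of_eq (congrArg (fun t => ν (Prod.mk a ⁻¹' t) = 1) hfs)
  have hsB : μ.prod ν s = μ B := by
    rw [prod_apply hs, ← lintegral_indicator_one hB]
    congr 1
    ext a
    rcases hslice a with h | h <;> simp [B, h]
  rw [hsB]
  exact hf.prob_eq_zero_or_one hB hfB

theorem MeasureTheory.MeasurePreserving.eq_fst_prod_snd_of_ergodic_fst {μ : Measure (α × β)}
    [IsProbabilityMeasure μ] (hf : MeasurePreserving (Prod.map f id) μ μ)
    (herg : Ergodic f μ.fst) :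
    μ = μ.fst.prod μ.snd := by
  refine (Measure.prod_eq fun s t hs ht => ?_).symm
  set ν := (μ.restrict (Prod.snd ⁻¹' t)).fst
  have hν (u : Set α) (hu : MeasurableSet u) : ν u = μ (u ×ˢ t) := by
    rw [fst_apply hu, restrict_apply (measurable_fst hu), Set.prod_eq]
  have hfν : MeasurePreserving f ν ν :=
    (hf.restrict_preimage (measurable_snd ht) :
      MeasurePreserving (Prod.map f id) (μ.restrict (Prod.snd ⁻¹' t)) _).fst_of_prodMap
      herg.measurable
  have hνμ : ν ≪ μ.fst := (fst_mono restrict_le_self).absolutelyContinuous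
  obtain ⟨c, hc⟩ := herg.eq_smul_of_absolutelyContinuous hfν hνμ
  calc μ (s ×ˢ t) = ν s := (hν s hs).symm
    _ = μ.fst s * ν univ := by simp [hc, mul_comm]
    _ = μ.fst s * μ.snd t := by
      rw [hν univ MeasurableSet.univ, snd_apply ht, univ_prod]

theorem measurable_shiftW : Measurable shiftW :=
  measurable_pi_lambda _ fun n => measurable_pi_apply (n + 1)

/-- a probability measure `λ` on `Z = W × W` invariant under both `S₁` and
`S₂` is ergodic for the generated `ℤ²` action if and only if it is the product of two
shift-invariant ergodic probability measures on `W`. -/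
theorem ergodic_Z2_iff_product_of_ergodics
    (lam : Measure (SeqW × SeqW)) [IsProbabilityMeasure lam]
    (hinv₁ : MeasurePreserving shiftFst lam lam)
    (hinv₂ : MeasurePreserving shiftSnd lam lam) :
    ((∀ E : Set (SeqW × SeqW), MeasurableSet E →
        shiftFst ⁻¹' E = E → shiftSnd ⁻¹' E = E → lam E = 0 ∨ lam E = 1) ↔
      ∃ lam₁ lam₂ : Measure SeqW, IsProbabilityMeasure lam₁ ∧ IsProbabilityMeasure lam₂ ∧
        MeasurePreserving shiftW lam₁ lam₁ ∧ MeasurePreserving shiftW lam₂ lam₂ ∧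
        (∀ E : Set SeqW, MeasurableSet E → shiftW ⁻¹' E = E → lam₁ E = 0 ∨ lam₁ E = 1) ∧
        (∀ E : Set SeqW, MeasurableSet E → shiftW ⁻¹' E = E → lam₂ E = 0 ∨ lam₂ E = 1) ∧
        lam = lam₁.prod lam₂) := by
  change MeasurePreserving (Prod.map shiftW id) lam lam at hinv₁
  change MeasurePreserving (Prod.map id shiftW) lam lam at hinv₂
  change PreErgodicPair shiftW shiftW lam ↔ _
  constructor
  · intro h
    have herg₁ : Ergodic shiftW lam.fst :=
      ⟨hinv₁.fst_of_prodMap measurable_shiftW, h.preErgodic_fst⟩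
    have herg₂ : Ergodic shiftW lam.snd :=
      ⟨hinv₂.snd_of_prodMap measurable_shiftW, h.preErgodic_snd⟩
    exact ⟨_, _, inferInstance, inferInstance, herg₁.toMeasurePreserving,
      herg₂.toMeasurePreserving, fun _ => herg₁.prob_eq_zero_or_one,
      fun _ => herg₂.prob_eq_zero_or_one, hinv₁.eq_fst_prod_snd_of_ergodic_fst herg₁⟩
  · rintro ⟨lam₁, lam₂, _, _, -, -, herg₁, herg₂, rfl⟩
    exact (preErgodic_iff_measure_eq_zero_or_one.2 herg₁).preErgodicPair_prod
      (preErgodic_iff_measure_eq_zero_or_one.2 herg₂)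
end

section
/- Let M be an invertible 2×2 real matrix such that the two entries of its first column are rationally independent and the two entries of its second column are rationally independent. Consider the ℝ² action on the torus 𝕋² = ℝ²/ℤ² defined by S_v x = x + Mv (mod ℤ²). Then there exists a pair 𝒯 of half-open rectangular tiles in ℝ² and a map Φ : 𝕋² → Y_𝒯 that is equivariant: Φ(S_v x) = S_v^Y(Φ(x)) for all x ∈ 𝕋² and v ∈ ℝ², where S^Y denotes the translation action on Y_𝒯. -/
open Set MeasureTheory

open Tiling2

/-!
Write `Λ = M⁻¹ ℤ²`. As `x ↦ M⁻¹ x` conjugates the action to translation on `ℝ² / Λ`, any tiling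
`P` whose group of periods contains `Λ` gives the equivariant map `Φ (x mod ℤ²) = S_{M⁻¹ x} P`.

Every lattice lies in a lattice with basis `u = (a, -b)`, `w = (c, d)`, `a, b, c, d > 0`: it has
points `λ₁, λ₂` in the open fourth and first quadrants (for any basis `p, q`, every disc of
radius `‖p‖ + ‖q‖` meets `ℤ p + ℤ q`), and if `δ` is the index of `ℤ λ₁ + ℤ λ₂` in `Λ`, then
`Λ ⊆ δ⁻¹ (ℤ λ₁ + ℤ λ₂)`.

For such a lattice, the `a × d` rectangle with the `c × b` rectangle stacked on top of it is an
L-shaped fundamental domain: the `ℤ w`-translates of the L-shape form a row meeting each vertical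
line in an interval whose lower end is the upper end of the row translated by `u`, so the
`ℤ u`-translates of the row cover each vertical line exactly once.
-/

namespace Tiling2

variable {k : ℕ}

@[simp] lemma trSet_zero (P : Set (Pt × Fin k)) : trSet 0 P = P := by
  simp [trSet]

lemma trSet_trSet (u v : Pt) (P : Set (Pt × Fin k)) :
    trSet v (trSet u P) = trSet (u + v) P := by
  simp only [trSet, image_image, sub_sub]

lemma S_add (sz : Fin k → ℝ × ℝ) (u v : Pt) (Y : Tilings sz) :
    S sz (u + v) Y = S sz v (S sz u Y) :=
  Subtype.ext (trSet_trSet u v Y.1).symm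

def periods (P : Set (Pt × Fin k)) : AddSubgroup Pt where
  carrier := {v | trSet v P = P}
  zero_mem' := trSet_zero P
  add_mem' {u v} (hu : trSet u P = P) (hv : trSet v P = P) := by
    change trSet (u + v) P = P
    rw [← trSet_trSet, hu, hv]
  neg_mem' {v} (hv : trSet v P = P) := by
    change trSet (-v) P = P
    calc trSet (-v) P = trSet (-v) (trSet v P) := by rw [hv]
      _ = P := by rw [trSet_trSet, add_neg_cancel, trSet_zero]

lemma S_eq_self_of_mem_periods {sz : Fin k → ℝ × ℝ} {Y : Tilings sz} {v : Pt}
    (hv : v ∈ periods Y.1) : S sz v Y = Y :=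
  Subtype.ext hv

lemma mem_periods_range_of_equiv {ι : Type*} (g : ι → Pt × Fin k) (v : Pt) (e : ι ≃ ι)
    (he : ∀ t, g (e t) = ((g t).1 - v, (g t).2)) : v ∈ periods (range g) := by
  change trSet v (range g) = range g
  rw [trSet, ← range_comp, ← e.surjective.range_comp g]
  exact congrArg range (funext fun t => (he t).symm)

lemma sub_mem_rect_iff (x p : Pt) (w h : ℝ) :
    x - p ∈ rect w h ↔ (p.1 ≤ x.1 ∧ x.1 < p.1 + w) ∧ (p.2 ≤ x.2 ∧ x.2 < p.2 + h) := by
  simp only [rect, mem_prod, mem_Ico, Prod.fst_sub, Prod.snd_sub, sub_nonneg, sub_lt_iff_lt_add']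

lemma isTiling_range {ι : Type*} {sz : Fin k → ℝ × ℝ} (g : ι → Pt × Fin k)
    (h : ∀ x, ∃! t, x - (g t).1 ∈ rect (sz (g t).2).1 (sz (g t).2).2) :
    IsTiling sz (range g) := by
  intro x
  obtain ⟨t, ht, huniq⟩ := h x
  refine ⟨g t, ⟨mem_range_self t, ht⟩, ?_⟩
  rintro _ ⟨⟨s, rfl⟩, hs⟩
  rw [huniq s hs]

end Tiling2

lemma existsUnique_Ico_of_strictAnti {α : Type*} [LinearOrder α] {V : ℤ → α} (hV : StrictAnti V)
    (hbot : ∀ t, ∃ m, V m ≤ t) (htop : ∀ t, ∃ m, t < V m) (t : α) :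
    ∃! m, V (m + 1) ≤ t ∧ t < V m := by
  obtain ⟨m₀, hm₀⟩ := hbot t
  have hbdd : ∀ m, t < V m → m ≤ m₀ := fun m hm => hV.le_iff_ge.1 (hm₀.trans hm.le)
  obtain ⟨m, hm, hmax⟩ := Int.exists_greatest_of_bdd ⟨m₀, hbdd⟩ (htop t)
  refine ⟨m, ⟨not_lt.1 fun h => (hmax _ h).not_gt (lt_add_one m), hm⟩, ?_⟩
  rintro m' ⟨hm'₁, hm'₂⟩
  refine le_antisymm (hmax m' hm'₂) (not_lt.1 fun h => ?_)
  exact (hV.antitone (Int.add_one_le_of_lt h)).trans hm'₁ |>.not_gt hm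

section FloorDiv

variable {K : Type*} [Field K] [LinearOrder K] [IsStrictOrderedRing K] [FloorRing K]
  {d z : K} {m : ℤ}

lemma lt_floor_div_iff (hd : 0 < d) : m < ⌊z / d⌋ ↔ (m + 1) * d ≤ z := by
  rw [Int.lt_iff_add_one_le, Int.le_floor, le_div_iff₀ hd, Int.cast_add, Int.cast_one]

lemma floor_div_le_iff (hd : 0 < d) : ⌊z / d⌋ ≤ m ↔ z < (m + 1) * d := by
  rw [← Int.lt_add_one_iff, Int.floor_lt, div_lt_iff₀ hd, Int.cast_add, Int.cast_one]

end FloorDiv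

noncomputable section

namespace LTiling

variable {a b c d : ℝ}

def sizes (a b c d : ℝ) : Fin 2 → ℝ × ℝ := ![(a, d), (c, b)]

def offset (d : ℝ) : Fin 2 → Pt := ![0, (0, d)]

/- Tile `0` at each point of the lattice `ℤ (a, -b) + ℤ (c, d)`, tile `1` stacked on top of it. -/
def place (a b c d : ℝ) (t : ℤ × ℤ × Fin 2) : Pt × Fin 2 :=
  (t.1 • (a, -b) + t.2.1 • (c, d) + offset d t.2.2, t.2.2)

def tiling (a b c d : ℝ) : Set (Pt × Fin 2) := range (place a b c d)

def InPiece (a b c d : ℝ) (y : Pt) (s : ℤ × Fin 2) : Prop :=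
  y - (s.1 • (c, d) + offset d s.2) ∈ rect (sizes a b c d s.2).1 (sizes a b c d s.2).2

/-- The upper boundary, above the abscissa `y₁`, of the row `⋃ n, (L + n • (c, d))`, where `L`
is the L-shape formed by the two tiles. -/
def rowTop (b c d y₁ : ℝ) : ℝ := (⌊y₁ / c⌋ + 1) * d + b

def InRow (a b c d : ℝ) (y : Pt) : Prop :=
  rowTop b c d (y.1 - a) - b ≤ y.2 ∧ y.2 < rowTop b c d y.1

def rowPiece (c d : ℝ) (y : Pt) : ℤ × Fin 2 :=
  if y.2 < (⌊y.1 / c⌋ + 1) * d then (⌊y.2 / d⌋, 0) else (⌊y.1 / c⌋, 1)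

lemma inPiece_zero_iff (hc : 0 < c) (hd : 0 < d) (y : Pt) (n : ℤ) :
    InPiece a b c d y (n, 0) ↔
      ⌊y.2 / d⌋ = n ∧ (⌊(y.1 - a) / c⌋ + 1) * d ≤ y.2 ∧ y.2 < (⌊y.1 / c⌋ + 1) * d := by
  have hcol : InPiece a b c d y (n, 0) ↔
      ⌊(y.1 - a) / c⌋ < n ∧ n ≤ ⌊y.1 / c⌋ ∧ ⌊y.2 / d⌋ = n := by
    simp only [InPiece, sizes, offset, Matrix.cons_val_zero, add_zero, sub_mem_rect_iff,
      Prod.smul_mk, zsmul_eq_mul, Int.floor_lt, Int.le_floor, Int.floor_eq_iff, div_lt_iff₀ hc,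
      le_div_iff₀ hc, le_div_iff₀ hd, div_lt_iff₀ hd]
    exact ⟨fun ⟨⟨h₁, _⟩, h₃, h₄⟩ => ⟨by linarith, h₁, h₃, by linarith⟩,
      fun ⟨h₁, h₂, h₃, h₄⟩ => ⟨⟨h₂, by linarith⟩, h₃, by linarith⟩⟩
  rw [hcol]
  constructor
  · rintro ⟨h₀, h₁, rfl⟩
    exact ⟨rfl, (lt_floor_div_iff hd).1 h₀, (floor_div_le_iff hd).1 h₁⟩
  · rintro ⟨rfl, h₀, h₁⟩
    exact ⟨(lt_floor_div_iff hd).2 h₀, (floor_div_le_iff hd).2 h₁, rfl⟩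

lemma inPiece_one_iff (hc : 0 < c) (y : Pt) (n : ℤ) :
    InPiece a b c d y (n, 1) ↔ ⌊y.1 / c⌋ = n ∧ (n + 1) * d ≤ y.2 ∧ y.2 < (n + 1) * d + b := by
  simp only [InPiece, sizes, offset, Matrix.cons_val_one, Matrix.cons_val_zero, sub_mem_rect_iff,
    Prod.smul_mk, zsmul_eq_mul, Prod.mk_add_mk, add_zero, Int.floor_eq_iff, div_lt_iff₀ hc,
    le_div_iff₀ hc]
  exact ⟨fun ⟨⟨h₁, _⟩, h₃, h₄⟩ => ⟨⟨h₁, by linarith⟩, by linarith, by linarith⟩,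
    fun ⟨⟨h₁, _⟩, h₃, h₄⟩ => ⟨⟨h₁, by linarith⟩, by linarith, by linarith⟩⟩

lemma inPiece_iff (ha : 0 ≤ a) (hb : 0 ≤ b) (hc : 0 < c) (hd : 0 < d) (y : Pt)
    (s : ℤ × Fin 2) : InPiece a b c d y s ↔ InRow a b c d y ∧ s = rowPiece c d y := by
  obtain ⟨n, i⟩ := s
  have hN₀N : ((⌊(y.1 - a) / c⌋ : ℤ) : ℝ) + 1 ≤ ⌊y.1 / c⌋ + 1 := by
    gcongr; linarith
  have hstep := mul_le_mul_of_nonneg_right hN₀N hd.le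
  simp only [InRow, rowTop, rowPiece, add_sub_cancel_right]
  obtain rfl | rfl : i = 0 ∨ i = 1 := by omega
  · rw [inPiece_zero_iff hc hd]
    split_ifs with h
    · simp only [Prod.mk.injEq, and_true, eq_comm (a := n)]
      exact ⟨fun ⟨h₁, h₂, _⟩ => ⟨⟨h₂, by linarith⟩, h₁⟩, fun ⟨⟨h₂, _⟩, h₁⟩ => ⟨h₁, h₂, h⟩⟩
    · simp only [Prod.mk.injEq, zero_ne_one, and_false, iff_false]
      exact fun ⟨_, _, h'⟩ => h h'
  · rw [inPiece_one_iff hc]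
    split_ifs with h
    · simp only [Prod.mk.injEq, one_ne_zero, and_false, iff_false]
      rintro ⟨rfl, h', _⟩
      linarith
    · simp only [Prod.mk.injEq, and_true, eq_comm (a := n)]
      constructor
      · rintro ⟨rfl, h₁, h₂⟩
        exact ⟨⟨by linarith, h₂⟩, rfl⟩
      · rintro ⟨⟨_, h₂⟩, rfl⟩
        exact ⟨rfl, not_lt.1 h, h₂⟩

lemma rowTop_mono (hc : 0 < c) (hd : 0 ≤ d) : Monotone (rowTop b c d) := fun y y' h => by
  have := Int.floor_mono (div_le_div_of_nonneg_right h hc.le)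
  unfold rowTop
  gcongr

lemma rowTop_bounds (hd : 0 < d) (y : ℝ) :
    y / c * d + b < rowTop b c d y ∧ rowTop b c d y ≤ y / c * d + d + b := by
  have h₁ := mul_lt_mul_of_pos_right (Int.lt_floor_add_one (y / c)) hd
  have h₂ := mul_le_mul_of_nonneg_right (Int.floor_le (y / c)) hd.le
  unfold rowTop
  constructor <;> linarith

lemma inRow_sub_zsmul_iff (x : Pt) (m : ℤ) :
    InRow a b c d (x - m • (a, -b)) ↔
      rowTop b c d (x.1 - (m + 1 : ℤ) * a) - (m + 1 : ℤ) * b ≤ x.2 ∧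
        x.2 < rowTop b c d (x.1 - m * a) - m * b := by
  have h : x.1 - m * a - a = x.1 - (m + 1 : ℤ) * a := by push_cast; ring
  simp only [InRow, Prod.fst_sub, Prod.snd_sub, Prod.smul_mk, zsmul_eq_mul, h]
  constructor <;> rintro ⟨h₁, h₂⟩ <;> constructor <;> push_cast at * <;> linarith

lemma sub_place_mem_rect_iff (x : Pt) (t : ℤ × ℤ × Fin 2) :
    x - (place a b c d t).1 ∈ rect (sizes a b c d (place a b c d t).2).1
        (sizes a b c d (place a b c d t).2).2 ↔
      InPiece a b c d (x - t.1 • (a, -b)) t.2 := by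
  rw [InPiece, place, add_assoc, ← sub_sub]

theorem isTiling_tiling (ha : 0 < a) (hb : 0 < b) (hc : 0 < c) (hd : 0 < d) :
    IsTiling (sizes a b c d) (tiling a b c d) := by
  refine isTiling_range _ fun x => ?_
  set V : ℤ → ℝ := fun m => rowTop b c d (x.1 - m * a) - m * b with hV
  have hanti : StrictAnti V := strictAnti_int_of_succ_lt fun m => by
    have := rowTop_mono (b := b) hc hd.le
      (by push_cast; linarith : x.1 - (m + 1 : ℤ) * a ≤ x.1 - m * a)
    simp only [hV]
    push_cast at this ⊢
    linarith
  have hβ : 0 < a / c * d + b := by positivity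
  have hV_bounds : ∀ m : ℤ, x.1 / c * d - m * (a / c * d + b) + b < V m ∧
      V m ≤ x.1 / c * d - m * (a / c * d + b) + d + b := fun m => by
    have := rowTop_bounds (b := b) (c := c) hd (x.1 - m * a)
    simp only [hV, sub_div, mul_div_assoc] at this ⊢
    constructor <;> linarith
  have hbot : ∀ t, ∃ m, V m ≤ t := fun t => by
    obtain ⟨m, hm⟩ := exists_int_gt ((x.1 / c * d + d + b - t) / (a / c * d + b))
    rw [div_lt_iff₀ hβ] at hm
    exact ⟨m, by linarith [(hV_bounds m).2]⟩
  have htop : ∀ t, ∃ m, t < V m := fun t => by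
    obtain ⟨m, hm⟩ := exists_int_lt ((x.1 / c * d + b - t) / (a / c * d + b))
    rw [lt_div_iff₀ hβ] at hm
    exact ⟨m, by linarith [(hV_bounds m).1]⟩
  obtain ⟨m, hm, hm_uniq⟩ := existsUnique_Ico_of_strictAnti hanti hbot htop x.2
  refine ⟨(m, rowPiece c d (x - m • (a, -b))), ?_, ?_⟩
  · exact (sub_place_mem_rect_iff x _).2
      ((inPiece_iff ha.le hb.le hc hd _ _).2 ⟨(inRow_sub_zsmul_iff x m).2 hm, rfl⟩)
  · rintro ⟨m', s⟩ h
    rw [sub_place_mem_rect_iff, inPiece_iff ha.le hb.le hc hd, inRow_sub_zsmul_iff] at h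
    obtain rfl := hm_uniq m' h.1
    exact Prod.ext rfl h.2

lemma closure_le_periods :
    AddSubgroup.closure {(a, -b), (c, d)} ≤ periods (tiling a b c d) := by
  have hu : ((a, -b) : Pt) ∈ periods (tiling a b c d) :=
    mem_periods_range_of_equiv _ _ ((Equiv.subRight 1).prodCongr (Equiv.refl _)) fun t => by
      refine Prod.ext ?_ rfl
      simp only [place, Equiv.prodCongr_apply, Prod.map, Equiv.subRight_apply, Equiv.refl_apply,
        sub_zsmul, one_zsmul]
      abel
  have hw : ((c, d) : Pt) ∈ periods (tiling a b c d) :=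
    mem_periods_range_of_equiv _ _
      ((Equiv.refl ℤ).prodCongr ((Equiv.subRight 1).prodCongr (Equiv.refl _))) fun t => by
      refine Prod.ext ?_ rfl
      simp only [place, Equiv.prodCongr_apply, Prod.map, Equiv.subRight_apply, Equiv.refl_apply,
        sub_zsmul, one_zsmul]
      abel
  rw [AddSubgroup.closure_le, insert_subset_iff, singleton_subset_iff]
  exact ⟨hu, hw⟩

end LTiling

end

lemma exists_zsmul_add_zsmul_near {E : Type*} [SeminormedAddCommGroup E] [NormedSpace ℝ E]
    (p q : E) (s t : ℝ) : ∃ m n : ℤ, ‖s • p + t • q - (m • p + n • q)‖ ≤ ‖p‖ + ‖q‖ := by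
  refine ⟨⌊s⌋, ⌊t⌋, ?_⟩
  have hfract : ∀ (r : ℝ) (x : E), ‖Int.fract r • x‖ ≤ ‖x‖ := fun r x => by
    rw [norm_smul, Real.norm_of_nonneg (Int.fract_nonneg r)]
    exact mul_le_of_le_one_left (norm_nonneg x) (Int.fract_lt_one r).le
  have h : s • p + t • q - (⌊s⌋ • p + ⌊t⌋ • q) = Int.fract s • p + Int.fract t • q := by
    simp only [Int.fract, sub_smul, ← Int.cast_smul_eq_zsmul ℝ]
    abel
  rw [h]
  exact (norm_add_le _ _).trans (add_le_add (hfract s p) (hfract t q))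

lemma exists_int_comb_near (p q : ℝ × ℝ) (h : p.1 * q.2 - p.2 * q.1 ≠ 0) (v : ℝ × ℝ) :
    ∃ m n : ℤ, ‖v - (m • p + n • q)‖ ≤ ‖p‖ + ‖q‖ := by
  have hv : v = ((v.1 * q.2 - v.2 * q.1) / (p.1 * q.2 - p.2 * q.1)) • p +
      ((p.1 * v.2 - p.2 * v.1) / (p.1 * q.2 - p.2 * q.1)) • q := by
    ext <;> simp only [Prod.fst_add, Prod.snd_add, Prod.smul_fst, Prod.smul_snd, smul_eq_mul] <;>
      rw [div_mul_eq_mul_div, div_mul_eq_mul_div, ← add_div, eq_div_iff h] <;> ring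
  rw [hv]
  exact exists_zsmul_add_zsmul_near p q _ _

/- `δ = ±[ℤ p + ℤ q : ℤ u + ℤ w]`; dividing by `δ²` rather than `δ` keeps the new basis in its
quadrants whatever the sign of `δ`. -/
lemma exists_quadrant_basis (p q : ℝ × ℝ) (h : p.1 * q.2 - p.2 * q.1 ≠ 0) :
    ∃ a b c d : ℝ, 0 < a ∧ 0 < b ∧ 0 < c ∧ 0 < d ∧
      p ∈ AddSubgroup.closure {(a, -b), (c, d)} ∧ q ∈ AddSubgroup.closure {(a, -b), (c, d)} := by
  set R := ‖p‖ + ‖q‖ + 1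
  obtain ⟨m₁, n₁, h₁⟩ := exists_int_comb_near p q h (R, -R)
  obtain ⟨m₂, n₂, h₂⟩ := exists_int_comb_near p q h (R, R)
  have hu : 0 < (m₁ • p + n₁ • q).1 ∧ (m₁ • p + n₁ • q).2 < 0 := by
    obtain ⟨h₁₁, h₁₂⟩ := norm_prod_le_iff.1 h₁
    rw [Real.norm_eq_abs, abs_le] at h₁₁ h₁₂
    simp only [Prod.fst_sub, Prod.snd_sub] at h₁₁ h₁₂
    constructor <;> linarith [h₁₁.2, h₁₂.1]
  have hw : 0 < (m₂ • p + n₂ • q).1 ∧ 0 < (m₂ • p + n₂ • q).2 := by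
    obtain ⟨h₂₁, h₂₂⟩ := norm_prod_le_iff.1 h₂
    rw [Real.norm_eq_abs, abs_le] at h₂₁ h₂₂
    simp only [Prod.fst_sub, Prod.snd_sub] at h₂₁ h₂₂
    constructor <;> linarith [h₂₁.2, h₂₂.2]
  set u := m₁ • p + n₁ • q
  set w := m₂ • p + n₂ • q
  set δ : ℝ := m₁ * n₂ - n₁ * m₂
  have hδ : δ ≠ 0 := by
    have hdet : u.1 * w.2 - u.2 * w.1 = δ * (p.1 * q.2 - p.2 * q.1) := by
      simp only [u, w, δ, Prod.fst_add, Prod.snd_add, Prod.smul_fst, Prod.smul_snd]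
      simp only [zsmul_eq_mul]
      ring
    intro h0
    rw [h0, zero_mul] at hdet
    nlinarith [mul_pos hu.1 hw.2, mul_pos (neg_pos.2 hu.2) hw.1]
  have hδ2 : 0 < δ ^ 2 := by positivity
  refine ⟨u.1 / δ ^ 2, -u.2 / δ ^ 2, w.1 / δ ^ 2, w.2 / δ ^ 2, div_pos hu.1 hδ2,
    div_pos (neg_pos.2 hu.2) hδ2, div_pos hw.1 hδ2, div_pos hw.2 hδ2,
    AddSubgroup.mem_closure_pair.2 ⟨n₂ * (m₁ * n₂ - n₁ * m₂), -(n₁ * (m₁ * n₂ - n₁ * m₂)), ?_⟩,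
    AddSubgroup.mem_closure_pair.2 ⟨-(m₂ * (m₁ * n₂ - n₁ * m₂)), m₁ * (m₁ * n₂ - n₁ * m₂), ?_⟩⟩ <;>
  · ext <;>
      simp only [u, w, Prod.fst_add, Prod.snd_add, Prod.smul_fst, Prod.smul_snd, Prod.smul_mk] <;>
      simp only [zsmul_eq_mul] <;> field_simp <;> push_cast <;> ring

lemma exists_equivariant_of_periods {k : ℕ} {sz : Fin k → ℝ × ℝ} (Y : Tilings sz)
    (A : ℝ × ℝ →+ ℝ × ℝ) (B : ℝ × ℝ → ℝ × ℝ) (hAB : ∀ v, A (B v) = v)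
    (hA : ∀ m n : ℤ, A (m, n) ∈ periods Y.1) :
    ∃ Φ : AddCircle (1 : ℝ) × AddCircle (1 : ℝ) → Tilings sz, ∀ x v,
      Φ (x + (((B v).1 : AddCircle (1 : ℝ)), ((B v).2 : AddCircle (1 : ℝ)))) = S sz v (Φ x) := by
  let f : ℝ × ℝ → Tilings sz := fun z => S sz (A z) Y
  have hf : ∀ (z : ℝ × ℝ) (m n : ℤ), f (z.1 + m, z.2 + n) = f z := fun z m n => by
    simp only [f, ← Prod.mk_add_mk, map_add, add_comm (A z), S_add,
      S_eq_self_of_mem_periods (hA m n)]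
  refine ⟨fun x => Quotient.liftOn₂' x.1 x.2 (fun s t => f (s, t)) ?_, ?_⟩
  · intro s t s' t' hs ht
    obtain ⟨m, hm⟩ := AddSubgroup.mem_zmultiples_iff.1 (QuotientAddGroup.leftRel_apply.1 hs)
    obtain ⟨n, hn⟩ := AddSubgroup.mem_zmultiples_iff.1 (QuotientAddGroup.leftRel_apply.1 ht)
    rw [zsmul_one, eq_neg_add_iff_add_eq] at hm hn
    simpa [← hm, ← hn] using (hf (s, t) m n).symm
  · rintro ⟨x₁, x₂⟩ v
    induction x₁ using QuotientAddGroup.induction_on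
    induction x₂ using QuotientAddGroup.induction_on
    change f (_ + (B v).1, _ + (B v).2) = S sz v (f (_, _))
    simp only [f, ← Prod.mk_add_mk, map_add, hAB, S_add]

def planeMap (N : Matrix (Fin 2) (Fin 2) ℝ) : (ℝ × ℝ) →ₗ[ℝ] ℝ × ℝ :=
  (LinearEquiv.finTwoArrow ℝ ℝ).conj (Matrix.toLin' N)

lemma planeMap_apply (N : Matrix (Fin 2) (Fin 2) ℝ) (v : ℝ × ℝ) :
    planeMap N v = (N 0 0 * v.1 + N 0 1 * v.2, N 1 0 * v.1 + N 1 1 * v.2) := by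
  simp [planeMap, LinearEquiv.conj_apply, Matrix.mulVec, dotProduct, Fin.sum_univ_two]

lemma planeMap_inv_apply {M : Matrix (Fin 2) (Fin 2) ℝ} (hM : IsUnit M.det) (v : ℝ × ℝ) :
    planeMap M⁻¹ (planeMap M v) = v := by
  rw [← LinearMap.comp_apply, planeMap, planeMap, ← LinearEquiv.conj_comp, ← Matrix.toLin'_mul,
    Matrix.nonsing_inv_mul M hM, Matrix.toLin'_one, LinearEquiv.conj_id, LinearMap.id_apply]

theorem torus_action_tileable_general (M : Matrix (Fin 2) (Fin 2) ℝ) (hM : IsUnit M.det) :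
    ∃ sz : Fin 2 → ℝ × ℝ, (∀ j, 0 < (sz j).1 ∧ 0 < (sz j).2) ∧
      ∃ Φ : AddCircle (1 : ℝ) × AddCircle (1 : ℝ) → Tilings sz,
        ∀ (x : AddCircle (1 : ℝ) × AddCircle (1 : ℝ)) (v : ℝ × ℝ),
          Φ (x + (((M 0 0 * v.1 + M 0 1 * v.2 : ℝ) : AddCircle (1 : ℝ)),
                  ((M 1 0 * v.1 + M 1 1 * v.2 : ℝ) : AddCircle (1 : ℝ)))) =
            S sz v (Φ x) := by
  have hdet : M⁻¹ 0 0 * M⁻¹ 1 1 - M⁻¹ 1 0 * M⁻¹ 0 1 ≠ 0 := by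
    rw [mul_comm (M⁻¹ 1 0), ← Matrix.det_fin_two]
    exact (M.isUnit_nonsing_inv_det hM).ne_zero
  obtain ⟨a, b, c, d, ha, hb, hc, hd, hp, hq⟩ :=
    exists_quadrant_basis (M⁻¹ 0 0, M⁻¹ 1 0) (M⁻¹ 0 1, M⁻¹ 1 1) hdet
  have hperiods (m n : ℤ) : planeMap M⁻¹ (m, n) ∈ periods (LTiling.tiling a b c d) := by
    have h : planeMap M⁻¹ (m, n) = m • (M⁻¹ 0 0, M⁻¹ 1 0) + n • (M⁻¹ 0 1, M⁻¹ 1 1) := by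
      ext <;> simp [planeMap_apply, zsmul_eq_mul, mul_comm]
    rw [h]
    exact LTiling.closure_le_periods (add_mem (zsmul_mem hp m) (zsmul_mem hq n))
  refine ⟨LTiling.sizes a b c d, Fin.forall_fin_two.2 ⟨⟨ha, hd⟩, ⟨hc, hb⟩⟩, ?_⟩
  simpa only [planeMap_apply] using exists_equivariant_of_periods
    ⟨LTiling.tiling a b c d, LTiling.isTiling_tiling ha hb hc hd⟩
    (planeMap M⁻¹).toAddMonoidHom (planeMap M) (planeMap_inv_apply hM) hperiods

/-- let `M` be an invertible `2 × 2` real matrix whose first column has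
rationally independent entries, as does its second column. Consider the `ℝ²` action on
the torus `𝕋² = ℝ²/ℤ²` given by `S_v x = x + M v (mod ℤ²)`. Then there is a pair of
half-open rectangular tiles and an equivariant map `Φ` from `𝕋²` to the corresponding
tiling space: `Φ (S_v x) = S_v^Y (Φ x)` for all `x` and `v`. -/
theorem torus_action_tileable (M : Matrix (Fin 2) (Fin 2) ℝ) (hM : IsUnit M.det)
    (hcol1 : ∀ q r : ℚ, (q : ℝ) * M 0 0 + (r : ℝ) * M 1 0 = 0 → q = 0 ∧ r = 0)
    (hcol2 : ∀ q r : ℚ, (q : ℝ) * M 0 1 + (r : ℝ) * M 1 1 = 0 → q = 0 ∧ r = 0) :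
    ∃ sz : Fin 2 → ℝ × ℝ, (∀ j, 0 < (sz j).1 ∧ 0 < (sz j).2) ∧
      ∃ Φ : AddCircle (1 : ℝ) × AddCircle (1 : ℝ) → Tilings sz,
        ∀ (x : AddCircle (1 : ℝ) × AddCircle (1 : ℝ)) (v : ℝ × ℝ),
          Φ (x + (((M 0 0 * v.1 + M 0 1 * v.2 : ℝ) : AddCircle (1 : ℝ)),
                  ((M 1 0 * v.1 + M 1 1 * v.2 : ℝ) : AddCircle (1 : ℝ)))) =
            S sz v (Φ x) :=
  torus_action_tileable_general M hM
end
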